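/- arXiv:1612.08288 — 11 statements merged into one kernel-verified Lean document; each statement's English description precedes it below -/
import Mathlib

section
/- Under Assumption 1, ℙ({U ≤ τ} ∩ {Z = z}) = τ·ℙ(Z = z) for every z ∈ S. (Theorem 1, first equation: the composite rank variable U = U_{D*} inherits the exogeneity of U₀ and U₁ under rank similarity.) -/
open MeasureTheory Set Filter

theorem stmt0
    {Ω : Type*} [MeasurableSpace Ω] (P : Measure Ω) [IsProbabilityMeasure P]
    {S : Type*} [MeasurableSpace S] [Countable S] [MeasurableSingletonClass S]
    (τ : ℝ) (hτ : τ ∈ Ioo (0:ℝ) 1)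
    (Y : Ω → ℝ) (Dstar : Ω → Bool) (Z : Ω → S) (U₀ U₁ : Ω → ℝ)
    (hYm : Measurable Y) (hDstarm : Measurable Dstar) (hZm : Measurable Z)
    (hU₀m : Measurable U₀) (hU₁m : Measurable U₁)
    (hU₀01 : ∀ ω, U₀ ω ∈ Icc (0:ℝ) 1) (hU₁01 : ∀ ω, U₁ ω ∈ Icc (0:ℝ) 1)
    (U : Ω → ℝ) (hU : ∀ ω, U ω = bif Dstar ω then U₁ ω else U₀ ω)
    (q : Bool → ℝ → ℝ)
    (hq : ∀ d, StrictMonoOn (q d) (Icc (0:ℝ) 1))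
    (hout : ∀ ω, Y ω = q (Dstar ω) (U ω))
    (hexo : ∀ (d : Bool) (z : S),
      (P {ω | (bif d then U₁ ω else U₀ ω) ≤ τ ∧ Z ω = z}).toReal
        = τ * (P {ω | Z ω = z}).toReal)
    (hrank : ∀ (d : Bool) (z : S),
      (P {ω | U₀ ω ≤ τ ∧ Dstar ω = d ∧ Z ω = z}).toReal
        = (P {ω | U₁ ω ≤ τ ∧ Dstar ω = d ∧ Z ω = z}).toReal)
    :
    ∀ z : S, (P {ω | U ω ≤ τ ∧ Z ω = z}).toReal = τ * (P {ω | Z ω = z}).toReal := by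
  intro z
  set B0 : Set Ω := {ω | U₀ ω ≤ τ ∧ Dstar ω = false ∧ Z ω = z} with hB0
  set B1 : Set Ω := {ω | U₁ ω ≤ τ ∧ Dstar ω = true ∧ Z ω = z} with hB1
  set A1 : Set Ω := {ω | U₀ ω ≤ τ ∧ Dstar ω = true ∧ Z ω = z} with hA1
  have hZz : MeasurableSet {ω | Z ω = z} := hZm (measurableSet_singleton z)
  have hDt : MeasurableSet {ω | Dstar ω = true} := hDstarm (measurableSet_singleton true)
  have hDf : MeasurableSet {ω | Dstar ω = false} := hDstarm (measurableSet_singleton false)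
  have hmB0 : MeasurableSet B0 :=
    (hU₀m measurableSet_Iic).inter (hDf.inter hZz)
  have hmB1 : MeasurableSet B1 :=
    (hU₁m measurableSet_Iic).inter (hDt.inter hZz)
  have hmA1 : MeasurableSet A1 :=
    (hU₀m measurableSet_Iic).inter (hDt.inter hZz)
  have hdisj : Disjoint B0 B1 := by
    rw [Set.disjoint_left]
    rintro ω ⟨_, h0, _⟩ ⟨_, h1, _⟩
    simp [h0] at h1
  have hdisj' : Disjoint B0 A1 := by
    rw [Set.disjoint_left]
    rintro ω ⟨_, h0, _⟩ ⟨_, h1, _⟩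
    simp [h0] at h1
  have hsetU : {ω | U ω ≤ τ ∧ Z ω = z} = B0 ∪ B1 := by
    ext ω
    simp only [Set.mem_setOf_eq, Set.mem_union, hB0, hB1, hU ω]
    cases h : Dstar ω <;> simp [h]
  have hsetU₀ : {ω | U₀ ω ≤ τ ∧ Z ω = z} = B0 ∪ A1 := by
    ext ω
    simp only [Set.mem_setOf_eq, Set.mem_union, hB0, hA1]
    cases h : Dstar ω <;> simp [h] <;> tauto
  have h1 : (P {ω | U ω ≤ τ ∧ Z ω = z}).toReal
      = (P B0).toReal + (P B1).toReal := by
    rw [hsetU, measure_union hdisj hmB1,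
      ENNReal.toReal_add (measure_ne_top P B0) (measure_ne_top P B1)]
  have h2 : (P {ω | U₀ ω ≤ τ ∧ Z ω = z}).toReal
      = (P B0).toReal + (P A1).toReal := by
    rw [hsetU₀, measure_union hdisj' hmA1,
      ENNReal.toReal_add (measure_ne_top P B0) (measure_ne_top P A1)]
  have hr := hrank true z
  have he := hexo false z
  simp only [Bool.cond_false] at he
  rw [h1, ← hr, ← h2, he]
end

section
/- Under Assumption 1, ℙ({ω ∈ Ω : Y(ω) ≤ q(D*(ω), τ)} ∩ {Z = z}) = τ·ℙ(Z = z) for every z ∈ S. (Theorem 1, second equation: the testable implication of the instrumental variable quantile regression model with the correctly measured treatment.) -/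
open MeasureTheory Set Filter

theorem stmt1
    {Ω : Type*} [MeasurableSpace Ω] (P : Measure Ω) [IsProbabilityMeasure P]
    {S : Type*} [MeasurableSpace S] [Countable S] [MeasurableSingletonClass S]
    (τ : ℝ) (hτ : τ ∈ Ioo (0:ℝ) 1)
    (Y : Ω → ℝ) (Dstar : Ω → Bool) (Z : Ω → S) (U₀ U₁ : Ω → ℝ)
    (hYm : Measurable Y) (hDstarm : Measurable Dstar) (hZm : Measurable Z)
    (hU₀m : Measurable U₀) (hU₁m : Measurable U₁)
    (hU₀01 : ∀ ω, U₀ ω ∈ Icc (0:ℝ) 1) (hU₁01 : ∀ ω, U₁ ω ∈ Icc (0:ℝ) 1)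
    (U : Ω → ℝ) (hU : ∀ ω, U ω = bif Dstar ω then U₁ ω else U₀ ω)
    (q : Bool → ℝ → ℝ)
    (hq : ∀ d, StrictMonoOn (q d) (Icc (0:ℝ) 1))
    (hout : ∀ ω, Y ω = q (Dstar ω) (U ω))
    (hexo : ∀ (d : Bool) (z : S),
      (P {ω | (bif d then U₁ ω else U₀ ω) ≤ τ ∧ Z ω = z}).toReal
        = τ * (P {ω | Z ω = z}).toReal)
    (hrank : ∀ (d : Bool) (z : S),
      (P {ω | U₀ ω ≤ τ ∧ Dstar ω = d ∧ Z ω = z}).toReal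
        = (P {ω | U₁ ω ≤ τ ∧ Dstar ω = d ∧ Z ω = z}).toReal)
    :
    ∀ z : S, (P {ω | Y ω ≤ q (Dstar ω) τ ∧ Z ω = z}).toReal
      = τ * (P {ω | Z ω = z}).toReal := by
  intro z
  have hτm : τ ∈ Icc (0:ℝ) 1 := ⟨hτ.1.le, hτ.2.le⟩
  have hUm : Measurable U := by
    have : U = fun ω => bif Dstar ω then U₁ ω else U₀ ω := funext hU
    rw [this]
    simp only [Bool.cond_eq_ite]
    exact Measurable.ite (hDstarm (measurableSet_singleton true)) hU₁m hU₀m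
  have hU01 : ∀ ω, U ω ∈ Icc (0:ℝ) 1 := by
    intro ω; rw [hU ω]; cases Dstar ω <;> simp [hU₀01 ω, hU₁01 ω]
  -- Step 1: rewrite the event
  have hset : {ω | Y ω ≤ q (Dstar ω) τ ∧ Z ω = z} = {ω | U ω ≤ τ ∧ Z ω = z} := by
    ext ω
    simp only [mem_setOf_eq, hout ω]
    constructor
    · rintro ⟨h1, h2⟩
      exact ⟨((hq (Dstar ω)).le_iff_le (hU01 ω) hτm).mp h1, h2⟩
    · rintro ⟨h1, h2⟩
      exact ⟨((hq (Dstar ω)).le_iff_le (hU01 ω) hτm).mpr h1, h2⟩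
  rw [hset]
  -- measurability of pieces
  have mZ : MeasurableSet {ω | Z ω = z} := hZm (measurableSet_singleton z)
  have mU0 : MeasurableSet {ω | U₀ ω ≤ τ} := hU₀m measurableSet_Iic
  have mU1 : MeasurableSet {ω | U₁ ω ≤ τ} := hU₁m measurableSet_Iic
  have mDt : MeasurableSet {ω | Dstar ω = true} := hDstarm (measurableSet_singleton true)
  have mDf : MeasurableSet {ω | Dstar ω = false} := hDstarm (measurableSet_singleton false)
  -- Step 2: split by Dstar
  have hsplit : {ω | U ω ≤ τ ∧ Z ω = z}
      = {ω | U₁ ω ≤ τ ∧ Dstar ω = true ∧ Z ω = z}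
        ∪ {ω | U₀ ω ≤ τ ∧ Dstar ω = false ∧ Z ω = z} := by
    ext ω
    simp only [mem_setOf_eq, mem_union]
    rw [hU ω]
    cases hD : Dstar ω <;> simp [hD] <;> tauto
  have hdisj : Disjoint {ω | U₁ ω ≤ τ ∧ Dstar ω = true ∧ Z ω = z}
      {ω | U₀ ω ≤ τ ∧ Dstar ω = false ∧ Z ω = z} := by
    rw [Set.disjoint_left]
    rintro ω ⟨-, h1, -⟩ ⟨-, h2, -⟩
    simp [h1] at h2
  have m1 : MeasurableSet {ω | U₁ ω ≤ τ ∧ Dstar ω = true ∧ Z ω = z} := by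
    have : {ω | U₁ ω ≤ τ ∧ Dstar ω = true ∧ Z ω = z}
        = {ω | U₁ ω ≤ τ} ∩ ({ω | Dstar ω = true} ∩ {ω | Z ω = z}) := by
      ext ω; simp [mem_setOf_eq, and_assoc]
    rw [this]; exact mU1.inter (mDt.inter mZ)
  have m2 : MeasurableSet {ω | U₀ ω ≤ τ ∧ Dstar ω = false ∧ Z ω = z} := by
    have : {ω | U₀ ω ≤ τ ∧ Dstar ω = false ∧ Z ω = z}
        = {ω | U₀ ω ≤ τ} ∩ ({ω | Dstar ω = false} ∩ {ω | Z ω = z}) := by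
      ext ω; simp [mem_setOf_eq, and_assoc]
    rw [this]; exact mU0.inter (mDf.inter mZ)
  have hfin : ∀ s : Set Ω, P s ≠ ⊤ := fun s => (measure_ne_top P s)
  have hadd1 : (P {ω | U ω ≤ τ ∧ Z ω = z}).toReal
      = (P {ω | U₁ ω ≤ τ ∧ Dstar ω = true ∧ Z ω = z}).toReal
        + (P {ω | U₀ ω ≤ τ ∧ Dstar ω = false ∧ Z ω = z}).toReal := by
    rw [hsplit, measure_union hdisj m2, ENNReal.toReal_add (hfin _) (hfin _)]
  -- Step 3: rank similarity replaces U₀ by U₁ in the false-branch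
  have hr := (hrank false z).symm
  -- Step 4: recombine into U₁ event
  have hsplit2 : {ω | U₁ ω ≤ τ ∧ Z ω = z}
      = {ω | U₁ ω ≤ τ ∧ Dstar ω = true ∧ Z ω = z}
        ∪ {ω | U₁ ω ≤ τ ∧ Dstar ω = false ∧ Z ω = z} := by
    ext ω
    simp only [mem_setOf_eq, mem_union]
    cases hD : Dstar ω <;> simp [hD] <;> tauto
  have hdisj2 : Disjoint {ω | U₁ ω ≤ τ ∧ Dstar ω = true ∧ Z ω = z}
      {ω | U₁ ω ≤ τ ∧ Dstar ω = false ∧ Z ω = z} := by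
    rw [Set.disjoint_left]
    rintro ω ⟨-, h1, -⟩ ⟨-, h2, -⟩
    simp [h1] at h2
  have m3 : MeasurableSet {ω | U₁ ω ≤ τ ∧ Dstar ω = false ∧ Z ω = z} := by
    have : {ω | U₁ ω ≤ τ ∧ Dstar ω = false ∧ Z ω = z}
        = {ω | U₁ ω ≤ τ} ∩ ({ω | Dstar ω = false} ∩ {ω | Z ω = z}) := by
      ext ω; simp [mem_setOf_eq, and_assoc]
    rw [this]; exact mU1.inter (mDf.inter mZ)
  have hadd2 : (P {ω | U₁ ω ≤ τ ∧ Z ω = z}).toReal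
      = (P {ω | U₁ ω ≤ τ ∧ Dstar ω = true ∧ Z ω = z}).toReal
        + (P {ω | U₁ ω ≤ τ ∧ Dstar ω = false ∧ Z ω = z}).toReal := by
    rw [hsplit2, measure_union hdisj2 m3, ENNReal.toReal_add (hfin _) (hfin _)]
  have hexo1 := hexo true z
  simp only [cond_true] at hexo1
  rw [hadd1, ← hr, ← hadd2, hexo1]
end

section
/- (Theorem 2(a): the reduced-form quantile treatment effect is attenuated toward zero.) Assume Assumption 1, that q(d,·) is continuous on [0,1] for d = 0,1, and the stochastic monotonicity condition (interval form). Suppose that for z ∈ {z₀, z₁} the function F_z is continuous on ℝ and that y_z is the unique real with F_z(y_z) = τ·ℙ(Z = z) (the unique conditional τ-quantile of Y given Z = z). Then there exists κ ∈ [0,1] such that y_{z₁} − y_{z₀} = κ·(q(1,τ) − q(0,τ)). -/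
open MeasureTheory Set Filter

private lemma toReal_union_disj {Ω : Type*} [MeasurableSpace Ω] (P : Measure Ω) [IsFiniteMeasure P]
    {A B : Set Ω} (hB : MeasurableSet B) (hd : Disjoint A B) :
    (P (A ∪ B)).toReal = (P A).toReal + (P B).toReal := by
  rw [measure_union hd hB, ENNReal.toReal_add (measure_ne_top P A) (measure_ne_top P B)]

private lemma atom_null {Ω S : Type*} [MeasurableSpace Ω] (P : Measure Ω) [IsFiniteMeasure P]
    (Y : Ω → ℝ) (Z : Ω → S)
    (F : ℝ → ℝ) (z : S)
    (hm : ∀ y : ℝ, MeasurableSet {ω | Y ω ≤ y ∧ Z ω = z})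
    (hF : ∀ y, F y = (P {ω | Y ω ≤ y ∧ Z ω = z}).toReal)
    (hcont : Continuous F) (c : ℝ) :
    P {ω | Y ω = c ∧ Z ω = z} = 0 := by
  have key : ∀ ε : ℝ, 0 < ε → (P {ω | Y ω = c ∧ Z ω = z}).toReal ≤ F c - F (c - ε) := by
    intro ε hε
    have hsub : {ω | Y ω ≤ c - ε ∧ Z ω = z} ⊆ {ω | Y ω ≤ c ∧ Z ω = z} :=
      fun ω h => ⟨h.1.trans (by linarith), h.2⟩
    have h1 : (P {ω | Y ω = c ∧ Z ω = z}) ≤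
        P ({ω | Y ω ≤ c ∧ Z ω = z} \ {ω | Y ω ≤ c - ε ∧ Z ω = z}) := by
      refine measure_mono ?_
      rintro ω ⟨h1, h2⟩
      refine ⟨⟨h1.le, h2⟩, fun h => ?_⟩
      have := h.1
      rw [h1] at this
      linarith
    have h2 : (P ({ω | Y ω ≤ c ∧ Z ω = z} \ {ω | Y ω ≤ c - ε ∧ Z ω = z})).toReal
        = F c - F (c - ε) := by
      rw [measure_diff hsub ((hm (c - ε)).nullMeasurableSet) (measure_ne_top P _),
        ENNReal.toReal_sub_of_le (measure_mono hsub) (measure_ne_top P _), hF, hF]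
    calc (P {ω | Y ω = c ∧ Z ω = z}).toReal
        ≤ (P ({ω | Y ω ≤ c ∧ Z ω = z} \ {ω | Y ω ≤ c - ε ∧ Z ω = z})).toReal :=
          ENNReal.toReal_mono (measure_ne_top P _) h1
      _ = F c - F (c - ε) := h2
  have hlim : Tendsto (fun ε : ℝ => F c - F (c - ε)) (nhdsWithin 0 (Ioi 0)) (nhds 0) := by
    have : Tendsto (fun ε : ℝ => F c - F (c - ε)) (nhds 0) (nhds (F c - F (c - 0))) := by
      exact (tendsto_const_nhds.sub ((hcont.tendsto _).comp
        (tendsto_const_nhds.sub tendsto_id)))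
    simpa using this.mono_left nhdsWithin_le_nhds
  have hle : (P {ω | Y ω = c ∧ Z ω = z}).toReal ≤ 0 := by
    refine ge_of_tendsto hlim ?_
    filter_upwards [self_mem_nhdsWithin] with ε hε
    exact key ε hε
  have : (P {ω | Y ω = c ∧ Z ω = z}).toReal = 0 :=
    le_antisymm hle ENNReal.toReal_nonneg
  exact (ENNReal.toReal_eq_zero_iff _).mp this |>.resolve_right (measure_ne_top P _)

private theorem aux2
    {Ω : Type*} [MeasurableSpace Ω] (P : Measure Ω) [IsProbabilityMeasure P]
    {S : Type*} [MeasurableSpace S] [Countable S] [MeasurableSingletonClass S]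
    (τ : ℝ) (hτ : τ ∈ Ioo (0:ℝ) 1)
    (Y : Ω → ℝ) (Dstar : Ω → Bool) (Z : Ω → S) (U₀ U₁ : Ω → ℝ)
    (hYm : Measurable Y) (hDstarm : Measurable Dstar) (hZm : Measurable Z)
    (hU₀m : Measurable U₀) (hU₁m : Measurable U₁)
    (hU₀01 : ∀ ω, U₀ ω ∈ Icc (0:ℝ) 1) (hU₁01 : ∀ ω, U₁ ω ∈ Icc (0:ℝ) 1)
    (U : Ω → ℝ) (hU : ∀ ω, U ω = bif Dstar ω then U₁ ω else U₀ ω)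
    (q : Bool → ℝ → ℝ)
    (hq : ∀ d, StrictMonoOn (q d) (Icc (0:ℝ) 1))
    (hout : ∀ ω, Y ω = q (Dstar ω) (U ω))
    (hexo : ∀ (d : Bool) (z : S),
      (P {ω | (bif d then U₁ ω else U₀ ω) ≤ τ ∧ Z ω = z}).toReal
        = τ * (P {ω | Z ω = z}).toReal)
    (hrank : ∀ (d : Bool) (z : S),
      (P {ω | U₀ ω ≤ τ ∧ Dstar ω = d ∧ Z ω = z}).toReal
        = (P {ω | U₁ ω ≤ τ ∧ Dstar ω = d ∧ Z ω = z}).toReal)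
    (hqc : ∀ d, ContinuousOn (q d) (Icc (0:ℝ) 1))
    (F : S → ℝ → ℝ)
    (hF : ∀ (z : S) (y : ℝ), F z y = (P {ω | Y ω ≤ y ∧ Z ω = z}).toReal)
    (z₀ z₁ : S)
    (hz₀ : 0 < (P {ω | Z ω = z₀}).toReal) (hz₁ : 0 < (P {ω | Z ω = z₁}).toReal)
    (hmono : ∀ a b : ℝ, 0 ≤ a → a ≤ b → b ≤ 1 →
      (P {ω | a < U ω ∧ U ω ≤ b ∧ Dstar ω = false ∧ Z ω = z₁}).toReal
          * (P {ω | Z ω = z₀}).toReal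
        ≤ (P {ω | a < U ω ∧ U ω ≤ b ∧ Dstar ω = false ∧ Z ω = z₀}).toReal
          * (P {ω | Z ω = z₁}).toReal
      ∧ (P {ω | a < U ω ∧ U ω ≤ b ∧ Dstar ω = true ∧ Z ω = z₀}).toReal
          * (P {ω | Z ω = z₁}).toReal
        ≤ (P {ω | a < U ω ∧ U ω ≤ b ∧ Dstar ω = true ∧ Z ω = z₁}).toReal
          * (P {ω | Z ω = z₀}).toReal)
    (hFc : ∀ z ∈ ({z₀, z₁} : Set S), Continuous (F z))
    (y₀ y₁ : ℝ)
    (hy₀ : F z₀ y₀ = τ * (P {ω | Z ω = z₀}).toReal)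
    (hy₀u : ∀ y : ℝ, F z₀ y = τ * (P {ω | Z ω = z₀}).toReal → y = y₀)
    (hy₁ : F z₁ y₁ = τ * (P {ω | Z ω = z₁}).toReal)
    (hy₁u : ∀ y : ℝ, F z₁ y = τ * (P {ω | Z ω = z₁}).toReal → y = y₁)
    (hΔ : q false τ ≤ q true τ)
    :
    ∃ κ ∈ Icc (0:ℝ) 1, y₁ - y₀ = κ * (q true τ - q false τ) := by
  -- measurability preliminaries
  have hsetD : ∀ d : Bool, MeasurableSet {ω | Dstar ω = d} :=
    fun d => hDstarm (measurableSet_singleton d)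
  have hUmeas : Measurable U := by
    have he : U = fun ω => if Dstar ω = true then U₁ ω else U₀ ω := by
      funext ω
      rw [hU ω, Bool.cond_eq_ite]
    rw [he]
    exact Measurable.ite (hsetD true) hU₁m hU₀m
  have hsetZ : ∀ z : S, MeasurableSet {ω | Z ω = z} := fun z => hZm (measurableSet_singleton z)
  have hYZ : ∀ (z : S) (y : ℝ), MeasurableSet {ω | Y ω ≤ y ∧ Z ω = z} :=
    fun z y => (hYm measurableSet_Iic).inter (hsetZ z)
  have hUmem : ∀ ω, U ω ∈ Icc (0:ℝ) 1 := by
    intro ω; rw [hU ω]; cases Dstar ω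
    · exact hU₀01 ω
    · exact hU₁01 ω
  have hτm : τ ∈ Icc (0:ℝ) 1 := ⟨hτ.1.le, hτ.2.le⟩
  -- the τ-mass identity
  have key1 : ∀ z : S, (P {ω | U ω ≤ τ ∧ Z ω = z}).toReal = τ * (P {ω | Z ω = z}).toReal := by
    intro z
    have hsp : {ω | U ω ≤ τ ∧ Z ω = z}
        = {ω | U₁ ω ≤ τ ∧ Dstar ω = true ∧ Z ω = z}
          ∪ {ω | U₀ ω ≤ τ ∧ Dstar ω = false ∧ Z ω = z} := by
      ext ω
      cases hd : Dstar ω <;> simp [hU ω, hd]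
    have hdisj : Disjoint {ω | U₁ ω ≤ τ ∧ Dstar ω = true ∧ Z ω = z}
        {ω | U₀ ω ≤ τ ∧ Dstar ω = false ∧ Z ω = z} := by
      rw [Set.disjoint_left]
      rintro ω ⟨_, h2, _⟩ ⟨_, h2', _⟩
      simp [h2] at h2'
    have hsp2 : {ω | U₀ ω ≤ τ ∧ Z ω = z}
        = {ω | U₀ ω ≤ τ ∧ Dstar ω = true ∧ Z ω = z}
          ∪ {ω | U₀ ω ≤ τ ∧ Dstar ω = false ∧ Z ω = z} := by
      ext ω
      cases hd : Dstar ω <;> simp [hd]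
    have hdisj2 : Disjoint {ω | U₀ ω ≤ τ ∧ Dstar ω = true ∧ Z ω = z}
        {ω | U₀ ω ≤ τ ∧ Dstar ω = false ∧ Z ω = z} := by
      rw [Set.disjoint_left]
      rintro ω ⟨_, h2, _⟩ ⟨_, h2', _⟩
      simp [h2] at h2'
    have hm1 : MeasurableSet {ω | U₀ ω ≤ τ ∧ Dstar ω = false ∧ Z ω = z} :=
      (hU₀m measurableSet_Iic).inter ((hsetD false).inter (hsetZ z))
    rw [hsp, toReal_union_disj P hm1 hdisj, ← hrank true z,
      ← toReal_union_disj P hm1 hdisj2, ← hsp2]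
    simpa using hexo false z
  have hFmono : ∀ z : S, Monotone (F z) := by
    intro z y y' hyy
    rw [hF, hF]
    exact ENNReal.toReal_mono (measure_ne_top P _)
      (measure_mono (fun ω h => ⟨h.1.trans hyy, h.2⟩))
  -- atoms of U are null (conditional on z with continuous F z)
  have hatom : ∀ z ∈ ({z₀, z₁} : Set S), ∀ (d : Bool) (u : ℝ), u ∈ Icc (0:ℝ) 1 →
      P {ω | U ω = u ∧ Dstar ω = d ∧ Z ω = z} = 0 := by
    intro z hz d u hu
    have h0 : P {ω | Y ω = q d u ∧ Z ω = z} = 0 :=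
      atom_null P Y Z (F z) z (hYZ z) (hF z) (hFc z hz) (q d u)
    refine measure_mono_null ?_ h0
    rintro ω ⟨h1, h2, h3⟩
    exact ⟨by rw [hout ω, h2, h1], h3⟩
  -- Claim A ingredients
  have hub : ∀ z : S, τ * (P {ω | Z ω = z}).toReal ≤ F z (q true τ) := by
    intro z
    rw [hF, ← key1 z]
    refine ENNReal.toReal_mono (measure_ne_top P _) (measure_mono ?_)
    rintro ω ⟨h1, h2⟩
    refine ⟨?_, h2⟩
    rw [hout ω]
    cases hd : Dstar ω
    · exact le_trans ((hq false).monotoneOn (hUmem ω) hτm h1) hΔ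
    · exact (hq true).monotoneOn (hUmem ω) hτm h1
  have hlb : ∀ z : S, F z (q false τ) ≤ τ * (P {ω | Z ω = z}).toReal := by
    intro z
    rw [hF, ← key1 z]
    refine ENNReal.toReal_mono (measure_ne_top P _) (measure_mono ?_)
    rintro ω ⟨h1, h2⟩
    refine ⟨?_, h2⟩
    by_contra hlt
    push_neg at hlt
    rw [hout ω] at h1
    cases hd : Dstar ω
    · rw [hd] at h1
      exact absurd h1 (not_le.mpr (hq false hτm (hUmem ω) hlt))
    · rw [hd] at h1
      exact absurd (le_trans h1 hΔ) (not_le.mpr (hq true hτm (hUmem ω) hlt))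
  have hbnd : ∀ (z : S) (y : ℝ), F z y = τ * (P {ω | Z ω = z}).toReal →
      (∀ y', F z y' = τ * (P {ω | Z ω = z}).toReal → y' = y) →
      q false τ ≤ y ∧ y ≤ q true τ := by
    intro z y hy hyu
    constructor
    · by_contra h
      push_neg at h
      have h1 : F z y ≤ F z (q false τ) := hFmono z h.le
      have h2 : F z (q false τ) = τ * (P {ω | Z ω = z}).toReal :=
        le_antisymm (hlb z) (hy ▸ h1)
      exact absurd (hyu _ h2) (ne_of_gt h)
    · by_contra h
      push_neg at h
      have h1 : F z (q true τ) ≤ F z y := hFmono z h.le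
      have h2 : F z (q true τ) = τ * (P {ω | Z ω = z}).toReal :=
        le_antisymm (hy ▸ h1) (hub z)
      exact absurd (hyu _ h2) (ne_of_lt h)
  obtain ⟨hy₀l, hy₀r⟩ := hbnd z₀ y₀ hy₀ hy₀u
  obtain ⟨hy₁l, hy₁r⟩ := hbnd z₁ y₁ hy₁ hy₁u
  -- Step B : representation of F z y₀
  have hqFmono := (hq false).monotoneOn
  have hqTmono := (hq true).monotoneOn
  have hone : (1:ℝ) ∈ Icc (0:ℝ) 1 := right_mem_Icc.mpr zero_le_one
  have hzero : (0:ℝ) ∈ Icc (0:ℝ) 1 := left_mem_Icc.mpr zero_le_one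
  obtain ⟨b, c, hτb, hb1, hc0, hcτ, hrep⟩ :
      ∃ b c : ℝ, τ ≤ b ∧ b ≤ 1 ∧ 0 ≤ c ∧ c ≤ τ ∧
      ∀ z ∈ ({z₀, z₁} : Set S), F z y₀ = τ * (P {ω | Z ω = z}).toReal
        + (P {ω | τ < U ω ∧ U ω ≤ b ∧ Dstar ω = false ∧ Z ω = z}).toReal
        - (P {ω | c < U ω ∧ U ω ≤ τ ∧ Dstar ω = true ∧ Z ω = z}).toReal := by
    obtain ⟨b, hτb, hb1, hbiff⟩ :
        ∃ b : ℝ, τ ≤ b ∧ b ≤ 1 ∧ ∀ u ∈ Icc (0:ℝ) 1, (q false u ≤ y₀ ↔ u ≤ b) := by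
      by_cases h1 : q false 1 ≤ y₀
      · exact ⟨1, hτm.2, le_rfl, fun u hu =>
          ⟨fun _ => hu.2, fun _ => le_trans (hqFmono hu hone hu.2) h1⟩⟩
      · push_neg at h1
        have hsub : Icc τ 1 ⊆ Icc (0:ℝ) 1 := Icc_subset_Icc hτ.1.le le_rfl
        obtain ⟨b, hbmem, hbv⟩ := intermediate_value_Icc hτm.2 ((hqc false).mono hsub)
          (⟨hy₀l, h1.le⟩ : y₀ ∈ Icc (q false τ) (q false 1))
        refine ⟨b, hbmem.1, hbmem.2, fun u hu =>
          ⟨fun h => ?_, fun h => hbv ▸ hqFmono hu (hsub hbmem) h⟩⟩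
        by_contra hbu
        push_neg at hbu
        have h2 := hq false (hsub hbmem) hu hbu
        rw [hbv] at h2
        linarith
    obtain ⟨c, hc0, hcτ, hceq⟩ :
        ∃ c : ℝ, 0 ≤ c ∧ c ≤ τ ∧ ∀ z ∈ ({z₀, z₁} : Set S),
          P {ω | y₀ < Y ω ∧ U ω ≤ τ ∧ Dstar ω = true ∧ Z ω = z}
            = P {ω | c < U ω ∧ U ω ≤ τ ∧ Dstar ω = true ∧ Z ω = z} := by
      by_cases h0 : y₀ < q true 0
      · refine ⟨0, le_rfl, hτ.1.le, fun z hz => ?_⟩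
        have hseq : {ω | y₀ < Y ω ∧ U ω ≤ τ ∧ Dstar ω = true ∧ Z ω = z}
            = {ω | (0:ℝ) < U ω ∧ U ω ≤ τ ∧ Dstar ω = true ∧ Z ω = z}
              ∪ {ω | U ω = 0 ∧ Dstar ω = true ∧ Z ω = z} := by
          ext ω
          simp only [mem_setOf_eq, mem_union]
          constructor
          · rintro ⟨h1, h2, h3, h4⟩
            rcases eq_or_lt_of_le (hUmem ω).1 with he | hl
            · exact Or.inr ⟨he.symm, h3, h4⟩
            · exact Or.inl ⟨hl, h2, h3, h4⟩
          · rintro (⟨h1, h2, h3, h4⟩ | ⟨h1, h2, h3⟩)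
            · refine ⟨?_, h2, h3, h4⟩
              rw [hout ω, h3]
              exact lt_of_lt_of_le h0 (hqTmono hzero (hUmem ω) (hUmem ω).1)
            · refine ⟨?_, by rw [h1]; exact hτ.1.le, h2, h3⟩
              rw [hout ω, h2, h1]
              exact h0
        rw [hseq]
        refine le_antisymm ?_ (measure_mono subset_union_left)
        calc P ({ω | (0:ℝ) < U ω ∧ U ω ≤ τ ∧ Dstar ω = true ∧ Z ω = z}
              ∪ {ω | U ω = 0 ∧ Dstar ω = true ∧ Z ω = z})
            ≤ P {ω | (0:ℝ) < U ω ∧ U ω ≤ τ ∧ Dstar ω = true ∧ Z ω = z}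
              + P {ω | U ω = 0 ∧ Dstar ω = true ∧ Z ω = z} := measure_union_le _ _
          _ = P {ω | (0:ℝ) < U ω ∧ U ω ≤ τ ∧ Dstar ω = true ∧ Z ω = z} := by
              rw [hatom z hz true 0 hzero, add_zero]
      · push_neg at h0
        have hsub : Icc (0:ℝ) τ ⊆ Icc (0:ℝ) 1 := Icc_subset_Icc le_rfl hτ.2.le
        obtain ⟨c, hcmem, hcv⟩ := intermediate_value_Icc hτ.1.le ((hqc true).mono hsub)
          (⟨h0, hy₀r⟩ : y₀ ∈ Icc (q true 0) (q true τ))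
        refine ⟨c, hcmem.1, hcmem.2, fun z hz => ?_⟩
        congr 1
        ext ω
        simp only [mem_setOf_eq]
        constructor
        · rintro ⟨h1, h2, h3, h4⟩
          refine ⟨?_, h2, h3, h4⟩
          rw [hout ω, h3] at h1
          by_contra hcu
          push_neg at hcu
          have h5 : q true (U ω) ≤ q true c := hqTmono (hUmem ω) (hsub hcmem) hcu
          rw [hcv] at h5
          linarith
        · rintro ⟨h1, h2, h3, h4⟩
          refine ⟨?_, h2, h3, h4⟩
          rw [hout ω, h3]
          exact hcv ▸ hq true (hsub hcmem) (hUmem ω) h1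
    refine ⟨b, c, hτb, hb1, hc0, hcτ, fun z hz => ?_⟩
    have hmS1 : MeasurableSet {ω | Y ω ≤ y₀ ∧ U ω ≤ τ ∧ Z ω = z} :=
      (hYm measurableSet_Iic).inter ((hUmeas measurableSet_Iic).inter (hsetZ z))
    have e1 : {ω | Y ω ≤ y₀ ∧ Z ω = z}
        = {ω | τ < U ω ∧ Y ω ≤ y₀ ∧ Z ω = z} ∪ {ω | Y ω ≤ y₀ ∧ U ω ≤ τ ∧ Z ω = z} := by
      ext ω
      simp only [mem_setOf_eq, mem_union]
      constructor
      · rintro ⟨h1, h2⟩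
        rcases le_or_gt (U ω) τ with h | h
        · exact Or.inr ⟨h1, h, h2⟩
        · exact Or.inl ⟨h, h1, h2⟩
      · rintro (⟨_, h1, h2⟩ | ⟨h1, _, h2⟩) <;> exact ⟨h1, h2⟩
    have d1 : Disjoint {ω | τ < U ω ∧ Y ω ≤ y₀ ∧ Z ω = z}
        {ω | Y ω ≤ y₀ ∧ U ω ≤ τ ∧ Z ω = z} := by
      rw [Set.disjoint_left]
      rintro ω ⟨h1, _, _⟩ ⟨_, h2, _⟩
      exact absurd h2 (not_le.mpr h1)
    have e2 : {ω | U ω ≤ τ ∧ Z ω = z}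
        = {ω | y₀ < Y ω ∧ U ω ≤ τ ∧ Z ω = z} ∪ {ω | Y ω ≤ y₀ ∧ U ω ≤ τ ∧ Z ω = z} := by
      ext ω
      simp only [mem_setOf_eq, mem_union]
      constructor
      · rintro ⟨h1, h2⟩
        rcases le_or_gt (Y ω) y₀ with h | h
        · exact Or.inr ⟨h, h1, h2⟩
        · exact Or.inl ⟨h, h1, h2⟩
      · rintro (⟨_, h1, h2⟩ | ⟨_, h1, h2⟩) <;> exact ⟨h1, h2⟩
    have d2 : Disjoint {ω | y₀ < Y ω ∧ U ω ≤ τ ∧ Z ω = z}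
        {ω | Y ω ≤ y₀ ∧ U ω ≤ τ ∧ Z ω = z} := by
      rw [Set.disjoint_left]
      rintro ω ⟨h1, _, _⟩ ⟨h2, _, _⟩
      exact absurd h2 (not_le.mpr h1)
    have e3 : {ω | τ < U ω ∧ Y ω ≤ y₀ ∧ Z ω = z}
        = {ω | τ < U ω ∧ U ω ≤ b ∧ Dstar ω = false ∧ Z ω = z} := by
      ext ω
      simp only [mem_setOf_eq]
      constructor
      · rintro ⟨h1, h2, h3⟩
        cases hd : Dstar ω
        · rw [hout ω, hd] at h2
          exact ⟨h1, (hbiff (U ω) (hUmem ω)).mp h2, rfl, h3⟩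
        · rw [hout ω, hd] at h2
          have h5 : q true τ < q true (U ω) := hq true hτm (hUmem ω) h1
          linarith
      · rintro ⟨h1, h2, h3, h4⟩
        refine ⟨h1, ?_, h4⟩
        rw [hout ω, h3]
        exact (hbiff (U ω) (hUmem ω)).mpr h2
    have e4 : {ω | y₀ < Y ω ∧ U ω ≤ τ ∧ Z ω = z}
        = {ω | y₀ < Y ω ∧ U ω ≤ τ ∧ Dstar ω = true ∧ Z ω = z} := by
      ext ω
      simp only [mem_setOf_eq]
      constructor
      · rintro ⟨h1, h2, h3⟩
        cases hd : Dstar ω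
        · rw [hout ω, hd] at h1
          have h5 : q false (U ω) ≤ q false τ := hqFmono (hUmem ω) hτm h2
          linarith
        · exact ⟨h1, h2, rfl, h3⟩
      · rintro ⟨h1, h2, _, h3⟩
        exact ⟨h1, h2, h3⟩
    have heq1 : F z y₀ = (P {ω | τ < U ω ∧ U ω ≤ b ∧ Dstar ω = false ∧ Z ω = z}).toReal
        + (P {ω | Y ω ≤ y₀ ∧ U ω ≤ τ ∧ Z ω = z}).toReal := by
      rw [hF, e1, toReal_union_disj P hmS1 d1, e3]
    have heq2 : τ * (P {ω | Z ω = z}).toReal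
        = (P {ω | c < U ω ∧ U ω ≤ τ ∧ Dstar ω = true ∧ Z ω = z}).toReal
          + (P {ω | Y ω ≤ y₀ ∧ U ω ≤ τ ∧ Z ω = z}).toReal := by
      rw [← key1 z, e2, toReal_union_disj P hmS1 d2, e4, hceq z hz]
    linarith
  -- conclude F z₁ y₀ ≤ τ P₁
  have hkey : F z₁ y₀ ≤ τ * (P {ω | Z ω = z₁}).toReal := by
    have e₀ := hrep z₀ (by simp)
    have e₁ := hrep z₁ (by simp)
    have m1 := (hmono τ b hτ.1.le hτb hb1).1
    have m2 := (hmono c τ hc0 hcτ hτ.2.le).2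
    rw [hy₀] at e₀
    nlinarith [hz₀, hz₁]
  have hy01 : y₀ ≤ y₁ := by
    by_contra h
    push_neg at h
    have h1 : F z₁ y₁ ≤ F z₁ y₀ := hFmono z₁ h.le
    have h2 : F z₁ y₀ = τ * (P {ω | Z ω = z₁}).toReal :=
      le_antisymm hkey (hy₁ ▸ h1)
    exact absurd (hy₁u _ h2) (ne_of_gt h)
  -- build κ
  rcases eq_or_lt_of_le hΔ with hEq | hLt
  · refine ⟨0, ⟨le_refl _, zero_le_one⟩, ?_⟩
    have h1 : y₁ ≤ y₀ := le_trans hy₁r (hEq ▸ hy₀l)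
    have h2 : y₁ = y₀ := le_antisymm h1 hy01
    simp [h2]
  · refine ⟨(y₁ - y₀) / (q true τ - q false τ), ⟨?_, ?_⟩, ?_⟩
    · exact div_nonneg (by linarith) (by linarith)
    · rw [div_le_one (by linarith)]
      linarith
    · rw [div_mul_eq_mul_div, mul_div_assoc, div_self (by linarith : q true τ - q false τ ≠ 0),
        mul_one]

theorem stmt2
    {Ω : Type*} [MeasurableSpace Ω] (P : Measure Ω) [IsProbabilityMeasure P]
    {S : Type*} [MeasurableSpace S] [Countable S] [MeasurableSingletonClass S]
    (τ : ℝ) (hτ : τ ∈ Ioo (0:ℝ) 1)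
    (Y : Ω → ℝ) (Dstar : Ω → Bool) (Z : Ω → S) (U₀ U₁ : Ω → ℝ)
    (hYm : Measurable Y) (hDstarm : Measurable Dstar) (hZm : Measurable Z)
    (hU₀m : Measurable U₀) (hU₁m : Measurable U₁)
    (hU₀01 : ∀ ω, U₀ ω ∈ Icc (0:ℝ) 1) (hU₁01 : ∀ ω, U₁ ω ∈ Icc (0:ℝ) 1)
    (U : Ω → ℝ) (hU : ∀ ω, U ω = bif Dstar ω then U₁ ω else U₀ ω)
    (q : Bool → ℝ → ℝ)
    (hq : ∀ d, StrictMonoOn (q d) (Icc (0:ℝ) 1))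
    (hout : ∀ ω, Y ω = q (Dstar ω) (U ω))
    (hexo : ∀ (d : Bool) (z : S),
      (P {ω | (bif d then U₁ ω else U₀ ω) ≤ τ ∧ Z ω = z}).toReal
        = τ * (P {ω | Z ω = z}).toReal)
    (hrank : ∀ (d : Bool) (z : S),
      (P {ω | U₀ ω ≤ τ ∧ Dstar ω = d ∧ Z ω = z}).toReal
        = (P {ω | U₁ ω ≤ τ ∧ Dstar ω = d ∧ Z ω = z}).toReal)
    (hqc : ∀ d, ContinuousOn (q d) (Icc (0:ℝ) 1))
    (F : S → ℝ → ℝ)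
    (hF : ∀ (z : S) (y : ℝ), F z y = (P {ω | Y ω ≤ y ∧ Z ω = z}).toReal)
    (z₀ z₁ : S)
    (hz₀ : 0 < (P {ω | Z ω = z₀}).toReal) (hz₁ : 0 < (P {ω | Z ω = z₁}).toReal)
    (hmono : ∀ a b : ℝ, 0 ≤ a → a ≤ b → b ≤ 1 →
      (P {ω | a < U ω ∧ U ω ≤ b ∧ Dstar ω = false ∧ Z ω = z₁}).toReal
          * (P {ω | Z ω = z₀}).toReal
        ≤ (P {ω | a < U ω ∧ U ω ≤ b ∧ Dstar ω = false ∧ Z ω = z₀}).toReal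
          * (P {ω | Z ω = z₁}).toReal
      ∧ (P {ω | a < U ω ∧ U ω ≤ b ∧ Dstar ω = true ∧ Z ω = z₀}).toReal
          * (P {ω | Z ω = z₁}).toReal
        ≤ (P {ω | a < U ω ∧ U ω ≤ b ∧ Dstar ω = true ∧ Z ω = z₁}).toReal
          * (P {ω | Z ω = z₀}).toReal)
    (hFc : ∀ z ∈ ({z₀, z₁} : Set S), Continuous (F z))
    (y₀ y₁ : ℝ)
    (hy₀ : F z₀ y₀ = τ * (P {ω | Z ω = z₀}).toReal)
    (hy₀u : ∀ y : ℝ, F z₀ y = τ * (P {ω | Z ω = z₀}).toReal → y = y₀)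
    (hy₁ : F z₁ y₁ = τ * (P {ω | Z ω = z₁}).toReal)
    (hy₁u : ∀ y : ℝ, F z₁ y = τ * (P {ω | Z ω = z₁}).toReal → y = y₁)
    :
    ∃ κ ∈ Icc (0:ℝ) 1, y₁ - y₀ = κ * (q true τ - q false τ) := by
  rcases le_total (q false τ) (q true τ) with hΔ | hΔ
  · exact aux2 P τ hτ Y Dstar Z U₀ U₁ hYm hDstarm hZm hU₀m hU₁m hU₀01 hU₁01 U hU q hq hout
      hexo hrank hqc F hF z₀ z₁ hz₀ hz₁ hmono hFc y₀ y₁ hy₀ hy₀u hy₁ hy₁u hΔ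
  · -- apply aux2 with the roles of the two treatment arms and the two instrument values swapped
    have hDm' : Measurable (fun ω => !(Dstar ω)) :=
      (measurable_of_countable (fun x : Bool => !x)).comp hDstarm
    have hU' : ∀ ω, U ω = bif !(Dstar ω) then U₀ ω else U₁ ω := by
      intro ω
      rw [hU ω]
      cases Dstar ω <;> rfl
    have hout' : ∀ ω, Y ω = (fun d => q (!d)) (!(Dstar ω)) (U ω) := by
      intro ω
      simpa using hout ω
    have hexo' : ∀ (d : Bool) (z : S),
        (P {ω | (bif d then U₀ ω else U₁ ω) ≤ τ ∧ Z ω = z}).toReal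
          = τ * (P {ω | Z ω = z}).toReal := by
      intro d z
      cases d
      · simpa using hexo true z
      · simpa using hexo false z
    have hsete : ∀ (V : Ω → ℝ) (d : Bool) (z : S),
        {ω | V ω ≤ τ ∧ (!(Dstar ω)) = d ∧ Z ω = z} = {ω | V ω ≤ τ ∧ Dstar ω = !d ∧ Z ω = z} := by
      intro V d z
      ext ω
      cases hd : Dstar ω <;> cases d <;> simp [hd]
    have hrank' : ∀ (d : Bool) (z : S),
        (P {ω | U₁ ω ≤ τ ∧ (!(Dstar ω)) = d ∧ Z ω = z}).toReal
          = (P {ω | U₀ ω ≤ τ ∧ (!(Dstar ω)) = d ∧ Z ω = z}).toReal := by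
      intro d z
      rw [hsete U₁ d z, hsete U₀ d z]
      exact (hrank (!d) z).symm
    have hsete2 : ∀ (a b : ℝ) (d : Bool) (z : S),
        {ω | a < U ω ∧ U ω ≤ b ∧ (!(Dstar ω)) = d ∧ Z ω = z}
          = {ω | a < U ω ∧ U ω ≤ b ∧ Dstar ω = !d ∧ Z ω = z} := by
      intro a b d z
      ext ω
      cases hd : Dstar ω <;> cases d <;> simp [hd]
    have hmono' : ∀ a b : ℝ, 0 ≤ a → a ≤ b → b ≤ 1 →
        (P {ω | a < U ω ∧ U ω ≤ b ∧ (!(Dstar ω)) = false ∧ Z ω = z₀}).toReal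
            * (P {ω | Z ω = z₁}).toReal
          ≤ (P {ω | a < U ω ∧ U ω ≤ b ∧ (!(Dstar ω)) = false ∧ Z ω = z₁}).toReal
            * (P {ω | Z ω = z₀}).toReal
        ∧ (P {ω | a < U ω ∧ U ω ≤ b ∧ (!(Dstar ω)) = true ∧ Z ω = z₁}).toReal
            * (P {ω | Z ω = z₀}).toReal
          ≤ (P {ω | a < U ω ∧ U ω ≤ b ∧ (!(Dstar ω)) = true ∧ Z ω = z₀}).toReal
            * (P {ω | Z ω = z₁}).toReal := by
      intro a b ha hab hb1
      rw [hsete2 a b false z₀, hsete2 a b false z₁, hsete2 a b true z₀, hsete2 a b true z₁]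
      exact ⟨(hmono a b ha hab hb1).2, (hmono a b ha hab hb1).1⟩
    have hFc' : ∀ z ∈ ({z₁, z₀} : Set S), Continuous (F z) :=
      fun z hz => hFc z (by rwa [Set.pair_comm])
    obtain ⟨κ, hκ, he⟩ := aux2 P τ hτ Y (fun ω => !(Dstar ω)) Z U₁ U₀ hYm hDm' hZm hU₁m hU₀m
      hU₁01 hU₀01 U hU' (fun d => q (!d)) (fun d => hq (!d)) hout' hexo' hrank'
      (fun d => hqc (!d)) F hF z₁ z₀ hz₁ hz₀ hmono' hFc' y₁ y₀ hy₁ hy₁u hy₀ hy₀u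
      (by simpa using hΔ)
    refine ⟨κ, hκ, ?_⟩
    have he' : y₀ - y₁ = κ * (q false τ - q true τ) := by simpa using he
    have hg : y₁ - y₀ = -(y₀ - y₁) := by ring
    rw [hg, he']
    ring
end

section
/- (Theorem 2(b): under strict stochastic monotonicity at τ, the attenuation factor is nonzero.) Assume Assumption 1, that q(d,·) is continuous on [0,1] for d = 0,1, the stochastic monotonicity condition (interval form), and the strict stochastic monotonicity condition at τ (interval form). Suppose that for z ∈ {z₀, z₁} the function F_z is continuous on ℝ and that y_z is the unique real with F_z(y_z) = τ·ℙ(Z = z) (the unique conditional τ-quantile of Y given Z = z). Then there exists κ ∈ (0,1] such that y_{z₁} − y_{z₀} = κ·(q(1,τ) − q(0,τ)). -/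
open MeasureTheory Set Filter

lemma split_toReal {Ω : Type*} [MeasurableSpace Ω] (P : Measure Ω) [IsFiniteMeasure P]
    (A : Set Ω) {t : Set Ω} (ht : MeasurableSet t) :
    (P A).toReal = (P (A ∩ t)).toReal + (P (A \ t)).toReal := by
  rw [← ENNReal.toReal_add (measure_ne_top _ _) (measure_ne_top _ _),
    measure_inter_add_diff A ht]

lemma aux_exo {Ω S : Type*} [MeasurableSpace Ω] (P : Measure Ω) [IsProbabilityMeasure P]
    (τ : ℝ) (Dstar : Ω → Bool) (Z : Ω → S) (U₀ U₁ U : Ω → ℝ)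
    (hDstarm : Measurable Dstar)
    (hU : ∀ ω, U ω = bif Dstar ω then U₁ ω else U₀ ω)
    (hexo : ∀ (d : Bool) (z : S),
      (P {ω | (bif d then U₁ ω else U₀ ω) ≤ τ ∧ Z ω = z}).toReal
        = τ * (P {ω | Z ω = z}).toReal)
    (hrank : ∀ (d : Bool) (z : S),
      (P {ω | U₀ ω ≤ τ ∧ Dstar ω = d ∧ Z ω = z}).toReal
        = (P {ω | U₁ ω ≤ τ ∧ Dstar ω = d ∧ Z ω = z}).toReal)
    (z : S) :
    (P {ω | U ω ≤ τ ∧ Z ω = z}).toReal = τ * (P {ω | Z ω = z}).toReal := by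
  have ht : MeasurableSet {ω | Dstar ω = true} := hDstarm (measurableSet_singleton true)
  have e1 : {ω | U ω ≤ τ ∧ Z ω = z} ∩ {ω | Dstar ω = true}
      = {ω | U₁ ω ≤ τ ∧ Dstar ω = true ∧ Z ω = z} := by
    ext ω; cases hb : Dstar ω <;> simp [hb, hU ω]
  have e2 : {ω | U ω ≤ τ ∧ Z ω = z} \ {ω | Dstar ω = true}
      = {ω | U₀ ω ≤ τ ∧ Dstar ω = false ∧ Z ω = z} := by
    ext ω; cases hb : Dstar ω <;> simp [hb, hU ω]
  have e3 : {ω | U₀ ω ≤ τ ∧ Z ω = z} ∩ {ω | Dstar ω = true}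
      = {ω | U₀ ω ≤ τ ∧ Dstar ω = true ∧ Z ω = z} := by
    ext ω; cases hb : Dstar ω <;> simp [hb]
  have e4 : {ω | U₀ ω ≤ τ ∧ Z ω = z} \ {ω | Dstar ω = true}
      = {ω | U₀ ω ≤ τ ∧ Dstar ω = false ∧ Z ω = z} := by
    ext ω; cases hb : Dstar ω <;> simp [hb]
  have h0 := hexo false z
  simp only [Bool.cond_false] at h0
  calc (P {ω | U ω ≤ τ ∧ Z ω = z}).toReal
      = (P {ω | U₁ ω ≤ τ ∧ Dstar ω = true ∧ Z ω = z}).toReal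
        + (P {ω | U₀ ω ≤ τ ∧ Dstar ω = false ∧ Z ω = z}).toReal := by
        rw [split_toReal P _ ht, e1, e2]
    _ = (P {ω | U₀ ω ≤ τ ∧ Dstar ω = true ∧ Z ω = z}).toReal
        + (P {ω | U₀ ω ≤ τ ∧ Dstar ω = false ∧ Z ω = z}).toReal := by
        rw [← hrank true z]
    _ = (P {ω | U₀ ω ≤ τ ∧ Z ω = z}).toReal := by
        rw [split_toReal P {ω | U₀ ω ≤ τ ∧ Z ω = z} ht, e3, e4]
    _ = τ * (P {ω | Z ω = z}).toReal := h0

lemma key {Ω S : Type*} [MeasurableSpace Ω] (P : Measure Ω) [IsProbabilityMeasure P]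
    (τ : ℝ) (hτ : τ ∈ Ioo (0:ℝ) 1)
    (Y : Ω → ℝ) (Dstar : Ω → Bool) (Z : Ω → S) (U₀ U₁ : Ω → ℝ)
    (hYm : Measurable Y) (hDstarm : Measurable Dstar)
    (hU₀01 : ∀ ω, U₀ ω ∈ Icc (0:ℝ) 1) (hU₁01 : ∀ ω, U₁ ω ∈ Icc (0:ℝ) 1)
    (U : Ω → ℝ) (hU : ∀ ω, U ω = bif Dstar ω then U₁ ω else U₀ ω)
    (hmU : Measurable U)
    (q : Bool → ℝ → ℝ)
    (hq : ∀ d, StrictMonoOn (q d) (Icc (0:ℝ) 1))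
    (hout : ∀ ω, Y ω = q (Dstar ω) (U ω))
    (hexo : ∀ (d : Bool) (z : S),
      (P {ω | (bif d then U₁ ω else U₀ ω) ≤ τ ∧ Z ω = z}).toReal
        = τ * (P {ω | Z ω = z}).toReal)
    (hrank : ∀ (d : Bool) (z : S),
      (P {ω | U₀ ω ≤ τ ∧ Dstar ω = d ∧ Z ω = z}).toReal
        = (P {ω | U₁ ω ≤ τ ∧ Dstar ω = d ∧ Z ω = z}).toReal)
    (hqc : ∀ d, ContinuousOn (q d) (Icc (0:ℝ) 1))
    (F : S → ℝ → ℝ)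
    (hF : ∀ (z : S) (y : ℝ), F z y = (P {ω | Y ω ≤ y ∧ Z ω = z}).toReal)
    (z₀ z₁ : S)
    (hz₀ : 0 < (P {ω | Z ω = z₀}).toReal) (hz₁ : 0 < (P {ω | Z ω = z₁}).toReal)
    (hmono : ∀ a b : ℝ, 0 ≤ a → a ≤ b → b ≤ 1 →
      (P {ω | a < U ω ∧ U ω ≤ b ∧ Dstar ω = false ∧ Z ω = z₁}).toReal
          * (P {ω | Z ω = z₀}).toReal
        ≤ (P {ω | a < U ω ∧ U ω ≤ b ∧ Dstar ω = false ∧ Z ω = z₀}).toReal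
          * (P {ω | Z ω = z₁}).toReal
      ∧ (P {ω | a < U ω ∧ U ω ≤ b ∧ Dstar ω = true ∧ Z ω = z₀}).toReal
          * (P {ω | Z ω = z₁}).toReal
        ≤ (P {ω | a < U ω ∧ U ω ≤ b ∧ Dstar ω = true ∧ Z ω = z₁}).toReal
          * (P {ω | Z ω = z₀}).toReal)
    (hstrict : ∀ a b : ℝ,
      ((0 ≤ a ∧ a < τ ∧ b = τ) ∨ (a = τ ∧ τ < b ∧ b ≤ 1)) →
      (P {ω | a < U ω ∧ U ω ≤ b ∧ Dstar ω = false ∧ Z ω = z₁}).toReal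
          * (P {ω | Z ω = z₀}).toReal
        < (P {ω | a < U ω ∧ U ω ≤ b ∧ Dstar ω = false ∧ Z ω = z₀}).toReal
          * (P {ω | Z ω = z₁}).toReal
      ∧ (P {ω | a < U ω ∧ U ω ≤ b ∧ Dstar ω = true ∧ Z ω = z₀}).toReal
          * (P {ω | Z ω = z₁}).toReal
        < (P {ω | a < U ω ∧ U ω ≤ b ∧ Dstar ω = true ∧ Z ω = z₁}).toReal
          * (P {ω | Z ω = z₀}).toReal)
    (hFc₀ : Continuous (F z₀)) (hFc₁ : Continuous (F z₁))
    (y₀ y₁ : ℝ)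
    (hy₀ : F z₀ y₀ = τ * (P {ω | Z ω = z₀}).toReal)
    (hy₀u : ∀ y : ℝ, F z₀ y = τ * (P {ω | Z ω = z₀}).toReal → y = y₀)
    (hy₁ : F z₁ y₁ = τ * (P {ω | Z ω = z₁}).toReal)
    (hy₁u : ∀ y : ℝ, F z₁ y = τ * (P {ω | Z ω = z₁}).toReal → y = y₁)
    (hlt : q false τ < q true τ) :
    q false τ ≤ y₀ ∧ y₀ < y₁ ∧ y₁ ≤ q true τ := by
  obtain ⟨hτ0, hτ1⟩ := hτ
  have hτm : τ ∈ Icc (0:ℝ) 1 := ⟨hτ0.le, hτ1.le⟩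
  have h0m : (0:ℝ) ∈ Icc (0:ℝ) 1 := ⟨le_refl _, zero_le_one⟩
  have h1m : (1:ℝ) ∈ Icc (0:ℝ) 1 := ⟨zero_le_one, le_refl _⟩
  have hU01 : ∀ ω, U ω ∈ Icc (0:ℝ) 1 := by
    intro ω; rw [hU ω]; cases Dstar ω
    · simpa using hU₀01 ω
    · simpa using hU₁01 ω
  have monoTR : ∀ {A B : Set Ω}, A ⊆ B → (P A).toReal ≤ (P B).toReal :=
    fun h => ENNReal.toReal_mono (measure_ne_top P _) (measure_mono h)
  have E1 : ∀ z : S, (P {ω | U ω ≤ τ ∧ Z ω = z}).toReal = τ * (P {ω | Z ω = z}).toReal :=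
    aux_exo P τ Dstar Z U₀ U₁ U hDstarm hU hexo hrank
  have Fm : ∀ (z : S) {y y' : ℝ}, y ≤ y' → F z y ≤ F z y' := by
    intro z y y' hyy
    rw [hF, hF]
    exact monoTR (fun ω h => ⟨le_trans h.1 hyy, h.2⟩)
  have mUτ : MeasurableSet {ω | U ω ≤ τ} := measurableSet_le hmU measurable_const
  have mD : MeasurableSet {ω | Dstar ω = true} := hDstarm (measurableSet_singleton true)
  have mY : MeasurableSet {ω | Y ω ≤ y₀} := measurableSet_le hYm measurable_const
  -- no atoms
  have noatom : ∀ z : S, Continuous (F z) → ∀ y : ℝ,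
      (P {ω | Y ω = y ∧ Z ω = z}).toReal = 0 := by
    intro z hc y
    by_contra hne
    have hpos : 0 < (P {ω | Y ω = y ∧ Z ω = z}).toReal :=
      lt_of_le_of_ne ENNReal.toReal_nonneg (Ne.symm hne)
    obtain ⟨δ, hδ, hδ2⟩ := Metric.continuous_iff.mp hc y _ hpos
    have h1 : F z y = F z (y - δ/2)
        + (P ({ω | Y ω ≤ y ∧ Z ω = z} \ {ω | Y ω ≤ y - δ/2})).toReal := by
      rw [hF, hF,
        split_toReal P {ω | Y ω ≤ y ∧ Z ω = z}
          (measurableSet_le hYm measurable_const : MeasurableSet {ω | Y ω ≤ y - δ/2})]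
      have e : {ω | Y ω ≤ y ∧ Z ω = z} ∩ {ω | Y ω ≤ y - δ/2} = {ω | Y ω ≤ y - δ/2 ∧ Z ω = z} := by
        ext ω
        simp only [mem_inter_iff, mem_setOf_eq]
        constructor
        · rintro ⟨⟨_, h2⟩, h3⟩; exact ⟨h3, h2⟩
        · rintro ⟨h1, h2⟩; exact ⟨⟨le_trans h1 (by linarith), h2⟩, h1⟩
      rw [e]
    have key1 : (P {ω | Y ω = y ∧ Z ω = z}).toReal
        ≤ (P ({ω | Y ω ≤ y ∧ Z ω = z} \ {ω | Y ω ≤ y - δ/2})).toReal := by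
      apply monoTR
      rintro ω ⟨h1, h2⟩
      refine ⟨⟨le_of_eq h1, h2⟩, fun hc' => ?_⟩
      have hc'' : Y ω ≤ y - δ/2 := hc'
      rw [h1] at hc''
      linarith
    have h2 := hδ2 (y - δ/2) (by rw [Real.dist_eq, abs_of_nonpos] <;> linarith)
    rw [Real.dist_eq] at h2
    have h3 : F z (y - δ/2) ≤ F z y := Fm z (by linarith)
    rw [abs_of_nonpos (by linarith)] at h2
    linarith
  have qle : ∀ (d : Bool) {u v : ℝ}, u ∈ Icc (0:ℝ) 1 → v ∈ Icc (0:ℝ) 1 →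
      (q d u ≤ q d v ↔ u ≤ v) := by
    intro d u v hu hv; exact (hq d).le_iff_le hu hv
  have qlt : ∀ (d : Bool) {u v : ℝ}, u ∈ Icc (0:ℝ) 1 → v ∈ Icc (0:ℝ) 1 →
      (q d u < q d v ↔ u < v) := by
    intro d u v hu hv; exact (hq d).lt_iff_lt hu hv
  have incl1 : ∀ ω : Ω, U ω ≤ τ → Y ω ≤ q true τ := by
    intro ω h1
    rw [hout ω]; cases hb : Dstar ω
    · exact le_trans ((qle false (hU01 ω) hτm).mpr h1) hlt.le
    · exact (qle true (hU01 ω) hτm).mpr h1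
  have Flow : ∀ z : S, F z (q false τ) ≤ τ * (P {ω | Z ω = z}).toReal := by
    intro z
    rw [hF, ← E1 z]
    apply monoTR
    rintro ω ⟨h1, h2⟩
    refine ⟨?_, h2⟩
    rw [hout ω] at h1
    cases hb : Dstar ω
    · rw [hb] at h1; exact (qle false (hU01 ω) hτm).mp h1
    · rw [hb] at h1
      exact le_of_lt ((qlt true (hU01 ω) hτm).mp (lt_of_le_of_lt h1 hlt))
  have Fhigh : ∀ z : S, τ * (P {ω | Z ω = z}).toReal ≤ F z (q true τ) := by
    intro z
    rw [hF, ← E1 z]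
    apply monoTR
    rintro ω ⟨h1, h2⟩
    exact ⟨incl1 ω h1, h2⟩
  have hy₀mem : y₀ ∈ Icc (q false τ) (q true τ) := by
    obtain ⟨y, hy, hfy⟩ :=
      intermediate_value_Icc hlt.le hFc₀.continuousOn ⟨Flow z₀, Fhigh z₀⟩
    rwa [hy₀u y hfy] at hy
  have hy₁mem : y₁ ∈ Icc (q false τ) (q true τ) := by
    obtain ⟨y, hy, hfy⟩ :=
      intermediate_value_Icc hlt.le hFc₁.continuousOn ⟨Flow z₁, Fhigh z₁⟩
    rwa [hy₁u y hfy] at hy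
  -- y₀ < q true τ
  obtain ⟨b, hbτ, hb1, hqb⟩ : ∃ b : ℝ, τ < b ∧ b ≤ 1 ∧ q false b < q true τ := by
    by_cases hc : q false 1 < q true τ
    · exact ⟨1, hτ1, le_refl _, hc⟩
    · push_neg at hc
      have hcont : ContinuousOn (q false) (Icc τ 1) :=
        (hqc false).mono (Icc_subset_Icc hτ0.le le_rfl)
      obtain ⟨b, hbmem, hqb⟩ := intermediate_value_Icc hτm.2 hcont
        (⟨by linarith, by linarith⟩ :
          (q false τ + q true τ)/2 ∈ Icc (q false τ) (q false 1))
      refine ⟨b, ?_, hbmem.2, by rw [hqb]; linarith⟩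
      rcases lt_or_eq_of_le hbmem.1 with h | h
      · exact h
      · exfalso; rw [← h] at hqb; linarith
  have hbm : b ∈ Icc (0:ℝ) 1 := ⟨le_trans hτ0.le hbτ.le, hb1⟩
  have hT : 0 < (P {ω | τ < U ω ∧ U ω ≤ b ∧ Dstar ω = false ∧ Z ω = z₀}).toReal := by
    have h := (hstrict τ b (Or.inr ⟨rfl, hbτ, hb1⟩)).1
    have h2 : 0 < (P {ω | τ < U ω ∧ U ω ≤ b ∧ Dstar ω = false ∧ Z ω = z₀}).toReal
        * (P {ω | Z ω = z₁}).toReal :=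
      lt_of_le_of_lt (mul_nonneg ENNReal.toReal_nonneg ENNReal.toReal_nonneg) h
    rcases mul_pos_iff.mp h2 with ⟨ha, _⟩ | ⟨_, hb'⟩
    · exact ha
    · linarith
  have hFq1 : F z₀ y₀ < F z₀ (q true τ) := by
    rw [hy₀, hF]
    have e1 : {ω | Y ω ≤ q true τ ∧ Z ω = z₀} ∩ {ω | U ω ≤ τ}
        = {ω | U ω ≤ τ ∧ Z ω = z₀} := by
      ext ω
      simp only [mem_inter_iff, mem_setOf_eq]
      constructor
      · rintro ⟨⟨_, h2⟩, h3⟩; exact ⟨h3, h2⟩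
      · rintro ⟨h3, h2⟩; exact ⟨⟨incl1 ω h3, h2⟩, h3⟩
    have e2 : {ω | τ < U ω ∧ U ω ≤ b ∧ Dstar ω = false ∧ Z ω = z₀}
        ⊆ {ω | Y ω ≤ q true τ ∧ Z ω = z₀} \ {ω | U ω ≤ τ} := by
      rintro ω ⟨h1, h2, h3, h4⟩
      refine ⟨⟨?_, h4⟩, not_le.mpr h1⟩
      rw [hout ω, h3]
      exact le_of_lt (lt_of_le_of_lt ((qle false (hU01 ω) hbm).mpr h2) hqb)
    have hm := monoTR e2
    rw [split_toReal P {ω | Y ω ≤ q true τ ∧ Z ω = z₀} mUτ, e1, E1 z₀]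
    linarith
  have hy₀lt : y₀ < q true τ := by
    rcases lt_or_eq_of_le hy₀mem.2 with h | h
    · exact h
    · exact absurd hFq1 (by rw [h]; exact lt_irrefl _)
  -- the cut point c₁ for treated
  obtain ⟨c₁, hc₁0, hc₁τ, hBeq⟩ :
      ∃ c₁ : ℝ, 0 ≤ c₁ ∧ c₁ < τ ∧ ∀ z : S, Continuous (F z) →
        (P {ω | U ω ≤ τ ∧ ¬ (Y ω ≤ y₀) ∧ Dstar ω = true ∧ Z ω = z}).toReal
          = (P {ω | c₁ < U ω ∧ U ω ≤ τ ∧ Dstar ω = true ∧ Z ω = z}).toReal := by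
    by_cases hcc : q true 0 ≤ y₀
    · have hcont : ContinuousOn (q true) (Icc 0 τ) :=
        (hqc true).mono (Icc_subset_Icc le_rfl hτm.2)
      obtain ⟨c, hcmem, hqc1⟩ := intermediate_value_Icc hτ0.le hcont ⟨hcc, hy₀lt.le⟩
      have hcm : c ∈ Icc (0:ℝ) 1 := ⟨hcmem.1, le_trans hcmem.2 hτm.2⟩
      have hcτ : c < τ := by
        rcases lt_or_eq_of_le hcmem.2 with h | h
        · exact h
        · exfalso; rw [h] at hqc1; rw [← hqc1] at hy₀lt; exact lt_irrefl _ hy₀lt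
      refine ⟨c, hcmem.1, hcτ, ?_⟩
      intro z _
      refine congrArg (fun s => (P s).toReal) ?_
      ext ω
      simp only [mem_setOf_eq]
      constructor
      · rintro ⟨h1, h2, h3, h4⟩
        refine ⟨?_, h1, h3, h4⟩
        rw [hout ω, h3] at h2
        push_neg at h2
        rw [← hqc1] at h2
        exact (qlt true hcm (hU01 ω)).mp h2
      · rintro ⟨h1, h2, h3, h4⟩
        refine ⟨h2, ?_, h3, h4⟩
        rw [hout ω, h3]
        push_neg
        rw [← hqc1]
        exact (qlt true hcm (hU01 ω)).mpr h1
    · push_neg at hcc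
      refine ⟨0, le_rfl, hτ0, ?_⟩
      intro z hcz
      have e1 : {ω | U ω ≤ τ ∧ ¬ (Y ω ≤ y₀) ∧ Dstar ω = true ∧ Z ω = z}
          = {ω | U ω ≤ τ ∧ Dstar ω = true ∧ Z ω = z} := by
        ext ω
        simp only [mem_setOf_eq]
        constructor
        · rintro ⟨h1, _, h3, h4⟩; exact ⟨h1, h3, h4⟩
        · rintro ⟨h1, h3, h4⟩
          refine ⟨h1, ?_, h3, h4⟩
          rw [hout ω, h3]
          push_neg
          exact lt_of_lt_of_le hcc ((qle true h0m (hU01 ω)).mpr (hU01 ω).1)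
      have e2 : {ω | U ω ≤ τ ∧ Dstar ω = true ∧ Z ω = z} ∩ {ω | 0 < U ω}
          = {ω | 0 < U ω ∧ U ω ≤ τ ∧ Dstar ω = true ∧ Z ω = z} := by
        ext ω; simp only [mem_inter_iff, mem_setOf_eq]; tauto
      have e3 : (P ({ω | U ω ≤ τ ∧ Dstar ω = true ∧ Z ω = z} \ {ω | 0 < U ω})).toReal = 0 := by
        have hsub : {ω | U ω ≤ τ ∧ Dstar ω = true ∧ Z ω = z} \ {ω | 0 < U ω}
            ⊆ {ω | Y ω = q true 0 ∧ Z ω = z} := by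
          rintro ω ⟨⟨h1, h3, h4⟩, h5⟩
          rw [mem_setOf_eq, not_lt] at h5
          have hU0 : U ω = 0 := le_antisymm h5 (hU01 ω).1
          exact ⟨by rw [hout ω, h3, hU0], h4⟩
        have hm := monoTR hsub
        have h0' := noatom z hcz (q true 0)
        have h0'' : (0:ℝ) ≤ (P ({ω | U ω ≤ τ ∧ Dstar ω = true ∧ Z ω = z}
            \ {ω | 0 < U ω})).toReal := ENNReal.toReal_nonneg
        linarith
      rw [e1, split_toReal P {ω | U ω ≤ τ ∧ Dstar ω = true ∧ Z ω = z}
        (measurableSet_lt measurable_const hmU : MeasurableSet {ω | 0 < U ω}), e2, e3]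
      ring
  -- the cut point b₀ for untreated
  obtain ⟨b₀, hb₀τ, hb₀1, hAeq⟩ :
      ∃ b₀ : ℝ, τ ≤ b₀ ∧ b₀ ≤ 1 ∧ ∀ z : S,
        (P {ω | Y ω ≤ y₀ ∧ ¬ (U ω ≤ τ) ∧ Dstar ω = false ∧ Z ω = z}).toReal
          = (P {ω | τ < U ω ∧ U ω ≤ b₀ ∧ Dstar ω = false ∧ Z ω = z}).toReal := by
    by_cases hcc : y₀ ≤ q false 1
    · have hcont : ContinuousOn (q false) (Icc τ 1) :=
        (hqc false).mono (Icc_subset_Icc hτ0.le le_rfl)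
      obtain ⟨b', hbmem, hqb'⟩ := intermediate_value_Icc hτm.2 hcont ⟨hy₀mem.1, hcc⟩
      have hbm' : b' ∈ Icc (0:ℝ) 1 := ⟨le_trans hτ0.le hbmem.1, hbmem.2⟩
      refine ⟨b', hbmem.1, hbmem.2, ?_⟩
      intro z
      refine congrArg (fun s => (P s).toReal) ?_
      ext ω
      simp only [mem_setOf_eq, not_le]
      constructor
      · rintro ⟨h1, h2, h3, h4⟩
        refine ⟨h2, ?_, h3, h4⟩
        rw [hout ω, h3, ← hqb'] at h1
        exact (qle false (hU01 ω) hbm').mp h1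
      · rintro ⟨h2, h1, h3, h4⟩
        refine ⟨?_, h2, h3, h4⟩
        rw [hout ω, h3, ← hqb']
        exact (qle false (hU01 ω) hbm').mpr h1
    · push_neg at hcc
      refine ⟨1, hτm.2, le_rfl, ?_⟩
      intro z
      refine congrArg (fun s => (P s).toReal) ?_
      ext ω
      simp only [mem_setOf_eq, not_le]
      constructor
      · rintro ⟨_, h2, h3, h4⟩; exact ⟨h2, (hU01 ω).2, h3, h4⟩
      · rintro ⟨h2, _, h3, h4⟩
        refine ⟨?_, h2, h3, h4⟩
        rw [hout ω, h3]
        exact le_trans ((qle false (hU01 ω) h1m).mpr (hU01 ω).2) hcc.le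
  -- decomposition
  have decomp : ∀ z : S, Continuous (F z) →
      F z y₀ = τ * (P {ω | Z ω = z}).toReal
        + (P {ω | τ < U ω ∧ U ω ≤ b₀ ∧ Dstar ω = false ∧ Z ω = z}).toReal
        - (P {ω | c₁ < U ω ∧ U ω ≤ τ ∧ Dstar ω = true ∧ Z ω = z}).toReal := by
    intro z hcz
    have s1 : (P {ω | Y ω ≤ y₀ ∧ Z ω = z}).toReal
        = (P {ω | Y ω ≤ y₀ ∧ Dstar ω = true ∧ Z ω = z}).toReal
          + (P {ω | Y ω ≤ y₀ ∧ Dstar ω = false ∧ Z ω = z}).toReal := by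
      have e1 : {ω | Y ω ≤ y₀ ∧ Z ω = z} ∩ {ω | Dstar ω = true}
          = {ω | Y ω ≤ y₀ ∧ Dstar ω = true ∧ Z ω = z} := by
        ext ω; simp only [mem_inter_iff, mem_setOf_eq]; tauto
      have e2 : {ω | Y ω ≤ y₀ ∧ Z ω = z} \ {ω | Dstar ω = true}
          = {ω | Y ω ≤ y₀ ∧ Dstar ω = false ∧ Z ω = z} := by
        ext ω
        simp only [mem_diff, mem_setOf_eq, Bool.not_eq_true]
        tauto
      rw [split_toReal P {ω | Y ω ≤ y₀ ∧ Z ω = z} mD, e1, e2]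
    have s2 : (P {ω | Y ω ≤ y₀ ∧ Dstar ω = false ∧ Z ω = z}).toReal
        = (P {ω | U ω ≤ τ ∧ Dstar ω = false ∧ Z ω = z}).toReal
          + (P {ω | τ < U ω ∧ U ω ≤ b₀ ∧ Dstar ω = false ∧ Z ω = z}).toReal := by
      have e1 : {ω | Y ω ≤ y₀ ∧ Dstar ω = false ∧ Z ω = z} ∩ {ω | U ω ≤ τ}
          = {ω | U ω ≤ τ ∧ Dstar ω = false ∧ Z ω = z} := by
        ext ω
        simp only [mem_inter_iff, mem_setOf_eq]
        constructor
        · rintro ⟨⟨_, h3, h4⟩, h5⟩; exact ⟨h5, h3, h4⟩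
        · rintro ⟨h5, h3, h4⟩
          refine ⟨⟨?_, h3, h4⟩, h5⟩
          rw [hout ω, h3]
          exact le_trans ((qle false (hU01 ω) hτm).mpr h5) hy₀mem.1
      have e2 : {ω | Y ω ≤ y₀ ∧ Dstar ω = false ∧ Z ω = z} \ {ω | U ω ≤ τ}
          = {ω | Y ω ≤ y₀ ∧ ¬ (U ω ≤ τ) ∧ Dstar ω = false ∧ Z ω = z} := by
        ext ω; simp only [mem_diff, mem_setOf_eq]; tauto
      rw [split_toReal P {ω | Y ω ≤ y₀ ∧ Dstar ω = false ∧ Z ω = z} mUτ, e1, e2, hAeq z]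
    have s3 : (P {ω | U ω ≤ τ ∧ Dstar ω = true ∧ Z ω = z}).toReal
        = (P {ω | Y ω ≤ y₀ ∧ Dstar ω = true ∧ Z ω = z}).toReal
          + (P {ω | c₁ < U ω ∧ U ω ≤ τ ∧ Dstar ω = true ∧ Z ω = z}).toReal := by
      have e1 : {ω | U ω ≤ τ ∧ Dstar ω = true ∧ Z ω = z} ∩ {ω | Y ω ≤ y₀}
          = {ω | Y ω ≤ y₀ ∧ Dstar ω = true ∧ Z ω = z} := by
        ext ω
        simp only [mem_inter_iff, mem_setOf_eq]
        constructor
        · rintro ⟨⟨_, h3, h4⟩, h5⟩; exact ⟨h5, h3, h4⟩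
        · rintro ⟨h5, h3, h4⟩
          refine ⟨⟨?_, h3, h4⟩, h5⟩
          have hlt2 : q true (U ω) < q true τ := by
            rw [hout ω, h3] at h5
            exact lt_of_le_of_lt h5 hy₀lt
          exact le_of_lt ((qlt true (hU01 ω) hτm).mp hlt2)
      have e2 : {ω | U ω ≤ τ ∧ Dstar ω = true ∧ Z ω = z} \ {ω | Y ω ≤ y₀}
          = {ω | U ω ≤ τ ∧ ¬ (Y ω ≤ y₀) ∧ Dstar ω = true ∧ Z ω = z} := by
        ext ω; simp only [mem_diff, mem_setOf_eq]; tauto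
      rw [split_toReal P {ω | U ω ≤ τ ∧ Dstar ω = true ∧ Z ω = z} mY, e1, e2, hBeq z hcz]
    have s4 : (P {ω | U ω ≤ τ ∧ Z ω = z}).toReal
        = (P {ω | U ω ≤ τ ∧ Dstar ω = true ∧ Z ω = z}).toReal
          + (P {ω | U ω ≤ τ ∧ Dstar ω = false ∧ Z ω = z}).toReal := by
      have e1 : {ω | U ω ≤ τ ∧ Z ω = z} ∩ {ω | Dstar ω = true}
          = {ω | U ω ≤ τ ∧ Dstar ω = true ∧ Z ω = z} := by
        ext ω; simp only [mem_inter_iff, mem_setOf_eq]; tauto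
      have e2 : {ω | U ω ≤ τ ∧ Z ω = z} \ {ω | Dstar ω = true}
          = {ω | U ω ≤ τ ∧ Dstar ω = false ∧ Z ω = z} := by
        ext ω
        simp only [mem_diff, mem_setOf_eq, Bool.not_eq_true]
        tauto
      rw [split_toReal P {ω | U ω ≤ τ ∧ Z ω = z} mD, e1, e2]
    have hE := E1 z
    rw [hF]
    linarith
  have hA₀B₀ : (P {ω | τ < U ω ∧ U ω ≤ b₀ ∧ Dstar ω = false ∧ Z ω = z₀}).toReal
      = (P {ω | c₁ < U ω ∧ U ω ≤ τ ∧ Dstar ω = true ∧ Z ω = z₀}).toReal := by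
    have hd := decomp z₀ hFc₀
    rw [hy₀] at hd
    linarith
  have hmono1 := (hmono τ b₀ hτ0.le hb₀τ hb₀1).1
  have hstr1 := (hstrict c₁ τ (Or.inl ⟨hc₁0, hc₁τ, rfl⟩)).2
  have hABz₁ : (P {ω | τ < U ω ∧ U ω ≤ b₀ ∧ Dstar ω = false ∧ Z ω = z₁}).toReal
      < (P {ω | c₁ < U ω ∧ U ω ≤ τ ∧ Dstar ω = true ∧ Z ω = z₁}).toReal := by
    nlinarith [hz₀, hz₁, hmono1, hstr1, hA₀B₀]
  have hF₁ : F z₁ y₀ < τ * (P {ω | Z ω = z₁}).toReal := by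
    rw [decomp z₁ hFc₁]
    linarith
  have hne : y₀ < y₁ := by
    rcases lt_trichotomy y₀ y₁ with h | h | h
    · exact h
    · exfalso; rw [h, hy₁] at hF₁; exact lt_irrefl _ hF₁
    · exfalso
      have hm := Fm z₁ h.le
      rw [hy₁] at hm
      linarith
  exact ⟨hy₀mem.1, hne, hy₁mem.2⟩

theorem stmt3
    {Ω : Type*} [MeasurableSpace Ω] (P : Measure Ω) [IsProbabilityMeasure P]
    {S : Type*} [MeasurableSpace S] [Countable S] [MeasurableSingletonClass S]
    (τ : ℝ) (hτ : τ ∈ Ioo (0:ℝ) 1)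
    (Y : Ω → ℝ) (Dstar : Ω → Bool) (Z : Ω → S) (U₀ U₁ : Ω → ℝ)
    (hYm : Measurable Y) (hDstarm : Measurable Dstar) (hZm : Measurable Z)
    (hU₀m : Measurable U₀) (hU₁m : Measurable U₁)
    (hU₀01 : ∀ ω, U₀ ω ∈ Icc (0:ℝ) 1) (hU₁01 : ∀ ω, U₁ ω ∈ Icc (0:ℝ) 1)
    (U : Ω → ℝ) (hU : ∀ ω, U ω = bif Dstar ω then U₁ ω else U₀ ω)
    (q : Bool → ℝ → ℝ)
    (hq : ∀ d, StrictMonoOn (q d) (Icc (0:ℝ) 1))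
    (hout : ∀ ω, Y ω = q (Dstar ω) (U ω))
    (hexo : ∀ (d : Bool) (z : S),
      (P {ω | (bif d then U₁ ω else U₀ ω) ≤ τ ∧ Z ω = z}).toReal
        = τ * (P {ω | Z ω = z}).toReal)
    (hrank : ∀ (d : Bool) (z : S),
      (P {ω | U₀ ω ≤ τ ∧ Dstar ω = d ∧ Z ω = z}).toReal
        = (P {ω | U₁ ω ≤ τ ∧ Dstar ω = d ∧ Z ω = z}).toReal)
    (hqc : ∀ d, ContinuousOn (q d) (Icc (0:ℝ) 1))
    (F : S → ℝ → ℝ)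
    (hF : ∀ (z : S) (y : ℝ), F z y = (P {ω | Y ω ≤ y ∧ Z ω = z}).toReal)
    (z₀ z₁ : S)
    (hz₀ : 0 < (P {ω | Z ω = z₀}).toReal) (hz₁ : 0 < (P {ω | Z ω = z₁}).toReal)
    (hmono : ∀ a b : ℝ, 0 ≤ a → a ≤ b → b ≤ 1 →
      (P {ω | a < U ω ∧ U ω ≤ b ∧ Dstar ω = false ∧ Z ω = z₁}).toReal
          * (P {ω | Z ω = z₀}).toReal
        ≤ (P {ω | a < U ω ∧ U ω ≤ b ∧ Dstar ω = false ∧ Z ω = z₀}).toReal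
          * (P {ω | Z ω = z₁}).toReal
      ∧ (P {ω | a < U ω ∧ U ω ≤ b ∧ Dstar ω = true ∧ Z ω = z₀}).toReal
          * (P {ω | Z ω = z₁}).toReal
        ≤ (P {ω | a < U ω ∧ U ω ≤ b ∧ Dstar ω = true ∧ Z ω = z₁}).toReal
          * (P {ω | Z ω = z₀}).toReal)
    (hstrict : ∀ a b : ℝ,
      ((0 ≤ a ∧ a < τ ∧ b = τ) ∨ (a = τ ∧ τ < b ∧ b ≤ 1)) →
      (P {ω | a < U ω ∧ U ω ≤ b ∧ Dstar ω = false ∧ Z ω = z₁}).toReal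
          * (P {ω | Z ω = z₀}).toReal
        < (P {ω | a < U ω ∧ U ω ≤ b ∧ Dstar ω = false ∧ Z ω = z₀}).toReal
          * (P {ω | Z ω = z₁}).toReal
      ∧ (P {ω | a < U ω ∧ U ω ≤ b ∧ Dstar ω = true ∧ Z ω = z₀}).toReal
          * (P {ω | Z ω = z₁}).toReal
        < (P {ω | a < U ω ∧ U ω ≤ b ∧ Dstar ω = true ∧ Z ω = z₁}).toReal
          * (P {ω | Z ω = z₀}).toReal)
    (hFc : ∀ z ∈ ({z₀, z₁} : Set S), Continuous (F z))
    (y₀ y₁ : ℝ)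
    (hy₀ : F z₀ y₀ = τ * (P {ω | Z ω = z₀}).toReal)
    (hy₀u : ∀ y : ℝ, F z₀ y = τ * (P {ω | Z ω = z₀}).toReal → y = y₀)
    (hy₁ : F z₁ y₁ = τ * (P {ω | Z ω = z₁}).toReal)
    (hy₁u : ∀ y : ℝ, F z₁ y = τ * (P {ω | Z ω = z₁}).toReal → y = y₁)
    :
    ∃ κ ∈ Ioc (0:ℝ) 1, y₁ - y₀ = κ * (q true τ - q false τ) := by
  have hmU : Measurable U := by
    have he : U = fun ω => bif Dstar ω then U₁ ω else U₀ ω := funext hU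
    rw [he]
    simp only [Bool.cond_eq_ite]
    exact Measurable.ite (hDstarm (measurableSet_singleton true)) hU₁m hU₀m
  have hFc₀ : Continuous (F z₀) := hFc z₀ (by simp)
  have hFc₁ : Continuous (F z₁) := hFc z₁ (by simp)
  rcases lt_trichotomy (q false τ) (q true τ) with hlt | heq | hgt
  · obtain ⟨h1, h2, h3⟩ := key P τ hτ Y Dstar Z U₀ U₁ hYm hDstarm hU₀01 hU₁01 U hU hmU
      q hq hout hexo hrank hqc F hF z₀ z₁ hz₀ hz₁ hmono hstrict hFc₀ hFc₁
      y₀ y₁ hy₀ hy₀u hy₁ hy₁u hlt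
    refine ⟨(y₁ - y₀)/(q true τ - q false τ), ⟨?_, ?_⟩, ?_⟩
    · exact div_pos (by linarith) (by linarith)
    · rw [div_le_one (by linarith)]; linarith
    · rw [div_mul_cancel₀]
      linarith
  · -- q false τ = q true τ
    have hFq : ∀ z : S, F z (q false τ) = τ * (P {ω | Z ω = z}).toReal := by
      intro z
      rw [hF, ← aux_exo P τ Dstar Z U₀ U₁ U hDstarm hU hexo hrank z]
      refine congrArg (fun s => (P s).toReal) ?_
      ext ω
      simp only [mem_setOf_eq]
      have hU01ω : U ω ∈ Icc (0:ℝ) 1 := by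
        rw [hU ω]; cases Dstar ω
        · simpa using hU₀01 ω
        · simpa using hU₁01 ω
      have hτm : τ ∈ Icc (0:ℝ) 1 := ⟨hτ.1.le, hτ.2.le⟩
      constructor
      · rintro ⟨h1, h2⟩
        refine ⟨?_, h2⟩
        rw [hout ω] at h1
        cases hb : Dstar ω
        · rw [hb] at h1; exact ((hq false).le_iff_le hU01ω hτm).mp h1
        · rw [hb] at h1; rw [heq] at h1
          exact ((hq true).le_iff_le hU01ω hτm).mp h1
      · rintro ⟨h1, h2⟩
        refine ⟨?_, h2⟩
        rw [hout ω]
        cases hb : Dstar ω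
        · exact ((hq false).le_iff_le hU01ω hτm).mpr h1
        · rw [heq]; exact ((hq true).le_iff_le hU01ω hτm).mpr h1
    have e0 : q false τ = y₀ := hy₀u _ (hFq z₀)
    have e1 : q false τ = y₁ := hy₁u _ (hFq z₁)
    refine ⟨1, ⟨zero_lt_one, le_rfl⟩, ?_⟩
    rw [← e0, ← e1, ← heq]
    ring
  · -- swapped case
    have hU' : ∀ ω, U ω = bif !Dstar ω then U₀ ω else U₁ ω := by
      intro ω; rw [hU ω]; cases Dstar ω <;> rfl
    have hout' : ∀ ω, Y ω = q (!(!Dstar ω)) (U ω) := by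
      intro ω; rw [Bool.not_not]; exact hout ω
    have hexo' : ∀ (d : Bool) (z : S),
        (P {ω | (bif d then U₀ ω else U₁ ω) ≤ τ ∧ Z ω = z}).toReal
          = τ * (P {ω | Z ω = z}).toReal := by
      intro d z
      cases d
      · simpa using hexo true z
      · simpa using hexo false z
    have eD : ∀ (V : Ω → ℝ) (d : Bool) (z : S),
        {ω | V ω ≤ τ ∧ (!Dstar ω) = d ∧ Z ω = z}
          = {ω | V ω ≤ τ ∧ Dstar ω = (!d) ∧ Z ω = z} := by
      intro V d z; ext ω; cases hb : Dstar ω <;> cases d <;> simp [hb]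
    have hrank' : ∀ (d : Bool) (z : S),
        (P {ω | U₁ ω ≤ τ ∧ (!Dstar ω) = d ∧ Z ω = z}).toReal
          = (P {ω | U₀ ω ≤ τ ∧ (!Dstar ω) = d ∧ Z ω = z}).toReal := by
      intro d z
      rw [eD U₁ d z, eD U₀ d z, ← hrank (!d) z]
    have eI : ∀ (a b : ℝ) (d : Bool) (z : S),
        {ω | a < U ω ∧ U ω ≤ b ∧ (!Dstar ω) = d ∧ Z ω = z}
          = {ω | a < U ω ∧ U ω ≤ b ∧ Dstar ω = (!d) ∧ Z ω = z} := by
      intro a b d z; ext ω; cases hb : Dstar ω <;> cases d <;> simp [hb]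
    have hmono' : ∀ a b : ℝ, 0 ≤ a → a ≤ b → b ≤ 1 →
        (P {ω | a < U ω ∧ U ω ≤ b ∧ (!Dstar ω) = false ∧ Z ω = z₀}).toReal
            * (P {ω | Z ω = z₁}).toReal
          ≤ (P {ω | a < U ω ∧ U ω ≤ b ∧ (!Dstar ω) = false ∧ Z ω = z₁}).toReal
            * (P {ω | Z ω = z₀}).toReal
        ∧ (P {ω | a < U ω ∧ U ω ≤ b ∧ (!Dstar ω) = true ∧ Z ω = z₁}).toReal
            * (P {ω | Z ω = z₀}).toReal
          ≤ (P {ω | a < U ω ∧ U ω ≤ b ∧ (!Dstar ω) = true ∧ Z ω = z₀}).toReal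
            * (P {ω | Z ω = z₁}).toReal := by
      intro a b h1 h2 h3
      rw [eI a b false z₀, eI a b false z₁, eI a b true z₀, eI a b true z₁]
      exact ⟨(hmono a b h1 h2 h3).2, (hmono a b h1 h2 h3).1⟩
    have hstrict' : ∀ a b : ℝ,
        ((0 ≤ a ∧ a < τ ∧ b = τ) ∨ (a = τ ∧ τ < b ∧ b ≤ 1)) →
        (P {ω | a < U ω ∧ U ω ≤ b ∧ (!Dstar ω) = false ∧ Z ω = z₀}).toReal
            * (P {ω | Z ω = z₁}).toReal
          < (P {ω | a < U ω ∧ U ω ≤ b ∧ (!Dstar ω) = false ∧ Z ω = z₁}).toReal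
            * (P {ω | Z ω = z₀}).toReal
        ∧ (P {ω | a < U ω ∧ U ω ≤ b ∧ (!Dstar ω) = true ∧ Z ω = z₁}).toReal
            * (P {ω | Z ω = z₀}).toReal
          < (P {ω | a < U ω ∧ U ω ≤ b ∧ (!Dstar ω) = true ∧ Z ω = z₀}).toReal
            * (P {ω | Z ω = z₁}).toReal := by
      intro a b hab
      rw [eI a b false z₀, eI a b false z₁, eI a b true z₀, eI a b true z₁]
      exact ⟨(hstrict a b hab).2, (hstrict a b hab).1⟩
    have hDm' : Measurable (fun ω : Ω => !Dstar ω) := by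
      exact (Measurable.of_discrete (f := Bool.not)).comp hDstarm
    obtain ⟨h1, h2, h3⟩ := key P τ hτ Y (fun ω => !Dstar ω) Z U₁ U₀ hYm
      hDm' hU₁01 hU₀01 U hU' hmU
      (fun d => q (!d)) (fun d => hq (!d)) hout' hexo' hrank' (fun d => hqc (!d))
      F hF z₁ z₀ hz₁ hz₀ hmono' hstrict' hFc₁ hFc₀
      y₁ y₀ hy₁ hy₁u hy₀ hy₀u (by simpa using hgt)
    -- h1 : q true τ ≤ y₁, h2 : y₁ < y₀, h3 : y₀ ≤ q false τ
    simp only [Bool.not_false, Bool.not_true] at h1 h3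
    refine ⟨(y₀ - y₁)/(q false τ - q true τ), ⟨?_, ?_⟩, ?_⟩
    · exact div_pos (by linarith) (by linarith)
    · rw [div_le_one (by linarith)]; linarith
    · have hne : q false τ - q true τ ≠ 0 := by linarith
      rw [div_mul_eq_mul_div, eq_div_iff hne]
      ring
end

section
/- (Theorem 3(a): moment condition for the structural quantile function under misclassification.) Assume Assumption 1 and Assumption 2, and set y₀ := q(0,τ) and y₁ := q(1,τ). Then for every z ∈ S, ℙ(({D = 0} ∩ {Y ≤ y₀} ∪ {D = 1} ∩ {Y ≤ y₁}) ∩ {Z = z}) − τ·ℙ(Z = z) = p₁·(ℙ({Y ≤ y₀} ∩ {Z = z}) − τ·ℙ(Z = z)) + p₀·(ℙ({Y ≤ y₁} ∩ {Z = z}) − τ·ℙ(Z = z)). -/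
open MeasureTheory Set Filter

private lemma split3 {Ω : Type*} [MeasurableSpace Ω] (P : Measure Ω) [IsFiniteMeasure P]
    (f : Ω → Bool) (hf : Measurable f) (T : Set Ω) (hT : MeasurableSet T) :
    (P T).toReal = (P {ω | f ω = false ∧ ω ∈ T}).toReal + (P {ω | f ω = true ∧ ω ∈ T}).toReal := by
  have hft : MeasurableSet {ω | f ω = true ∧ ω ∈ T} :=
    (hf (measurableSet_singleton true)).inter hT
  have hdisj : Disjoint {ω | f ω = false ∧ ω ∈ T} {ω | f ω = true ∧ ω ∈ T} := by
    refine Set.disjoint_left.mpr ?_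
    rintro ω ⟨h0, -⟩ ⟨h1, -⟩
    rw [h0] at h1; cases h1
  rw [← ENNReal.toReal_add (measure_ne_top P _) (measure_ne_top P _), ← measure_union hdisj hft]
  congr 2
  ext ω
  simp only [Set.mem_union, Set.mem_setOf_eq]
  rcases Bool.dichotomy (f ω) with h | h <;> simp [h]

theorem stmt4
    {Ω : Type*} [MeasurableSpace Ω] (P : Measure Ω) [IsProbabilityMeasure P]
    {S : Type*} [MeasurableSpace S] [Countable S] [MeasurableSingletonClass S]
    (τ : ℝ) (hτ : τ ∈ Ioo (0:ℝ) 1)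
    (Y : Ω → ℝ) (Dstar : Ω → Bool) (Z : Ω → S) (U₀ U₁ : Ω → ℝ)
    (hYm : Measurable Y) (hDstarm : Measurable Dstar) (hZm : Measurable Z)
    (hU₀m : Measurable U₀) (hU₁m : Measurable U₁)
    (hU₀01 : ∀ ω, U₀ ω ∈ Icc (0:ℝ) 1) (hU₁01 : ∀ ω, U₁ ω ∈ Icc (0:ℝ) 1)
    (U : Ω → ℝ) (hU : ∀ ω, U ω = bif Dstar ω then U₁ ω else U₀ ω)
    (q : Bool → ℝ → ℝ)
    (hq : ∀ d, StrictMonoOn (q d) (Icc (0:ℝ) 1))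
    (hout : ∀ ω, Y ω = q (Dstar ω) (U ω))
    (hexo : ∀ (d : Bool) (z : S),
      (P {ω | (bif d then U₁ ω else U₀ ω) ≤ τ ∧ Z ω = z}).toReal
        = τ * (P {ω | Z ω = z}).toReal)
    (hrank : ∀ (d : Bool) (z : S),
      (P {ω | U₀ ω ≤ τ ∧ Dstar ω = d ∧ Z ω = z}).toReal
        = (P {ω | U₁ ω ≤ τ ∧ Dstar ω = d ∧ Z ω = z}).toReal)
    (D : Ω → Bool) (hDm : Measurable D) (p₀ p₁ : ℝ)
    (hp₀ : p₀ ∈ Icc (0:ℝ) 1) (hp₁ : p₁ ∈ Icc (0:ℝ) 1)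
    (hA2 : ∀ (A : Set ℝ), MeasurableSet A → ∀ (z : S) (d : Bool),
      (P {ω | D ω = !d ∧ Dstar ω = d ∧ Y ω ∈ A ∧ Z ω = z}).toReal
        = (bif d then p₁ else p₀) * (P {ω | Dstar ω = d ∧ Y ω ∈ A ∧ Z ω = z}).toReal)
    (hp01 : p₀ + p₁ < 1)
    :
    ∀ z : S,
      (P {ω | ((D ω = false ∧ Y ω ≤ q false τ) ∨ (D ω = true ∧ Y ω ≤ q true τ))
            ∧ Z ω = z}).toReal - τ * (P {ω | Z ω = z}).toReal
      = p₁ * ((P {ω | Y ω ≤ q false τ ∧ Z ω = z}).toReal - τ * (P {ω | Z ω = z}).toReal)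
        + p₀ * ((P {ω | Y ω ≤ q true τ ∧ Z ω = z}).toReal - τ * (P {ω | Z ω = z}).toReal) := by
  intro z
  have hτIcc : τ ∈ Icc (0:ℝ) 1 := ⟨hτ.1.le, hτ.2.le⟩
  have hmZ : MeasurableSet {ω | Z ω = z} := hZm (measurableSet_singleton z)
  have hmY : ∀ y : ℝ, MeasurableSet {ω | Y ω ≤ y} := fun y => hYm measurableSet_Iic
  have hmDs : ∀ b : Bool, MeasurableSet {ω | Dstar ω = b} :=
    fun b => hDstarm (measurableSet_singleton b)
  have hmD : ∀ b : Bool, MeasurableSet {ω | D ω = b} :=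
    fun b => hDm (measurableSet_singleton b)
  -- key pointwise equivalences
  have key0 : ∀ ω, Dstar ω = false → (Y ω ≤ q false τ ↔ U₀ ω ≤ τ) := by
    intro ω hd
    have hYω : Y ω = q false (U₀ ω) := by rw [hout ω, hU ω, hd]; rfl
    rw [hYω]
    exact (hq false).le_iff_le (hU₀01 ω) hτIcc
  have key1 : ∀ ω, Dstar ω = true → (Y ω ≤ q true τ ↔ U₁ ω ≤ τ) := by
    intro ω hd
    have hYω : Y ω = q true (U₁ ω) := by rw [hout ω, hU ω, hd]; rfl
    rw [hYω]
    exact (hq true).le_iff_le (hU₁01 ω) hτIcc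
  -- the key identity K : Mf0 + Mt1 = τ * PZ
  have hsetA : {ω | Dstar ω = false ∧ Y ω ≤ q false τ ∧ Z ω = z}
      = {ω | Dstar ω = false ∧ U₀ ω ≤ τ ∧ Z ω = z} := by
    ext ω
    simp only [mem_setOf_eq]
    constructor
    · rintro ⟨hd, hy, hz⟩; exact ⟨hd, (key0 ω hd).mp hy, hz⟩
    · rintro ⟨hd, hu, hz⟩; exact ⟨hd, (key0 ω hd).mpr hu, hz⟩
  have hsetB : {ω | Dstar ω = true ∧ Y ω ≤ q true τ ∧ Z ω = z}
      = {ω | U₁ ω ≤ τ ∧ Dstar ω = true ∧ Z ω = z} := by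
    ext ω
    simp only [mem_setOf_eq]
    constructor
    · rintro ⟨hd, hy, hz⟩; exact ⟨(key1 ω hd).mp hy, hd, hz⟩
    · rintro ⟨hu, hd, hz⟩; exact ⟨hd, (key1 ω hd).mpr hu, hz⟩
  have hexo0 : (P {ω | U₀ ω ≤ τ ∧ Z ω = z}).toReal = τ * (P {ω | Z ω = z}).toReal := by
    have := hexo false z
    simpa using this
  have hsplitU : (P {ω | U₀ ω ≤ τ ∧ Z ω = z}).toReal
      = (P {ω | Dstar ω = false ∧ U₀ ω ≤ τ ∧ Z ω = z}).toReal
      + (P {ω | Dstar ω = true ∧ U₀ ω ≤ τ ∧ Z ω = z}).toReal := by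
    simpa using split3 P Dstar hDstarm {ω | U₀ ω ≤ τ ∧ Z ω = z}
      ((hU₀m measurableSet_Iic).inter hmZ)
  have hrank1 : (P {ω | U₀ ω ≤ τ ∧ Dstar ω = true ∧ Z ω = z}).toReal
      = (P {ω | U₁ ω ≤ τ ∧ Dstar ω = true ∧ Z ω = z}).toReal := hrank true z
  have hcomm : {ω | Dstar ω = true ∧ U₀ ω ≤ τ ∧ Z ω = z}
      = {ω | U₀ ω ≤ τ ∧ Dstar ω = true ∧ Z ω = z} := by
    ext ω; simp only [mem_setOf_eq]; tauto
  have K : (P {ω | Dstar ω = false ∧ Y ω ≤ q false τ ∧ Z ω = z}).toReal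
      + (P {ω | Dstar ω = true ∧ Y ω ≤ q true τ ∧ Z ω = z}).toReal
      = τ * (P {ω | Z ω = z}).toReal := by
    rw [hsetA, hsetB, ← hrank1, ← hcomm, ← hsplitU, hexo0]
  -- splitting equalities
  have E1 : (P {ω | ((D ω = false ∧ Y ω ≤ q false τ) ∨ (D ω = true ∧ Y ω ≤ q true τ))
        ∧ Z ω = z}).toReal
      = (P {ω | D ω = false ∧ Y ω ≤ q false τ ∧ Z ω = z}).toReal
      + (P {ω | D ω = true ∧ Y ω ≤ q true τ ∧ Z ω = z}).toReal := by
    have h := split3 P D hDm {ω | ((D ω = false ∧ Y ω ≤ q false τ)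
        ∨ (D ω = true ∧ Y ω ≤ q true τ)) ∧ Z ω = z}
      ((((hmD false).inter (hmY _)).union ((hmD true).inter (hmY _))).inter hmZ)
    rw [h]
    congr 3
    · ext ω
      rcases Bool.dichotomy (D ω) with h | h <;>
        simp only [mem_setOf_eq, h] <;> tauto
    · ext ω
      rcases Bool.dichotomy (D ω) with h | h <;>
        simp only [mem_setOf_eq, h] <;> tauto
  have E2 : (P {ω | D ω = false ∧ Y ω ≤ q false τ ∧ Z ω = z}).toReal
      = (P {ω | Dstar ω = false ∧ D ω = false ∧ Y ω ≤ q false τ ∧ Z ω = z}).toReal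
      + (P {ω | Dstar ω = true ∧ D ω = false ∧ Y ω ≤ q false τ ∧ Z ω = z}).toReal := by
    simpa using split3 P Dstar hDstarm {ω | D ω = false ∧ Y ω ≤ q false τ ∧ Z ω = z}
      ((hmD false).inter ((hmY _).inter hmZ))
  have E3 : (P {ω | D ω = true ∧ Y ω ≤ q true τ ∧ Z ω = z}).toReal
      = (P {ω | Dstar ω = false ∧ D ω = true ∧ Y ω ≤ q true τ ∧ Z ω = z}).toReal
      + (P {ω | Dstar ω = true ∧ D ω = true ∧ Y ω ≤ q true τ ∧ Z ω = z}).toReal := by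
    simpa using split3 P Dstar hDstarm {ω | D ω = true ∧ Y ω ≤ q true τ ∧ Z ω = z}
      ((hmD true).inter ((hmY _).inter hmZ))
  have E4 : (P {ω | Dstar ω = false ∧ Y ω ≤ q false τ ∧ Z ω = z}).toReal
      = (P {ω | D ω = false ∧ Dstar ω = false ∧ Y ω ≤ q false τ ∧ Z ω = z}).toReal
      + (P {ω | D ω = true ∧ Dstar ω = false ∧ Y ω ≤ q false τ ∧ Z ω = z}).toReal := by
    simpa using split3 P D hDm {ω | Dstar ω = false ∧ Y ω ≤ q false τ ∧ Z ω = z}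
      ((hmDs false).inter ((hmY _).inter hmZ))
  have E5 : (P {ω | Dstar ω = true ∧ Y ω ≤ q true τ ∧ Z ω = z}).toReal
      = (P {ω | D ω = false ∧ Dstar ω = true ∧ Y ω ≤ q true τ ∧ Z ω = z}).toReal
      + (P {ω | D ω = true ∧ Dstar ω = true ∧ Y ω ≤ q true τ ∧ Z ω = z}).toReal := by
    simpa using split3 P D hDm {ω | Dstar ω = true ∧ Y ω ≤ q true τ ∧ Z ω = z}
      ((hmDs true).inter ((hmY _).inter hmZ))
  have E6 : (P {ω | Y ω ≤ q false τ ∧ Z ω = z}).toReal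
      = (P {ω | Dstar ω = false ∧ Y ω ≤ q false τ ∧ Z ω = z}).toReal
      + (P {ω | Dstar ω = true ∧ Y ω ≤ q false τ ∧ Z ω = z}).toReal := by
    simpa using split3 P Dstar hDstarm {ω | Y ω ≤ q false τ ∧ Z ω = z}
      ((hmY _).inter hmZ)
  have E7 : (P {ω | Y ω ≤ q true τ ∧ Z ω = z}).toReal
      = (P {ω | Dstar ω = false ∧ Y ω ≤ q true τ ∧ Z ω = z}).toReal
      + (P {ω | Dstar ω = true ∧ Y ω ≤ q true τ ∧ Z ω = z}).toReal := by
    simpa using split3 P Dstar hDstarm {ω | Y ω ≤ q true τ ∧ Z ω = z}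
      ((hmY _).inter hmZ)
  -- misclassification equalities from Assumption 2
  have A2a : (P {ω | D ω = false ∧ Dstar ω = true ∧ Y ω ≤ q false τ ∧ Z ω = z}).toReal
      = p₁ * (P {ω | Dstar ω = true ∧ Y ω ≤ q false τ ∧ Z ω = z}).toReal := by
    have h := hA2 (Iic (q false τ)) measurableSet_Iic z true
    simpa using h
  have A2b : (P {ω | D ω = true ∧ Dstar ω = false ∧ Y ω ≤ q true τ ∧ Z ω = z}).toReal
      = p₀ * (P {ω | Dstar ω = false ∧ Y ω ≤ q true τ ∧ Z ω = z}).toReal := by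
    have h := hA2 (Iic (q true τ)) measurableSet_Iic z false
    simpa using h
  have A2c : (P {ω | D ω = true ∧ Dstar ω = false ∧ Y ω ≤ q false τ ∧ Z ω = z}).toReal
      = p₀ * (P {ω | Dstar ω = false ∧ Y ω ≤ q false τ ∧ Z ω = z}).toReal := by
    have h := hA2 (Iic (q false τ)) measurableSet_Iic z false
    simpa using h
  have A2d : (P {ω | D ω = false ∧ Dstar ω = true ∧ Y ω ≤ q true τ ∧ Z ω = z}).toReal
      = p₁ * (P {ω | Dstar ω = true ∧ Y ω ≤ q true τ ∧ Z ω = z}).toReal := by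
    have h := hA2 (Iic (q true τ)) measurableSet_Iic z true
    simpa using h
  -- E2/E3 summands order vs A2 order: fix by congruence
  have c1 : {ω | Dstar ω = true ∧ D ω = false ∧ Y ω ≤ q false τ ∧ Z ω = z}
      = {ω | D ω = false ∧ Dstar ω = true ∧ Y ω ≤ q false τ ∧ Z ω = z} := by
    ext ω; simp only [mem_setOf_eq]; tauto
  have c2 : {ω | Dstar ω = false ∧ D ω = false ∧ Y ω ≤ q false τ ∧ Z ω = z}
      = {ω | D ω = false ∧ Dstar ω = false ∧ Y ω ≤ q false τ ∧ Z ω = z} := by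
    ext ω; simp only [mem_setOf_eq]; tauto
  have c3 : {ω | Dstar ω = false ∧ D ω = true ∧ Y ω ≤ q true τ ∧ Z ω = z}
      = {ω | D ω = true ∧ Dstar ω = false ∧ Y ω ≤ q true τ ∧ Z ω = z} := by
    ext ω; simp only [mem_setOf_eq]; tauto
  have c4 : {ω | Dstar ω = true ∧ D ω = true ∧ Y ω ≤ q true τ ∧ Z ω = z}
      = {ω | D ω = true ∧ Dstar ω = true ∧ Y ω ≤ q true τ ∧ Z ω = z} := by
    ext ω; simp only [mem_setOf_eq]; tauto
  rw [c1, c2] at E2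
  rw [c3, c4] at E3
  linear_combination E1 + E2 + E3 - E4 - E5 + A2a + A2b - A2c - A2d
    + (1 - p₀ - p₁) * K - p₁ * E6 - p₀ * E7
end

section
/- (Theorem 4: failure of point identification of the structural quantile function under misclassification, even with an exogenous treatment.) Assume Assumption 2 with p₀ > 0 and p₀ + p₁ < 1; assume U₀ = U₁ = U, that U is uniformly distributed on [0,1] and independent of the pair (D*, Z); assume q(d,·) is continuous and strictly increasing on [0,1] for d = 0,1 and Y = q(D*, U); assume q(0,τ) ≠ q(1,τ); and assume the function G(u) := ℙ(q(0,U) ≤ q(1,u)), u ∈ [0,1], is Lipschitz continuous with G(0) = 0 and G(1) = 1. Then there exists ε̄ > 0 such that for every ε ∈ (0, ε̄] there exist a probability space (Ω', 𝓕', ℙ') carrying measurable maps Y' : Ω' → ℝ, D' : Ω' → {0,1}, D*' : Ω' → {0,1}, Z' : Ω' → S, U' : Ω' → [0,1], and a function q̃ : {0,1} × [0,1] → ℝ with q̃(d,·) strictly increasing on [0,1] for d = 0,1, such that: q̃(1,·) = q(1,·) on [0,1]; q̃(0,τ) ≠ q(0,τ); Y' = q̃(D*', U') holds ℙ'-almost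 surely; ℙ'({U' ≤ u} ∩ {Z' = z}) = u·ℙ'(Z' = z) for every u ∈ [0,1] and z ∈ S (so exogeneity holds at τ with U₀' = U₁' = U', and rank similarity holds trivially); Assumption 2 holds for (Y', D', D*', Z') with misclassification probabilities (p₀ − ε, p₁); and the joint distribution of (Y', D', Z') under ℙ' equals the joint distribution of (Y, D, Z) under ℙ. -/
/-!
Relabel part of the untreated population as treated. An untreated unit with measured treatment
`b` is moved with probability `w b`, the weights being tuned so that the misclassification
probabilities become `(p₀ - ε, p₁)` and a fraction `κ` of the untreated is moved. The observed
variables `(Y, D, Z)` are untouched, so their joint law is preserved. A moved unit gets the rank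
`q(1,·)⁻¹(Y)`, whose distribution function in every untreated cell is `G`; a unit that stays
untreated gets the rank `φ⁻¹(U)` with `φ = (id - κ G) / (1 - κ)`, so that the mixture
`(1 - κ) φ + κ G = id` keeps the rank uniform given `Z`. With `q̃(0,·) = q(0, φ ·)` the outcome
equation survives, and `q̃(0,τ) ≠ q(0,τ)` because `q(0,τ) ≠ q(1,τ)` forces `G τ ≠ τ`. Lipschitz
continuity of `G` makes `φ` increasing once `κ` is small.
-/

open MeasureTheory Set

/-- A right inverse of `f` on `[f a, f b]`, extended by clamping so that it is monotone (hence
measurable) on all of `ℝ`. -/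
def IsClampedInverse (f g : ℝ → ℝ) (a b : ℝ) : Prop :=
  (∀ y, g y ∈ Icc a b) ∧ ∀ y, f (g y) = max (f a) (min (f b) y)

namespace IsClampedInverse

variable {f g : ℝ → ℝ} {a b : ℝ}

theorem _root_.ContinuousOn.exists_isClampedInverse (hab : a ≤ b)
    (hc : ContinuousOn f (Icc a b)) (hf : MonotoneOn f (Icc a b)) :
    ∃ g, IsClampedInverse f g a b := by
  have hfab : f a ≤ f b := hf (left_mem_Icc.2 hab) (right_mem_Icc.2 hab) hab
  have h : ∀ y, max (f a) (min (f b) y) ∈ f '' Icc a b := fun y =>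
    intermediate_value_Icc hab hc ⟨le_max_left _ _, max_le hfab (min_le_left _ _)⟩
  choose g hg hfg using h
  exact ⟨g, hg, hfg⟩

theorem apply_eq_of_mem (hg : IsClampedInverse f g a b) {y : ℝ} (hy : y ∈ Icc (f a) (f b)) :
    f (g y) = y := by
  rw [hg.2, min_eq_right hy.2, max_eq_right hy.1]

theorem le_iff (hf : StrictMonoOn f (Icc a b)) (hg : IsClampedInverse f g a b) {u : ℝ}
    (hu : u ∈ Icc a b) (y : ℝ) : g y ≤ u ↔ max (f a) (min (f b) y) ≤ f u := by
  rw [← hg.2]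
  exact (hf.le_iff_le (hg.1 y) hu).symm

theorem le_iff_of_mem (hf : StrictMonoOn f (Icc a b)) (hg : IsClampedInverse f g a b) {u y : ℝ}
    (hu : u ∈ Icc a b) (hy : y ∈ Icc (f a) (f b)) : g y ≤ u ↔ y ≤ f u := by
  rw [← hf.le_iff_le (hg.1 y) hu, hg.apply_eq_of_mem hy]

theorem monotone (hf : StrictMonoOn f (Icc a b)) (hg : IsClampedInverse f g a b) : Monotone g :=
  fun y y' hyy' => (hg.le_iff hf (hg.1 y') y).2 <| by
    rw [hg.2]; exact max_le_max le_rfl (min_le_min le_rfl hyy')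

theorem apply_ne_of_ne (hf : StrictMonoOn f (Icc a b)) (hg : IsClampedInverse f g a b) {τ c : ℝ}
    (hτ : τ ∈ Ioo a b) (hc : c ≠ f τ) : g c ≠ τ := by
  intro hgc
  have hfa : f a < f τ := hf (left_mem_Icc.2 (hτ.1.trans hτ.2).le) (Ioo_subset_Icc_self hτ) hτ.1
  have hfb : f τ < f b := hf (Ioo_subset_Icc_self hτ) (right_mem_Icc.2 (hτ.1.trans hτ.2).le) hτ.2
  have h := hg.2 c
  rw [hgc] at h
  rcases le_total c (f b) with hcb | hcb
  · rw [min_eq_right hcb] at h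
    rcases le_total (f a) c with hac | hac
    · rw [max_eq_right hac] at h; exact hc h.symm
    · rw [max_eq_left hac] at h; exact hfa.ne' h
  · rw [min_eq_left hcb, max_eq_right (hfa.trans hfb).le] at h; exact hfb.ne h

theorem le_of_apply_eq_left (hab : a < b) (hf : StrictMonoOn f (Icc a b))
    (hg : IsClampedInverse f g a b) {c : ℝ} (hc : g c = a) : c ≤ f a := by
  by_contra! hac
  have hfab : f a < f b := hf (left_mem_Icc.2 hab.le) (right_mem_Icc.2 hab.le) hab
  have h := hg.2 c
  rw [hc, max_eq_right (lt_min hfab hac).le] at h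
  exact (lt_min hfab hac).ne h

theorem le_of_apply_eq_right (hab : a < b) (hf : StrictMonoOn f (Icc a b))
    (hg : IsClampedInverse f g a b) {c : ℝ} (hc : g c = b) : f b ≤ c := by
  by_contra! hcb
  have hfab : f a < f b := hf (left_mem_Icc.2 hab.le) (right_mem_Icc.2 hab.le) hab
  have h := hg.2 c
  rw [hc, min_eq_right hcb.le] at h
  exact (max_lt hfab hcb).ne' h

end IsClampedInverse

noncomputable def rankDistortion (κ : ℝ) (G : ℝ → ℝ) (u : ℝ) : ℝ := (u - κ * G u) / (1 - κ)

section RankDistortion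

variable {κ L : ℝ} {G : ℝ → ℝ}

theorem rankDistortion_zero (hG0 : G 0 = 0) : rankDistortion κ G 0 = 0 := by
  simp [rankDistortion, hG0]

theorem rankDistortion_one (hκ : κ ≠ 1) (hG1 : G 1 = 1) : rankDistortion κ G 1 = 1 := by
  rw [rankDistortion, hG1, mul_one, div_self (sub_ne_zero.2 hκ.symm)]

theorem one_sub_mul_rankDistortion_add (hκ : κ ≠ 1) (u : ℝ) :
    (1 - κ) * rankDistortion κ G u + κ * G u = u := by
  rw [rankDistortion, mul_div_cancel₀ _ (sub_ne_zero.2 hκ.symm)]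
  ring

theorem rankDistortion_ne_self (hκ0 : κ ≠ 0) (hκ1 : κ ≠ 1) {τ : ℝ} (hτ : G τ ≠ τ) :
    rankDistortion κ G τ ≠ τ := by
  intro h
  have := one_sub_mul_rankDistortion_add (G := G) hκ1 τ
  rw [h] at this
  exact hτ (mul_left_cancel₀ hκ0 (by linarith))

theorem continuousOn_rankDistortion {s : Set ℝ} (hG : ContinuousOn G s) :
    ContinuousOn (rankDistortion κ G) s :=
  (continuousOn_id.sub (continuousOn_const.mul hG)).div_const _

theorem strictMonoOn_rankDistortion {s : Set ℝ} (hκ0 : 0 ≤ κ) (hκ1 : κ < 1) (hκL : κ * L < 1)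
    (hG : ∀ u ∈ s, ∀ v ∈ s, |G u - G v| ≤ L * |u - v|) :
    StrictMonoOn (rankDistortion κ G) s := by
  intro u hu v hv huv
  have hGuv : G v - G u ≤ L * (v - u) := by
    have := (abs_le.1 (hG v hv u hu)).2
    rwa [abs_of_pos (sub_pos.2 huv)] at this
  rw [rankDistortion, rankDistortion, div_lt_div_iff_of_pos_right (sub_pos.2 hκ1)]
  nlinarith [mul_le_mul_of_nonneg_left hGuv hκ0]

end RankDistortion

def distortedQuantile (q : Bool → ℝ → ℝ) (φ : ℝ → ℝ) (d : Bool) : ℝ → ℝ :=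
  bif d then q true else q false ∘ φ

section DistortedQuantile

variable {q : Bool → ℝ → ℝ} {φ : ℝ → ℝ}

theorem strictMonoOn_distortedQuantile (hq : ∀ d, StrictMonoOn (q d) (Icc 0 1))
    (hφ : StrictMonoOn φ (Icc 0 1)) (hφmaps : MapsTo φ (Icc 0 1) (Icc 0 1)) (d : Bool) :
    StrictMonoOn (distortedQuantile q φ d) (Icc 0 1) := by
  cases d
  exacts [(hq false).comp hφ hφmaps, hq true]

theorem continuousOn_distortedQuantile (hq : ∀ d, ContinuousOn (q d) (Icc 0 1))
    (hφ : ContinuousOn φ (Icc 0 1)) (hφmaps : MapsTo φ (Icc 0 1) (Icc 0 1)) (d : Bool) :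
    ContinuousOn (distortedQuantile q φ d) (Icc 0 1) := by
  cases d
  exacts [(hq false).comp hφ hφmaps, hq true]

end DistortedQuantile

/-- The moved mass `κ` splits as `(1 - p₁) : p₁` between `D = true` and `D = false`, which keeps
the misclassification probability `p₁` of the treated. -/
noncomputable def reassignmentWeight (p₀ p₁ κ : ℝ) (b : Bool) : ℝ :=
  bif b then κ * (1 - p₁) / p₀ else κ * p₁ / (1 - p₀)

section ReassignmentWeight

variable {p₀ p₁ κ : ℝ}

theorem reassignmentWeight_mem_Icc (hp₀ : 0 < p₀) (hp₁ : 0 ≤ p₁) (hp : p₀ + p₁ < 1)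
    (hκ0 : 0 ≤ κ) (hκ : κ ≤ p₀) (b : Bool) : reassignmentWeight p₀ p₁ κ b ∈ Icc 0 1 := by
  have h1p₀ : 0 < 1 - p₀ := by linarith
  cases b
  · refine ⟨div_nonneg (mul_nonneg hκ0 hp₁) h1p₀.le, ?_⟩
    rw [reassignmentWeight, cond_false, div_le_one h1p₀]
    nlinarith
  · refine ⟨div_nonneg (mul_nonneg hκ0 (by linarith)) hp₀.le, ?_⟩
    rw [reassignmentWeight, cond_true, div_le_one hp₀]
    nlinarith

theorem reassignmentWeight_mix (hp₀ : p₀ ≠ 0) (hp₀' : p₀ ≠ 1) :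
    reassignmentWeight p₀ p₁ κ true * p₀ + reassignmentWeight p₀ p₁ κ false * (1 - p₀) = κ := by
  have : 1 - p₀ ≠ 0 := sub_ne_zero.2 (Ne.symm hp₀')
  simp only [reassignmentWeight, cond_true, cond_false]
  field_simp
  ring

theorem reassignmentWeight_false_mul (hp₀' : p₀ ≠ 1) :
    reassignmentWeight p₀ p₁ κ false * (1 - p₀) = p₁ * κ := by
  rw [reassignmentWeight, cond_false, div_mul_cancel₀ _ (sub_ne_zero.2 (Ne.symm hp₀')), mul_comm]

theorem one_sub_reassignmentWeight_true_mul (hp₀ : p₀ ≠ 0) {ε : ℝ}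
    (hκ : κ * (1 - p₀ - p₁ + ε) = ε) :
    (1 - reassignmentWeight p₀ p₁ κ true) * p₀ = (p₀ - ε) * (1 - κ) := by
  rw [reassignmentWeight, cond_true, sub_mul, div_mul_cancel₀ _ hp₀]
  linear_combination -hκ

theorem exists_reassignment_rate {L ε : ℝ} (hp₀ : 0 < p₀) (hp₁ : 0 ≤ p₁)
    (hp : p₀ + p₁ < 1) (hL : 0 ≤ L) (hε : 0 < ε) (hεbar : ε ≤ (1 - p₀ - p₁) * p₀ / (1 + L)) :
    ∃ κ, 0 < κ ∧ κ < 1 ∧ κ ≤ p₀ ∧ κ * L < 1 ∧ κ * (1 - p₀ - p₁ + ε) = ε := by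
  have hr : 0 < 1 - p₀ - p₁ + ε := by linarith
  have hc : ε / (1 - p₀ - p₁ + ε) ≤ p₀ / (1 + L) := by
    rw [div_le_div_iff₀ hr (by linarith)]
    rw [le_div_iff₀ (by linarith)] at hεbar
    nlinarith
  have hcp : p₀ / (1 + L) ≤ p₀ := div_le_self hp₀.le (by linarith)
  have hcL : p₀ / (1 + L) * L < 1 := by
    rw [div_mul_eq_mul_div, div_lt_one (by linarith)]
    nlinarith
  refine ⟨ε / (1 - p₀ - p₁ + ε), div_pos hε hr, (hc.trans hcp).trans_lt (by linarith), hc.trans hcp,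
    ?_, div_mul_cancel₀ _ hr.ne'⟩
  exact (mul_le_mul_of_nonneg_right hc hL).trans_lt hcL

end ReassignmentWeight

theorem continuousOn_of_abs_sub_le {G : ℝ → ℝ} {L : ℝ} {s : Set ℝ}
    (hG : ∀ u ∈ s, ∀ v ∈ s, |G u - G v| ≤ L * |u - v|) : ContinuousOn G s :=
  (LipschitzOnWith.of_dist_le' (K := L) (by simpa only [Real.dist_eq] using hG)).continuousOn

section Uniform

variable {Ω : Type*} [MeasurableSpace Ω] (P : Measure Ω)

theorem IsClampedInverse.measureReal_comp_le_inter {f g : ℝ → ℝ} (hf : StrictMonoOn f (Icc 0 1))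
    (hg : IsClampedInverse f g 0 1) {U : Ω → ℝ} (hU : ∀ ω, U ω ∈ Icc 0 1) {W : Set Ω} {m : ℝ}
    (hW : ∀ x ∈ Icc (0:ℝ) 1, P.real ({ω | U ω ≤ x} ∩ W) = x * m) (c : ℝ) :
    P.real ({ω | f (U ω) ≤ c} ∩ W) = g c * m := by
  have hf0 : ∀ x ∈ Icc (0:ℝ) 1, f 0 ≤ f x := fun x hx =>
    hf.monotoneOn (left_mem_Icc.2 zero_le_one) hx hx.1
  have hf1 : ∀ x ∈ Icc (0:ℝ) 1, f x ≤ f 1 := fun x hx =>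
    hf.monotoneOn hx (right_mem_Icc.2 zero_le_one) hx.2
  rcases lt_or_ge c (f 0) with hc | hc
  · have hgc : g c = 0 := by
      refine le_antisymm ((hg.le_iff hf (left_mem_Icc.2 zero_le_one) c).2 ?_) (hg.1 c).1
      exact max_le le_rfl ((min_le_right _ _).trans hc.le)
    have hempty : {ω | f (U ω) ≤ c} = ∅ :=
      eq_empty_of_forall_notMem fun ω hω => (hc.trans_le (hf0 _ (hU ω))).not_ge hω
    rw [hempty, empty_inter, measureReal_empty, hgc, zero_mul]
  · rw [← hW _ (hg.1 c)]
    congr 2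
    ext ω
    have hmin : f 0 ≤ min (f 1) c := le_min (hf0 1 (right_mem_Icc.2 zero_le_one)) hc
    simp only [mem_ofPred_eq]
    rw [← hf.le_iff_le (hU ω) (hg.1 c), hg.2, max_eq_right hmin, le_min_iff]
    exact ⟨fun h => ⟨hf1 _ (hU ω), h⟩, fun h => h.2⟩

theorem measureReal_eq_mul_of_forall_fiber [IsFiniteMeasure P] {ι : Type*} [MeasurableSpace ι]
    [Countable ι] [MeasurableSingletonClass ι] {X : Ω → ι} (hX : Measurable X) {A : Set Ω} {c : ℝ}
    (hc : 0 ≤ c) (h : ∀ i, P.real (A ∩ X ⁻¹' {i}) = c * P.real (X ⁻¹' {i})) :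
    P.real A = c * P.real univ := by
  have hmap : (P.restrict A).map X = ENNReal.ofReal c • P.map X := by
    refine Measure.ext_iff_singleton.2 fun i => ?_
    have hi := hX (measurableSet_singleton i)
    rw [Measure.smul_apply, Measure.map_apply hX (measurableSet_singleton i),
      Measure.map_apply hX (measurableSet_singleton i), Measure.restrict_apply hi, smul_eq_mul,
      ← ENNReal.ofReal_toReal (measure_ne_top P _),
      ← ENNReal.ofReal_toReal (measure_ne_top P (X ⁻¹' _)), ← ENNReal.ofReal_mul hc, inter_comm]
    exact congrArg ENNReal.ofReal (h i)
  have := congrArg (fun μ => (μ univ).toReal) hmap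
  simpa [Measure.map_apply hX MeasurableSet.univ, measureReal_def, ENNReal.toReal_ofReal hc]
    using this

end Uniform

def untreatedCell {Ω : Type*} (D Dstar : Ω → Bool) (b : Bool) : Set Ω :=
  {ω | D ω = b ∧ Dstar ω = false}

section Misclassification

variable {Ω S : Type*} [MeasurableSpace Ω] {P : Measure Ω} {Y : Ω → ℝ} {D Dstar : Ω → Bool}
  {Z : Ω → S} {p₀ p₁ : ℝ}

def NondifferentialMisclassification (P : Measure Ω) (Y : Ω → ℝ) (D Dstar : Ω → Bool)
    (Z : Ω → S) (p₀ p₁ : ℝ) : Prop :=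
  ∀ A : Set ℝ, MeasurableSet A → ∀ (z : S) (d : Bool),
    P.real {ω | D ω = !d ∧ Dstar ω = d ∧ Y ω ∈ A ∧ Z ω = z} =
      (bif d then p₁ else p₀) * P.real {ω | Dstar ω = d ∧ Y ω ∈ A ∧ Z ω = z}

theorem NondifferentialMisclassification.measureReal_inter_untreatedCell [IsFiniteMeasure P]
    (h : NondifferentialMisclassification P Y D Dstar Z p₀ p₁) (hD : Measurable D) {A : Set ℝ}
    (hA : MeasurableSet A) {z : S} {B : Set Ω}
    (hB : ∀ ω, Dstar ω = false → (ω ∈ B ↔ Y ω ∈ A ∧ Z ω = z)) (b : Bool) :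
    P.real (B ∩ untreatedCell D Dstar b) =
      (bif b then p₀ else 1 - p₀) * P.real (B ∩ {ω | Dstar ω = false}) := by
  have hC₀ : B ∩ {ω | Dstar ω = false} = {ω | Dstar ω = false ∧ Y ω ∈ A ∧ Z ω = z} := by
    ext ω
    simp only [mem_inter_iff, mem_ofPred_eq]
    exact ⟨fun ⟨hω, h0⟩ => ⟨h0, (hB ω h0).1 hω⟩, fun ⟨h0, hω⟩ => ⟨(hB ω h0).2 hω, h0⟩⟩
  have hcell : ∀ b, B ∩ untreatedCell D Dstar b = B ∩ {ω | Dstar ω = false} ∩ {ω | D ω = b} := by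
    intro b; ext ω; simp only [untreatedCell, mem_inter_iff, mem_ofPred_eq]; tauto
  have htrue :
      P.real (B ∩ untreatedCell D Dstar true) = p₀ * P.real (B ∩ {ω | Dstar ω = false}) := by
    have := h A hA z false
    rw [Bool.not_false, cond_false] at this
    rw [hcell, hC₀, ← this]
    congr 1; ext ω; simp only [mem_inter_iff, mem_ofPred_eq]; tauto
  have hsum := measureReal_inter_add_sdiff (μ := P) (s := B ∩ {ω | Dstar ω = false})
    (t := {ω | D ω = true}) (hD (measurableSet_singleton true))
  have hfalse :
      (B ∩ {ω | Dstar ω = false}) \ {ω | D ω = true} = B ∩ untreatedCell D Dstar false := by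
    rw [hcell]; ext ω; simp
  cases b
  · rw [← hfalse]; rw [← hcell, htrue] at hsum; simp only [cond_false]; linarith
  · exact htrue

end Misclassification

section RankUniform

variable {Ω S : Type*} [MeasurableSpace Ω] {P : Measure Ω} {Y U : Ω → ℝ} {D Dstar : Ω → Bool}
  {Z : Ω → S} {p₀ p₁ : ℝ}

def RankUniform (P : Measure Ω) (U : Ω → ℝ) (Dstar : Ω → Bool) (Z : Ω → S) : Prop :=
  ∀ u ∈ Icc (0:ℝ) 1, ∀ (d : Bool) (z : S),
    P.real {ω | U ω ≤ u ∧ Dstar ω = d ∧ Z ω = z} = u * P.real {ω | Dstar ω = d ∧ Z ω = z}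

theorem RankUniform.measureReal_comp_le [IsProbabilityMeasure P] [MeasurableSpace S] [Countable S]
    [MeasurableSingletonClass S] (hU : RankUniform P U Dstar Z) (hDstar : Measurable Dstar)
    (hZ : Measurable Z) (hU01 : ∀ ω, U ω ∈ Icc 0 1) {f g : ℝ → ℝ}
    (hf : StrictMonoOn f (Icc 0 1)) (hg : IsClampedInverse f g 0 1) (c : ℝ) :
    P.real {ω | f (U ω) ≤ c} = g c := by
  have hle : ∀ x ∈ Icc (0:ℝ) 1, P.real ({ω | U ω ≤ x} ∩ univ) = x * 1 := by
    intro x hx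
    rw [inter_univ, measureReal_eq_mul_of_forall_fiber P (hDstar.prodMk hZ) hx.1
      (fun i => ?_), probReal_univ]
    convert hU x hx i.1 i.2 using 3 <;> ext ω <;> simp [Prod.ext_iff]
  simpa using hg.measureReal_comp_le_inter P hf hU01 hle c

theorem RankUniform.measureReal_le_and_inter (hU : RankUniform P U Dstar Z) {u : ℝ}
    (hu : u ∈ Icc (0:ℝ) 1) (z : S) (d : Bool) :
    P.real ({ω | U ω ≤ u ∧ Z ω = z} ∩ {ω | Dstar ω = d}) =
      u * P.real {ω | Dstar ω = d ∧ Z ω = z} := by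
  rw [← hU u hu d z]
  congr 1
  ext ω
  simp only [mem_inter_iff, mem_ofPred_eq]
  tauto

theorem RankUniform.measureReal_inverse_rank_le_inter [IsFiniteMeasure P]
    (hU : RankUniform P U Dstar Z)
    (hmis : NondifferentialMisclassification P Y D Dstar Z p₀ p₁) (hD : Measurable D)
    (hU01 : ∀ ω, U ω ∈ Icc 0 1) {q₀ : ℝ → ℝ} (hq₀ : StrictMonoOn q₀ (Icc 0 1))
    (hY₀ : ∀ ω, Dstar ω = false → Y ω = q₀ (U ω)) {φ ψ : ℝ → ℝ} (hφ : StrictMonoOn φ (Icc 0 1))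
    (hφ0 : φ 0 = 0) (hφ1 : φ 1 = 1) (hψ : IsClampedInverse φ ψ 0 1) {u : ℝ}
    (hu : u ∈ Icc (0:ℝ) 1) (z : S) (b : Bool) :
    P.real ({ω | ψ (U ω) ≤ u ∧ Z ω = z} ∩ untreatedCell D Dstar b) =
      (bif b then p₀ else 1 - p₀) * (φ u * P.real {ω | Dstar ω = false ∧ Z ω = z}) := by
  have hφu : φ u ∈ Icc (0:ℝ) 1 := by simpa [hφ0, hφ1] using hφ.monotoneOn.mapsTo_Icc hu
  have hle : ∀ ω, ψ (U ω) ≤ u ↔ U ω ≤ φ u := fun ω =>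
    hψ.le_iff_of_mem hφ hu (by rw [hφ0, hφ1]; exact hU01 ω)
  rw [hmis.measureReal_inter_untreatedCell hD (A := Iic (q₀ (φ u))) measurableSet_Iic
    (fun ω h0 => by rw [mem_ofPred_eq, hle, hY₀ ω h0, mem_Iic, hq₀.le_iff_le (hU01 ω) hφu]) b,
    ← hU (φ u) hφu false z]
  congr 2
  ext ω
  simp only [mem_inter_iff, mem_ofPred_eq, hle]
  tauto

theorem RankUniform.measureReal_inverse_outcome_le_inter [IsFiniteMeasure P]
    (hU : RankUniform P U Dstar Z)
    (hmis : NondifferentialMisclassification P Y D Dstar Z p₀ p₁) (hD : Measurable D)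
    (hU01 : ∀ ω, U ω ∈ Icc 0 1) {q₀ g₀ : ℝ → ℝ} (hq₀ : StrictMonoOn q₀ (Icc 0 1))
    (hg₀ : IsClampedInverse q₀ g₀ 0 1) (hY₀ : ∀ ω, Dstar ω = false → Y ω = q₀ (U ω))
    {q₁ h : ℝ → ℝ} (hq₁ : StrictMonoOn q₁ (Icc 0 1)) (hh : IsClampedInverse q₁ h 0 1)
    (hnest : Icc (q₀ 0) (q₀ 1) ⊆ Icc (q₁ 0) (q₁ 1)) {u : ℝ} (hu : u ∈ Icc (0:ℝ) 1) (z : S)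
    (b : Bool) :
    P.real ({ω | h (Y ω) ≤ u ∧ Z ω = z} ∩ untreatedCell D Dstar b) =
      (bif b then p₀ else 1 - p₀) * (g₀ (q₁ u) * P.real {ω | Dstar ω = false ∧ Z ω = z}) := by
  have hiff : ∀ ω, Dstar ω = false → (h (Y ω) ≤ u ↔ q₀ (U ω) ≤ q₁ u) := fun ω h0 => by
    have hY : Y ω ∈ Icc (q₁ 0) (q₁ 1) := hY₀ ω h0 ▸ hnest (hq₀.monotoneOn.mapsTo_Icc (hU01 ω))
    rw [hh.le_iff_of_mem hq₁ hu hY, hY₀ ω h0]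
  rw [hmis.measureReal_inter_untreatedCell hD (A := h ⁻¹' Iic u)
    (B := {ω | h (Y ω) ≤ u ∧ Z ω = z}) ((hh.monotone hq₁).measurable measurableSet_Iic)
    (fun _ _ => Iff.rfl) b,
    ← hg₀.measureReal_comp_le_inter P hq₀ hU01 (fun x hx => hU x hx false z)]
  congr 2
  ext ω
  simp only [mem_inter_iff, mem_ofPred_eq]
  exact ⟨fun ⟨⟨hω, hz⟩, h0⟩ => ⟨(hiff ω h0).1 hω, h0, hz⟩,
    fun ⟨hω, h0, hz⟩ => ⟨⟨(hiff ω h0).2 hω, hz⟩, h0⟩⟩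

end RankUniform

/-- The new probability space has to live in `Type`, so the instrument is recoded. -/
theorem exists_measurableEquiv_of_countable (S : Type*) [MeasurableSpace S] [Countable S]
    [MeasurableSingletonClass S] : ∃ (R : Type) (_ : MeasurableSpace R), Nonempty (S ≃ᵐ R) := by
  obtain ⟨enc, henc⟩ := Countable.exists_injective_nat S
  exact ⟨range enc, inferInstance, ⟨⟨Equiv.ofInjective enc henc, .of_discrete, .of_discrete⟩⟩⟩

section Reassignment

variable {Ω S R : Type*} [MeasurableSpace Ω] [MeasurableSpace S] [MeasurableSpace R]
  (P : Measure Ω) (Y : Ω → ℝ) (D Dstar : Ω → Bool) (Z : Ω → S) (e : S ≃ᵐ R)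

/-- (outcome, measured treatment, true treatment, coded instrument, rank) -/
abbrev Sample (R : Type*) := ℝ × Bool × Bool × R × Icc (0:ℝ) 1

def toSample (β : Ω → Bool) (d : Bool) (V : Ω → Icc (0:ℝ) 1) (ω : Ω) : Sample R :=
  (Y ω, β ω, d, e (Z ω), V ω)

/-- Treated units keep the rank `V₁`. An untreated unit with measured treatment `b` stays
untreated with weight `1 - w b` and rank `V₀`, and is relabelled as treated with weight `w b` and
rank `Vm`. -/
noncomputable def reassignedLaw (w : Bool → ℝ) (V₁ V₀ Vm : Ω → Icc (0:ℝ) 1) :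
    Measure (Sample R) :=
  (P.restrict {ω | Dstar ω = true}).map (toSample Y Z e D true V₁) +
    ∑ b, ((1 - w b).toNNReal •
        (P.restrict (untreatedCell D Dstar b)).map (toSample Y Z e (fun _ => b) false V₀) +
      (w b).toNNReal •
        (P.restrict (untreatedCell D Dstar b)).map (toSample Y Z e (fun _ => b) true Vm))

variable {P Y D Dstar Z}

theorem measurable_toSample (hY : Measurable Y) (hZ : Measurable Z) {β : Ω → Bool}
    (hβ : Measurable β) (d : Bool) {V : Ω → Icc (0:ℝ) 1} (hV : Measurable V) :
    Measurable (toSample Y Z e β d V) :=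
  hY.prodMk (hβ.prodMk (measurable_const.prodMk ((e.measurable.comp hZ).prodMk hV)))

theorem measurableSet_untreatedCell (hD : Measurable D) (hDstar : Measurable Dstar) (b : Bool) :
    MeasurableSet (untreatedCell D Dstar b) :=
  (hD (measurableSet_singleton b)).inter (hDstar (measurableSet_singleton false))

theorem restrict_add_sum_restrict_untreatedCell (hD : Measurable D) (hDstar : Measurable Dstar) :
    P.restrict {ω | Dstar ω = true} + ∑ b, P.restrict (untreatedCell D Dstar b) = P := by
  have hcells :
      untreatedCell D Dstar true ∪ untreatedCell D Dstar false = {ω | Dstar ω = true}ᶜ := by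
    ext ω; cases h : D ω <;> simp [untreatedCell, h]
  rw [Fintype.sum_bool, ← Measure.restrict_union _ (measurableSet_untreatedCell hD hDstar false),
    hcells, Measure.restrict_add_restrict_compl (s := {ω | Dstar ω = true})
      (hDstar (measurableSet_singleton true))]
  exact Set.disjoint_left.2 fun ω h h' => Bool.noConfusion (h.1.symm.trans h'.1)

theorem measureReal_reassignedLaw [IsFiniteMeasure P] (hY : Measurable Y) (hD : Measurable D)
    (hZ : Measurable Z) {w : Bool → ℝ} (hw : ∀ b, w b ∈ Icc (0:ℝ) 1)
    {V₁ V₀ Vm : Ω → Icc (0:ℝ) 1} (hV₁ : Measurable V₁) (hV₀ : Measurable V₀)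
    (hVm : Measurable Vm) {s : Set (Sample R)} (hs : MeasurableSet s) :
    (reassignedLaw P Y D Dstar Z e w V₁ V₀ Vm).real s =
      P.real (toSample Y Z e D true V₁ ⁻¹' s ∩ {ω | Dstar ω = true}) +
        ∑ b, ((1 - w b) * P.real
            (toSample Y Z e (fun _ => b) false V₀ ⁻¹' s ∩ untreatedCell D Dstar b) +
          w b * P.real (toSample Y Z e (fun _ => b) true Vm ⁻¹' s ∩ untreatedCell D Dstar b)) := by
  have hE : ∀ (β : Ω → Bool) (d : Bool) (V : Ω → Icc (0:ℝ) 1), Measurable β → Measurable V →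
      MeasurableSet (toSample Y Z e β d V ⁻¹' s) := fun β d V hβ hV =>
    measurable_toSample e hY hZ hβ d hV hs
  simp only [reassignedLaw, Fintype.sum_bool]
  rw [measureReal_add_apply, measureReal_add_apply, measureReal_add_apply, measureReal_add_apply]
  simp only [measureReal_nnreal_smul_apply,
    Real.coe_toNNReal _ (sub_nonneg.2 (hw _).2), Real.coe_toNNReal _ (hw _).1,
    map_measureReal_apply (measurable_toSample e hY hZ hD _ hV₁) hs,
    map_measureReal_apply (measurable_toSample e hY hZ measurable_const _ hV₀) hs,
    map_measureReal_apply (measurable_toSample e hY hZ measurable_const _ hVm) hs,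
    measureReal_restrict_apply (hE _ _ _ hD hV₁),
    measureReal_restrict_apply (hE _ _ _ measurable_const hV₀),
    measureReal_restrict_apply (hE _ _ _ measurable_const hVm)]

theorem map_reassignedLaw [IsFiniteMeasure P] (hY : Measurable Y) (hD : Measurable D)
    (hDstar : Measurable Dstar) (hZ : Measurable Z) {w : Bool → ℝ}
    (hw : ∀ b, w b ∈ Icc (0:ℝ) 1) {V₁ V₀ Vm : Ω → Icc (0:ℝ) 1} (hV₁ : Measurable V₁)
    (hV₀ : Measurable V₀) (hVm : Measurable Vm) :
    (reassignedLaw P Y D Dstar Z e w V₁ V₀ Vm).map (fun x => (x.1, x.2.1, e.symm x.2.2.2.1)) =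
      P.map (fun ω => (Y ω, D ω, Z ω)) := by
  have hπ : Measurable fun x : Sample R => (x.1, x.2.1, e.symm x.2.2.2.1) :=
    measurable_fst.prodMk (measurable_snd.fst.prodMk (e.symm.measurable.comp
      measurable_snd.snd.snd.fst))
  have hobs : Measurable fun ω => (Y ω, D ω, Z ω) := hY.prodMk (hD.prodMk hZ)
  have piece : ∀ {C : Set Ω} {β : Ω → Bool} (d : Bool) {V : Ω → Icc (0:ℝ) 1}, MeasurableSet C →
      Measurable β → (∀ ω ∈ C, β ω = D ω) → Measurable V →
      ((P.restrict C).map (toSample Y Z e β d V)).map (fun x => (x.1, x.2.1, e.symm x.2.2.2.1)) =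
        (P.restrict C).map (fun ω => (Y ω, D ω, Z ω)) := by
    intro C β d V hC hβ hβD hV
    rw [Measure.map_map hπ (measurable_toSample e hY hZ hβ d hV)]
    refine Measure.map_congr ?_
    filter_upwards [ae_restrict_mem hC] with ω hω
    simp [toSample, hβD ω hω]
  have hcell : ∀ b, MeasurableSet (untreatedCell D Dstar b) :=
    measurableSet_untreatedCell hD hDstar
  have hcellD : ∀ b, ∀ ω ∈ untreatedCell D Dstar b, (fun _ => b) ω = D ω := fun b ω hω => hω.1.symm
  have hsplit :
      ∀ b (μ : Measure (ℝ × Bool × S)), (1 - w b).toNNReal • μ + (w b).toNNReal • μ = μ := by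
    intro b μ
    rw [← add_smul, ← Real.toNNReal_add (sub_nonneg.2 (hw b).2) (hw b).1, sub_add_cancel,
      Real.toNNReal_one, one_smul]
  simp only [reassignedLaw, Fintype.sum_bool, Measure.map_add _ _ hπ, Measure.map_smul,
    piece (C := {ω | Dstar ω = true}) _ (hDstar (measurableSet_singleton true)) hD
      (fun _ _ => rfl) hV₁,
    piece _ (hcell _) measurable_const (hcellD _) hV₀,
    piece _ (hcell _) measurable_const (hcellD _) hVm]
  rw [hsplit, hsplit, ← Measure.map_add _ _ hobs, ← Measure.map_add _ _ hobs,
    ← Fintype.sum_bool (fun b => P.restrict (untreatedCell D Dstar b)),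
    restrict_add_sum_restrict_untreatedCell hD hDstar]

theorem isProbabilityMeasure_reassignedLaw [IsProbabilityMeasure P] (hY : Measurable Y)
    (hD : Measurable D) (hDstar : Measurable Dstar) (hZ : Measurable Z) {w : Bool → ℝ}
    (hw : ∀ b, w b ∈ Icc (0:ℝ) 1) {V₁ V₀ Vm : Ω → Icc (0:ℝ) 1}
    (hV₁ : Measurable V₁) (hV₀ : Measurable V₀) (hVm : Measurable Vm) :
    IsProbabilityMeasure (reassignedLaw P Y D Dstar Z e w V₁ V₀ Vm) := by
  have : IsProbabilityMeasure ((reassignedLaw P Y D Dstar Z e w V₁ V₀ Vm).map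
      fun x => (x.1, x.2.1, e.symm x.2.2.2.1)) := by
    rw [map_reassignedLaw e hY hD hDstar hZ hw hV₁ hV₀ hVm]
    exact Measure.isProbabilityMeasure_map (hY.prodMk (hD.prodMk hZ)).aemeasurable
  exact Measure.isProbabilityMeasure_of_map fun x => (x.1, x.2.1, e.symm x.2.2.2.1)

theorem nondifferentialMisclassification_reassignedLaw [IsFiniteMeasure P] {p₀ p₁ p₀' : ℝ}
    (h : NondifferentialMisclassification P Y D Dstar Z p₀ p₁) (hY : Measurable Y)
    (hD : Measurable D) (hZ : Measurable Z) [MeasurableSingletonClass S]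
    {w : Bool → ℝ} (hw : ∀ b, w b ∈ Icc (0:ℝ) 1)
    {V₁ V₀ Vm : Ω → Icc (0:ℝ) 1} (hV₁ : Measurable V₁) (hV₀ : Measurable V₀) (hVm : Measurable Vm)
    {κ : ℝ} (hκ : w true * p₀ + w false * (1 - p₀) = κ)
    (hstay : (1 - w true) * p₀ = p₀' * (1 - κ)) (hmove : w false * (1 - p₀) = p₁ * κ) :
    NondifferentialMisclassification (reassignedLaw P Y D Dstar Z e w V₁ V₀ Vm) Prod.fst
      (fun x => x.2.1) (fun x => x.2.2.1) (fun x => e.symm x.2.2.2.1) p₀' p₁ := by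
  intro A hA z d
  have hz : MeasurableSet {x : Sample R | e.symm x.2.2.2.1 = z} :=
    (e.symm.measurable.comp measurable_snd.snd.snd.fst) (measurableSet_singleton z)
  have hYA : MeasurableSet {x : Sample R | x.1 ∈ A} := measurable_fst hA
  have hdstar : ∀ d, MeasurableSet {x : Sample R | x.2.2.1 = d} := fun d =>
    measurable_snd.snd.fst (measurableSet_singleton d)
  have hfactor := fun b => h.measureReal_inter_untreatedCell hD hA
    (B := {ω | Y ω ∈ A ∧ Z ω = z}) (fun _ _ => Iff.rfl) b
  have hs₁ :
      MeasurableSet {x : Sample R | x.2.1 = !d ∧ x.2.2.1 = d ∧ x.1 ∈ A ∧ e.symm x.2.2.2.1 = z} :=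
    (measurable_snd.fst (measurableSet_singleton _)).inter ((hdstar d).inter (hYA.inter hz))
  have hs₂ : MeasurableSet {x : Sample R | x.2.2.1 = d ∧ x.1 ∈ A ∧ e.symm x.2.2.2.1 = z} :=
    (hdstar d).inter (hYA.inter hz)
  dsimp only
  rw [measureReal_reassignedLaw e hY hD hZ hw hV₁ hV₀ hVm hs₁,
    measureReal_reassignedLaw e hY hD hZ hw hV₁ hV₀ hVm hs₂]
  cases d
  · simp only [Bool.not_false, preimage_ofPred_eq, toSample, Bool.true_eq_false,
      MeasurableEquiv.symm_apply_apply, false_and, and_false, ofPred_false, empty_inter,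
      measureReal_empty, Fintype.univ_bool, true_and, mul_zero, add_zero, Finset.mem_singleton,
      not_false_eq_true, Finset.sum_insert, Finset.sum_singleton, Bool.false_eq_true, zero_add,
      cond_false]
    rw [hfactor, hfactor, cond_true, cond_false]
    linear_combination P.real ({ω | Y ω ∈ A ∧ Z ω = z} ∩ {ω | Dstar ω = false}) * (hstay + p₀' * hκ)
  · simp only [Bool.not_true, preimage_ofPred_eq, toSample, MeasurableEquiv.symm_apply_apply,
      true_and, Fintype.univ_bool, Bool.false_eq_true, false_and, and_false, ofPred_false,
      empty_inter, measureReal_empty, mul_zero, zero_add, Finset.mem_singleton, Bool.true_eq_false,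
      not_false_eq_true, Finset.sum_insert, Finset.sum_singleton, cond_true]
    have htreated : P.real ({ω | D ω = false ∧ Y ω ∈ A ∧ Z ω = z} ∩ {ω | Dstar ω = true}) =
        p₁ * P.real ({ω | Y ω ∈ A ∧ Z ω = z} ∩ {ω | Dstar ω = true}) := by
      have := h A hA z true
      rw [Bool.not_true, cond_true] at this
      convert this using 3 <;> ext ω <;> simp only [mem_inter_iff, mem_ofPred_eq] <;> tauto
    rw [htreated, hfactor, hfactor, cond_true, cond_false]
    linear_combination P.real ({ω | Y ω ∈ A ∧ Z ω = z} ∩ {ω | Dstar ω = false}) * (hmove - p₁ * hκ)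

theorem ae_eq_reassignedLaw {w : Bool → ℝ} {V₁ V₀ Vm : Ω → Icc (0:ℝ) 1} (hY : Measurable Y)
    (hD : Measurable D) (hDstar : Measurable Dstar) (hZ : Measurable Z) (hV₁ : Measurable V₁)
    (hV₀ : Measurable V₀) (hVm : Measurable Vm) {qt : Bool → ℝ → ℝ}
    (hqt : ∀ d, ContinuousOn (qt d) (Icc 0 1))
    (h₁ : ∀ ω, Dstar ω = true → Y ω = qt true (V₁ ω))
    (h₀ : ∀ ω, Dstar ω = false → Y ω = qt false (V₀ ω))
    (hm : ∀ ω, Dstar ω = false → Y ω = qt true (Vm ω)) :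
    ∀ᵐ x ∂reassignedLaw P Y D Dstar Z e w V₁ V₀ Vm, x.1 = qt x.2.2.1 x.2.2.2.2 := by
  have hM : MeasurableSet {x : Sample R | x.1 = qt x.2.2.1 x.2.2.2.2} := by
    refine measurableSet_eq_fun measurable_fst ?_
    have : Measurable fun p : Bool × Icc (0:ℝ) 1 => qt p.1 p.2 :=
      measurable_from_prod_countable_right fun d => (hqt d).domRestrict.measurable
    exact this.comp (measurable_snd.snd.fst.prodMk measurable_snd.snd.snd.snd)
  have piece : ∀ {C : Set Ω} {β : Ω → Bool} {d : Bool} {V : Ω → Icc (0:ℝ) 1}, MeasurableSet C →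
      Measurable β → Measurable V → (∀ ω ∈ C, Y ω = qt d (V ω)) →
      ∀ᵐ x ∂(P.restrict C).map (toSample Y Z e β d V), x.1 = qt x.2.2.1 x.2.2.2.2 :=
    fun hC hβ hV hCV => (ae_map_iff (measurable_toSample e hY hZ hβ _ hV).aemeasurable hM).2
      (ae_restrict_of_forall_mem hC hCV)
  have hcell := measurableSet_untreatedCell hD hDstar
  simp only [reassignedLaw, Fintype.sum_bool, ae_add_measure_iff]
  refine ⟨piece (hDstar (measurableSet_singleton true)) hD hV₁ h₁, ?_⟩
  refine ⟨⟨Measure.ae_smul_measure (piece (hcell _) measurable_const hV₀ fun ω hω => h₀ ω hω.2) _,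
    Measure.ae_smul_measure (piece (hcell _) measurable_const hVm fun ω hω => hm ω hω.2) _⟩,
    Measure.ae_smul_measure (piece (hcell _) measurable_const hV₀ fun ω hω => h₀ ω hω.2) _,
    Measure.ae_smul_measure (piece (hcell _) measurable_const hVm fun ω hω => hm ω hω.2) _⟩

theorem measureReal_rank_le_reassignedLaw [IsFiniteMeasure P] [MeasurableSingletonClass S]
    (hY : Measurable Y) (hD : Measurable D) (hZ : Measurable Z) {w : Bool → ℝ}
    (hw : ∀ b, w b ∈ Icc (0:ℝ) 1) {V₁ V₀ Vm : Ω → Icc (0:ℝ) 1}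
    (hV₁ : Measurable V₁) (hV₀ : Measurable V₀) (hVm : Measurable Vm) {p₀ : ℝ} {φ G : ℝ → ℝ}
    {z : S}
    (h₁ : ∀ u ∈ Icc (0:ℝ) 1, P.real ({ω | (V₁ ω : ℝ) ≤ u ∧ Z ω = z} ∩ {ω | Dstar ω = true}) =
      u * P.real {ω | Dstar ω = true ∧ Z ω = z})
    (h₀ : ∀ u ∈ Icc (0:ℝ) 1, ∀ b,
      P.real ({ω | (V₀ ω : ℝ) ≤ u ∧ Z ω = z} ∩ untreatedCell D Dstar b) =
        (bif b then p₀ else 1 - p₀) * (φ u * P.real {ω | Dstar ω = false ∧ Z ω = z}))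
    (hm : ∀ u ∈ Icc (0:ℝ) 1, ∀ b,
      P.real ({ω | (Vm ω : ℝ) ≤ u ∧ Z ω = z} ∩ untreatedCell D Dstar b) =
        (bif b then p₀ else 1 - p₀) * (G u * P.real {ω | Dstar ω = false ∧ Z ω = z}))
    {κ : ℝ} (hκ : w true * p₀ + w false * (1 - p₀) = κ) (hφG : ∀ u, (1 - κ) * φ u + κ * G u = u)
    {u : ℝ} (hu : u ∈ Icc (0:ℝ) 1) :
    (reassignedLaw P Y D Dstar Z e w V₁ V₀ Vm).real
        {x | (x.2.2.2.2 : ℝ) ≤ u ∧ e.symm x.2.2.2.1 = z} =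
      u * (reassignedLaw P Y D Dstar Z e w V₁ V₀ Vm).real {x | e.symm x.2.2.2.1 = z} := by
  have hz : MeasurableSet {x : Sample R | e.symm x.2.2.2.1 = z} :=
    (e.symm.measurable.comp measurable_snd.snd.snd.fst) (measurableSet_singleton z)
  have key : ∀ u ∈ Icc (0:ℝ) 1, (reassignedLaw P Y D Dstar Z e w V₁ V₀ Vm).real
      {x | (x.2.2.2.2 : ℝ) ≤ u ∧ e.symm x.2.2.2.1 = z} =
        u * (P.real {ω | Dstar ω = true ∧ Z ω = z} + P.real {ω | Dstar ω = false ∧ Z ω = z}) := by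
    intro u hu
    have hs : MeasurableSet {x : Sample R | (x.2.2.2.2 : ℝ) ≤ u ∧ e.symm x.2.2.2.1 = z} :=
      (measurable_subtype_coe.comp measurable_snd.snd.snd.snd measurableSet_Iic).inter hz
    rw [measureReal_reassignedLaw e hY hD hZ hw hV₁ hV₀ hVm hs]
    simp only [preimage_ofPred_eq, toSample, MeasurableEquiv.symm_apply_apply, Fintype.univ_bool,
      Finset.mem_singleton, Bool.true_eq_false, not_false_eq_true, Finset.sum_insert,
      Finset.sum_singleton]
    rw [h₁ u hu, h₀ u hu, h₀ u hu, hm u hu, hm u hu, cond_true, cond_false]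
    linear_combination P.real {ω | Dstar ω = false ∧ Z ω = z} * (hφG u + (G u - φ u) * hκ)
  have hall : {x : Sample R | e.symm x.2.2.2.1 = z} =
      {x | (x.2.2.2.2 : ℝ) ≤ 1 ∧ e.symm x.2.2.2.1 = z} := by
    ext x; simp [x.2.2.2.2.2.2]
  rw [key u hu, hall, key 1 (right_mem_Icc.2 zero_le_one), one_mul]

end Reassignment

theorem stmt6
    {Ω : Type*} [MeasurableSpace Ω] (P : Measure Ω) [IsProbabilityMeasure P]
    {S : Type*} [MeasurableSpace S] [Countable S] [MeasurableSingletonClass S]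
    (τ : ℝ) (hτ : τ ∈ Ioo (0:ℝ) 1)
    (Y : Ω → ℝ) (D Dstar : Ω → Bool) (Z : Ω → S) (U : Ω → ℝ)
    (hYm : Measurable Y) (hDm : Measurable D) (hDstarm : Measurable Dstar)
    (hZm : Measurable Z) (hUm : Measurable U)
    (hU01 : ∀ ω, U ω ∈ Icc (0:ℝ) 1)
    (p₀ p₁ : ℝ) (hp₀ : 0 < p₀) (hp₁ : 0 ≤ p₁) (hp01 : p₀ + p₁ < 1)
    (hA2 : ∀ (A : Set ℝ), MeasurableSet A → ∀ (z : S) (d : Bool),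
      (P {ω | D ω = !d ∧ Dstar ω = d ∧ Y ω ∈ A ∧ Z ω = z}).toReal
        = (bif d then p₁ else p₀) * (P {ω | Dstar ω = d ∧ Y ω ∈ A ∧ Z ω = z}).toReal)
    (hUnif : ∀ u ∈ Icc (0:ℝ) 1, ∀ (d : Bool) (z : S),
      (P {ω | U ω ≤ u ∧ Dstar ω = d ∧ Z ω = z}).toReal
        = u * (P {ω | Dstar ω = d ∧ Z ω = z}).toReal)
    (q : Bool → ℝ → ℝ)
    (hqc : ∀ d, ContinuousOn (q d) (Icc (0:ℝ) 1))
    (hq : ∀ d, StrictMonoOn (q d) (Icc (0:ℝ) 1))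
    (hout : ∀ ω, Y ω = q (Dstar ω) (U ω))
    (hne : q false τ ≠ q true τ)
    (G : ℝ → ℝ)
    (hG : ∀ u : ℝ, G u = (P {ω | q false (U ω) ≤ q true u}).toReal)
    (L : ℝ)
    (hGlip : ∀ u ∈ Icc (0:ℝ) 1, ∀ v ∈ Icc (0:ℝ) 1, |G u - G v| ≤ L * |u - v|)
    (hG0 : G 0 = 0) (hG1 : G 1 = 1)
    :
    ∃ εbar > (0:ℝ), ∀ ε : ℝ, 0 < ε → ε ≤ εbar →
      ∃ (Ω' : Type) (_ : MeasurableSpace Ω') (P' : Measure Ω')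
        (Y' : Ω' → ℝ) (D' Dstar' : Ω' → Bool) (Z' : Ω' → S) (U' : Ω' → ℝ)
        (qt : Bool → ℝ → ℝ),
        IsProbabilityMeasure P'
        ∧ Measurable Y' ∧ Measurable D' ∧ Measurable Dstar' ∧ Measurable Z'
        ∧ Measurable U'
        ∧ (∀ ω', U' ω' ∈ Icc (0:ℝ) 1)
        ∧ (∀ d, StrictMonoOn (qt d) (Icc (0:ℝ) 1))
        ∧ (∀ u ∈ Icc (0:ℝ) 1, qt true u = q true u)
        ∧ qt false τ ≠ q false τ
        ∧ (∀ᵐ ω' ∂P', Y' ω' = qt (Dstar' ω') (U' ω'))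
        ∧ (∀ u ∈ Icc (0:ℝ) 1, ∀ z : S,
            (P' {ω' | U' ω' ≤ u ∧ Z' ω' = z}).toReal
              = u * (P' {ω' | Z' ω' = z}).toReal)
        ∧ (∀ (A : Set ℝ), MeasurableSet A → ∀ (z : S) (d : Bool),
            (P' {ω' | D' ω' = !d ∧ Dstar' ω' = d ∧ Y' ω' ∈ A ∧ Z' ω' = z}).toReal
              = (bif d then p₁ else p₀ - ε)
                * (P' {ω' | Dstar' ω' = d ∧ Y' ω' ∈ A ∧ Z' ω' = z}).toReal)
        ∧ (p₀ - ε) + p₁ < 1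
        ∧ Measure.map (fun ω' => (Y' ω', D' ω', Z' ω')) P'
            = Measure.map (fun ω => (Y ω, D ω, Z ω)) P := by
  have hL : 1 ≤ L := by
    simpa [hG0, hG1] using hGlip 1 (right_mem_Icc.2 zero_le_one) 0 (left_mem_Icc.2 zero_le_one)
  obtain ⟨g₀, hg₀⟩ := (hqc false).exists_isClampedInverse zero_le_one (hq false).monotoneOn
  obtain ⟨h, hh⟩ := (hqc true).exists_isClampedInverse zero_le_one (hq true).monotoneOn
  obtain rfl : G = fun u => g₀ (q true u) := funext fun u =>
    (hG u).trans (RankUniform.measureReal_comp_le hUnif hDstarm hZm hU01 (hq false) hg₀ _)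
  -- `G 0 = 0` and `G 1 = 1` say that the untreated outcomes lie in the range of `q true`
  have hnest : Icc (q false 0) (q false 1) ⊆ Icc (q true 0) (q true 1) :=
    Icc_subset_Icc (hg₀.le_of_apply_eq_left zero_lt_one (hq false) hG0)
      (hg₀.le_of_apply_eq_right zero_lt_one (hq false) hG1)
  refine ⟨(1 - p₀ - p₁) * p₀ / (1 + L), div_pos (mul_pos (by linarith) hp₀) (by linarith),
    fun ε hε hεbar => ?_⟩
  obtain ⟨κ, hκ0, hκ1, hκp, hκL, hκε⟩ :=
    exists_reassignment_rate hp₀ hp₁ hp01 (by linarith) hε hεbar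
  set φ := rankDistortion κ fun u => g₀ (q true u)
  have hφ : StrictMonoOn φ (Icc 0 1) := strictMonoOn_rankDistortion hκ0.le hκ1 hκL hGlip
  have hφc : ContinuousOn φ (Icc 0 1) :=
    continuousOn_rankDistortion (continuousOn_of_abs_sub_le hGlip)
  have hφ0 : φ 0 = 0 := rankDistortion_zero hG0
  have hφ1 : φ 1 = 1 := rankDistortion_one hκ1.ne hG1
  have hφmaps : MapsTo φ (Icc 0 1) (Icc 0 1) := by
    simpa [hφ0, hφ1] using hφ.monotoneOn.mapsTo_Icc
  obtain ⟨ψ, hψ⟩ := hφc.exists_isClampedInverse zero_le_one hφ.monotoneOn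
  obtain ⟨R, _, ⟨e⟩⟩ := exists_measurableEquiv_of_countable S
  set w := reassignmentWeight p₀ p₁ κ
  have hw := reassignmentWeight_mem_Icc hp₀ hp₁ hp01 hκ0.le hκp
  have hκw : w true * p₀ + w false * (1 - p₀) = κ := reassignmentWeight_mix hp₀.ne' (by linarith)
  set V₁ : Ω → Icc (0:ℝ) 1 := fun ω => ⟨U ω, hU01 ω⟩
  set V₀ : Ω → Icc (0:ℝ) 1 := fun ω => ⟨ψ (U ω), hψ.1 _⟩
  set Vm : Ω → Icc (0:ℝ) 1 := fun ω => ⟨h (Y ω), hh.1 _⟩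
  have hV₁ : Measurable V₁ := hUm.subtype_mk
  have hV₀ : Measurable V₀ := ((hψ.monotone hφ).measurable.comp hUm).subtype_mk
  have hVm : Measurable Vm := ((hh.monotone (hq true)).measurable.comp hYm).subtype_mk
  have hY₀ : ∀ ω, Dstar ω = false → Y ω = q false (U ω) := fun ω h0 => by rw [hout, h0]
  refine ⟨Sample R, inferInstance, reassignedLaw P Y D Dstar Z e w V₁ V₀ Vm, Prod.fst,
    fun x => x.2.1, fun x => x.2.2.1, fun x => e.symm x.2.2.2.1, fun x => x.2.2.2.2,
    distortedQuantile q φ,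
    isProbabilityMeasure_reassignedLaw e hYm hDm hDstarm hZm hw hV₁ hV₀ hVm,
    measurable_fst, measurable_snd.fst, measurable_snd.snd.fst,
    e.symm.measurable.comp measurable_snd.snd.snd.fst,
    measurable_subtype_coe.comp measurable_snd.snd.snd.snd, fun x => x.2.2.2.2.2,
    strictMonoOn_distortedQuantile hq hφ hφmaps, fun _ _ => rfl,
    fun h0 => rankDistortion_ne_self hκ0.ne' hκ1.ne (G := fun u => g₀ (q true u))
      (hg₀.apply_ne_of_ne (hq false) hτ hne.symm)
      ((hq false).injOn (hφmaps (Ioo_subset_Icc_self hτ)) (Ioo_subset_Icc_self hτ) h0),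
    ?_, fun u hu z => ?_, ?_, by linarith,
    map_reassignedLaw e hYm hDm hDstarm hZm hw hV₁ hV₀ hVm⟩
  · refine ae_eq_reassignedLaw (qt := distortedQuantile q φ) e hYm hDm hDstarm hZm hV₁ hV₀ hVm
      (continuousOn_distortedQuantile hqc hφc hφmaps) (fun ω h1 => by rw [hout, h1]; rfl)
      (fun ω h0 => ?_) (fun ω h0 => ?_)
    · show Y ω = q false (φ (ψ (U ω)))
      rw [hψ.apply_eq_of_mem (by rw [hφ0, hφ1]; exact hU01 ω), hY₀ ω h0]
    · exact (hh.apply_eq_of_mem (hY₀ ω h0 ▸ hnest ((hq false).monotoneOn.mapsTo_Icc (hU01 ω)))).symm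
  · exact measureReal_rank_le_reassignedLaw e hYm hDm hZm hw hV₁ hV₀ hVm
      (fun u hu => RankUniform.measureReal_le_and_inter hUnif hu z true)
      (fun u hu => RankUniform.measureReal_inverse_rank_le_inter hUnif hA2 hDm hU01 (hq false)
        hY₀ hφ hφ0 hφ1 hψ hu z)
      (fun u hu => RankUniform.measureReal_inverse_outcome_le_inter hUnif hA2 hDm hU01 (hq false)
        hg₀ hY₀ (hq true) hh hnest hu z)
      hκw (one_sub_mul_rankDistortion_add hκ1.ne) hu
  · exact nondifferentialMisclassification_reassignedLaw e hA2 hYm hDm hZm hw hV₁ hV₀ hVm hκw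
      (one_sub_reassignmentWeight_true_mul hp₀.ne' hκε) (reassignmentWeight_false_mul (by linarith))
end

section
/- Under Assumption 1, for every z ∈ S, writing m := min(q(0,τ), q(1,τ)) and M := max(q(0,τ), q(1,τ)), one has F_z(m) ≤ τ·ℙ(Z = z) ≤ F_z(M). (First step in the proof of Theorem 2: the conditional τ-quantile of Y given Z = z is bracketed by the two structural quantiles.) -/
open MeasureTheory Set Filter

theorem stmt7
    {Ω : Type*} [MeasurableSpace Ω] (P : Measure Ω) [IsProbabilityMeasure P]
    {S : Type*} [MeasurableSpace S] [Countable S] [MeasurableSingletonClass S]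
    (τ : ℝ) (hτ : τ ∈ Ioo (0:ℝ) 1)
    (Y : Ω → ℝ) (Dstar : Ω → Bool) (Z : Ω → S) (U₀ U₁ : Ω → ℝ)
    (hYm : Measurable Y) (hDstarm : Measurable Dstar) (hZm : Measurable Z)
    (hU₀m : Measurable U₀) (hU₁m : Measurable U₁)
    (hU₀01 : ∀ ω, U₀ ω ∈ Icc (0:ℝ) 1) (hU₁01 : ∀ ω, U₁ ω ∈ Icc (0:ℝ) 1)
    (U : Ω → ℝ) (hU : ∀ ω, U ω = bif Dstar ω then U₁ ω else U₀ ω)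
    (q : Bool → ℝ → ℝ)
    (hq : ∀ d, StrictMonoOn (q d) (Icc (0:ℝ) 1))
    (hout : ∀ ω, Y ω = q (Dstar ω) (U ω))
    (hexo : ∀ (d : Bool) (z : S),
      (P {ω | (bif d then U₁ ω else U₀ ω) ≤ τ ∧ Z ω = z}).toReal
        = τ * (P {ω | Z ω = z}).toReal)
    (hrank : ∀ (d : Bool) (z : S),
      (P {ω | U₀ ω ≤ τ ∧ Dstar ω = d ∧ Z ω = z}).toReal
        = (P {ω | U₁ ω ≤ τ ∧ Dstar ω = d ∧ Z ω = z}).toReal)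
    (F : S → ℝ → ℝ)
    (hF : ∀ (z : S) (y : ℝ), F z y = (P {ω | Y ω ≤ y ∧ Z ω = z}).toReal)
    :
    ∀ z : S,
      F z (min (q false τ) (q true τ)) ≤ τ * (P {ω | Z ω = z}).toReal
      ∧ τ * (P {ω | Z ω = z}).toReal ≤ F z (max (q false τ) (q true τ)) := by

  intro z
  have hτI : τ ∈ Icc (0:ℝ) 1 := ⟨hτ.1.le, hτ.2.le⟩
  have hUI : ∀ ω, U ω ∈ Icc (0:ℝ) 1 := by
    intro ω; rw [hU ω]; cases Dstar ω <;> simp [hU₀01 ω, hU₁01 ω]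
  -- key measure identity
  have hsplit : {ω | U ω ≤ τ ∧ Z ω = z}
      = {ω | U₁ ω ≤ τ ∧ Dstar ω = true ∧ Z ω = z}
        ∪ {ω | U₀ ω ≤ τ ∧ Dstar ω = false ∧ Z ω = z} := by
    ext ω; rw [Set.mem_setOf_eq, hU ω]
    cases h : Dstar ω <;> simp [h]
  have hsplit0 : {ω | U₀ ω ≤ τ ∧ Z ω = z}
      = {ω | U₀ ω ≤ τ ∧ Dstar ω = true ∧ Z ω = z}
        ∪ {ω | U₀ ω ≤ τ ∧ Dstar ω = false ∧ Z ω = z} := by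
    ext ω; cases h : Dstar ω <;> simp [h, Set.mem_setOf_eq, and_assoc]
  have hZset : MeasurableSet {ω | Z ω = z} := hZm (measurableSet_singleton z)
  have hDset : ∀ d : Bool, MeasurableSet {ω | Dstar ω = d} :=
    fun d => hDstarm (measurableSet_singleton d)
  have hA : ∀ d : Bool, MeasurableSet {ω | U₀ ω ≤ τ ∧ Dstar ω = d ∧ Z ω = z} := by
    intro d
    exact (hU₀m measurableSet_Iic).inter ((hDset d).inter hZset)
  have hB : ∀ d : Bool, MeasurableSet {ω | U₁ ω ≤ τ ∧ Dstar ω = d ∧ Z ω = z} := by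
    intro d
    exact (hU₁m measurableSet_Iic).inter ((hDset d).inter hZset)
  have hdisj : ∀ (V W : Ω → ℝ), Disjoint
      {ω | V ω ≤ τ ∧ Dstar ω = true ∧ Z ω = z}
      {ω | W ω ≤ τ ∧ Dstar ω = false ∧ Z ω = z} := by
    intro V W
    rw [Set.disjoint_left]
    rintro ω ⟨-, h1, -⟩ ⟨-, h2, -⟩
    rw [h1] at h2; exact Bool.noConfusion h2
  have hkey : (P {ω | U ω ≤ τ ∧ Z ω = z}).toReal = τ * (P {ω | Z ω = z}).toReal := by
    have e1 : (P {ω | U ω ≤ τ ∧ Z ω = z}).toReal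
        = (P {ω | U₁ ω ≤ τ ∧ Dstar ω = true ∧ Z ω = z}).toReal
          + (P {ω | U₀ ω ≤ τ ∧ Dstar ω = false ∧ Z ω = z}).toReal := by
      rw [hsplit, measure_union (hdisj U₁ U₀) (hA false),
        ENNReal.toReal_add (measure_ne_top P _) (measure_ne_top P _)]
    have e2 : (P {ω | U₀ ω ≤ τ ∧ Z ω = z}).toReal
        = (P {ω | U₀ ω ≤ τ ∧ Dstar ω = true ∧ Z ω = z}).toReal
          + (P {ω | U₀ ω ≤ τ ∧ Dstar ω = false ∧ Z ω = z}).toReal := by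
      rw [hsplit0, measure_union (hdisj U₀ U₀) (hA false),
        ENNReal.toReal_add (measure_ne_top P _) (measure_ne_top P _)]
    have e3 := hexo false z
    simp only [cond_false] at e3
    rw [e1, ← hrank true z, ← e2, e3]
  -- inclusions
  have hmem : ∀ ω, Y ω = q (Dstar ω) (U ω) := hout
  have hsub1 : {ω | Y ω ≤ min (q false τ) (q true τ) ∧ Z ω = z}
      ⊆ {ω | U ω ≤ τ ∧ Z ω = z} := by
    rintro ω ⟨hy, hz⟩
    refine ⟨?_, hz⟩
    by_contra hlt
    push_neg at hlt
    have h1 : q (Dstar ω) τ < q (Dstar ω) (U ω) := (hq (Dstar ω)) hτI (hUI ω) hlt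
    have h2 : min (q false τ) (q true τ) ≤ q (Dstar ω) τ := by
      cases Dstar ω
      · exact min_le_left _ _
      · exact min_le_right _ _
    rw [hmem ω] at hy
    linarith
  have hsub2 : {ω | U ω ≤ τ ∧ Z ω = z}
      ⊆ {ω | Y ω ≤ max (q false τ) (q true τ) ∧ Z ω = z} := by
    rintro ω ⟨hu, hz⟩
    refine ⟨?_, hz⟩
    have h1 : q (Dstar ω) (U ω) ≤ q (Dstar ω) τ :=
      (hq (Dstar ω)).monotoneOn (hUI ω) hτI hu
    have h2 : q (Dstar ω) τ ≤ max (q false τ) (q true τ) := by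
      cases Dstar ω
      · exact le_max_left _ _
      · exact le_max_right _ _
    rw [hmem ω]
    linarith
  constructor
  · rw [hF, ← hkey]
    exact ENNReal.toReal_mono (measure_ne_top P _) (measure_mono hsub1)
  · rw [hF, ← hkey]
    exact ENNReal.toReal_mono (measure_ne_top P _) (measure_mono hsub2)
end

section
/- Assume Assumption 1. Let z ∈ S with ℙ(Z = z) > 0, suppose F_z is continuous on ℝ, and let y_z be the unique real with F_z(y_z) = τ·ℙ(Z = z) (the unique conditional τ-quantile of Y given Z = z). Then min(q(0,τ), q(1,τ)) ≤ y_z ≤ max(q(0,τ), q(1,τ)). (Convex-combination step in the proof of Theorem 2: the conditional quantile of Y given Z = z lies between the two structural quantiles.) -/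
open MeasureTheory Set Filter

theorem stmt8
    {Ω : Type*} [MeasurableSpace Ω] (P : Measure Ω) [IsProbabilityMeasure P]
    {S : Type*} [MeasurableSpace S] [Countable S] [MeasurableSingletonClass S]
    (τ : ℝ) (hτ : τ ∈ Ioo (0:ℝ) 1)
    (Y : Ω → ℝ) (Dstar : Ω → Bool) (Z : Ω → S) (U₀ U₁ : Ω → ℝ)
    (hYm : Measurable Y) (hDstarm : Measurable Dstar) (hZm : Measurable Z)
    (hU₀m : Measurable U₀) (hU₁m : Measurable U₁)
    (hU₀01 : ∀ ω, U₀ ω ∈ Icc (0:ℝ) 1) (hU₁01 : ∀ ω, U₁ ω ∈ Icc (0:ℝ) 1)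
    (U : Ω → ℝ) (hU : ∀ ω, U ω = bif Dstar ω then U₁ ω else U₀ ω)
    (q : Bool → ℝ → ℝ)
    (hq : ∀ d, StrictMonoOn (q d) (Icc (0:ℝ) 1))
    (hout : ∀ ω, Y ω = q (Dstar ω) (U ω))
    (hexo : ∀ (d : Bool) (z : S),
      (P {ω | (bif d then U₁ ω else U₀ ω) ≤ τ ∧ Z ω = z}).toReal
        = τ * (P {ω | Z ω = z}).toReal)
    (hrank : ∀ (d : Bool) (z : S),
      (P {ω | U₀ ω ≤ τ ∧ Dstar ω = d ∧ Z ω = z}).toReal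
        = (P {ω | U₁ ω ≤ τ ∧ Dstar ω = d ∧ Z ω = z}).toReal)
    (F : S → ℝ → ℝ)
    (hF : ∀ (z : S) (y : ℝ), F z y = (P {ω | Y ω ≤ y ∧ Z ω = z}).toReal)
    (z : S) (hz : 0 < (P {ω | Z ω = z}).toReal)
    (hFc : Continuous (F z))
    (yz : ℝ)
    (hyz : F z yz = τ * (P {ω | Z ω = z}).toReal)
    (hyzu : ∀ y : ℝ, F z y = τ * (P {ω | Z ω = z}).toReal → y = yz)
    :
    min (q false τ) (q true τ) ≤ yz ∧ yz ≤ max (q false τ) (q true τ) := by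
  set c := (P {ω | Z ω = z}).toReal with hc
  set m := min (q false τ) (q true τ) with hm
  set M := max (q false τ) (q true τ) with hM
  have hτmem : τ ∈ Icc (0:ℝ) 1 := ⟨hτ.1.le, hτ.2.le⟩
  have hUmem : ∀ ω, U ω ∈ Icc (0:ℝ) 1 := by
    intro ω; rw [hU ω]; cases Dstar ω
    · simpa using hU₀01 ω
    · simpa using hU₁01 ω
  -- measurability of the pieces
  have hmA : ∀ d : Bool, MeasurableSet {ω | U₀ ω ≤ τ ∧ Dstar ω = d ∧ Z ω = z} :=
    fun d => (hU₀m measurableSet_Iic).inter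
      ((hDstarm (measurableSet_singleton d)).inter (hZm (measurableSet_singleton z)))
  have hmB : ∀ d : Bool, MeasurableSet {ω | U₁ ω ≤ τ ∧ Dstar ω = d ∧ Z ω = z} :=
    fun d => (hU₁m measurableSet_Iic).inter
      ((hDstarm (measurableSet_singleton d)).inter (hZm (measurableSet_singleton z)))
  have toReal_union : ∀ (A B : Set Ω), Disjoint A B → MeasurableSet B →
      (P (A ∪ B)).toReal = (P A).toReal + (P B).toReal := by
    intro A B hd hB
    rw [measure_union hd hB, ENNReal.toReal_add (measure_ne_top P A) (measure_ne_top P B)]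
  -- key computation : P (U ≤ τ ∧ Z = z) = τ * c
  have key : (P {ω | U ω ≤ τ ∧ Z ω = z}).toReal = τ * c := by
    have hsplit : {ω | U ω ≤ τ ∧ Z ω = z}
        = {ω | U₀ ω ≤ τ ∧ Dstar ω = false ∧ Z ω = z}
          ∪ {ω | U₁ ω ≤ τ ∧ Dstar ω = true ∧ Z ω = z} := by
      ext ω
      cases h : Dstar ω <;> simp [hU ω, h]
    have hsplit0 : {ω | U₀ ω ≤ τ ∧ Z ω = z}
        = {ω | U₀ ω ≤ τ ∧ Dstar ω = false ∧ Z ω = z}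
          ∪ {ω | U₀ ω ≤ τ ∧ Dstar ω = true ∧ Z ω = z} := by
      ext ω
      cases h : Dstar ω <;> simp [h]
    have hdisj : Disjoint {ω | U₀ ω ≤ τ ∧ Dstar ω = false ∧ Z ω = z}
        {ω | U₁ ω ≤ τ ∧ Dstar ω = true ∧ Z ω = z} := by
      rw [Set.disjoint_left]
      rintro ω ⟨-, h1, -⟩ ⟨-, h2, -⟩
      rw [h1] at h2; exact Bool.false_ne_true h2
    have hdisj0 : Disjoint {ω | U₀ ω ≤ τ ∧ Dstar ω = false ∧ Z ω = z}
        {ω | U₀ ω ≤ τ ∧ Dstar ω = true ∧ Z ω = z} := by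
      rw [Set.disjoint_left]
      rintro ω ⟨-, h1, -⟩ ⟨-, h2, -⟩
      rw [h1] at h2; exact Bool.false_ne_true h2
    have hexo0 : (P {ω | U₀ ω ≤ τ ∧ Z ω = z}).toReal = τ * c := by
      simpa using hexo false z
    rw [hsplit, toReal_union _ _ hdisj (hmB true), ← hrank true z,
      ← toReal_union _ _ hdisj0 (hmA true), ← hsplit0, hexo0]
  -- inclusions
  have hsub1 : {ω | U ω ≤ τ ∧ Z ω = z} ⊆ {ω | Y ω ≤ M ∧ Z ω = z} := by
    rintro ω ⟨hUτ, hZ⟩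
    refine ⟨?_, hZ⟩
    rw [hout ω]
    have h1 : q (Dstar ω) (U ω) ≤ q (Dstar ω) τ :=
      (hq (Dstar ω)).monotoneOn (hUmem ω) hτmem hUτ
    have h2 : q (Dstar ω) τ ≤ M := by
      cases Dstar ω
      · exact le_max_left _ _
      · exact le_max_right _ _
    linarith
  have hsub2 : {ω | Y ω ≤ m ∧ Z ω = z} ⊆ {ω | U ω ≤ τ ∧ Z ω = z} := by
    rintro ω ⟨hY, hZ⟩
    refine ⟨?_, hZ⟩
    by_contra h
    push_neg at h
    have h1 : q (Dstar ω) τ < q (Dstar ω) (U ω) := hq (Dstar ω) hτmem (hUmem ω) h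
    have h2 : m ≤ q (Dstar ω) τ := by
      cases Dstar ω
      · exact min_le_left _ _
      · exact min_le_right _ _
    rw [hout ω] at hY
    linarith
  have hFm : F z m ≤ τ * c := by
    rw [hF z m, ← key]
    exact ENNReal.toReal_mono (measure_ne_top P _) (measure_mono hsub2)
  have hFM : τ * c ≤ F z M := by
    rw [hF z M, ← key]
    exact ENNReal.toReal_mono (measure_ne_top P _) (measure_mono hsub1)
  have hmM : m ≤ M := min_le_max
  have hivt := intermediate_value_Icc hmM hFc.continuousOn
  obtain ⟨y, hy, hyeq⟩ := hivt ⟨hFm, hFM⟩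
  have := hyzu y hyeq
  subst this
  exact ⟨hy.1, hy.2⟩
end

section
/- Assume Assumption 1. Let z ∈ S with ℙ(Z = z) > 0 and let y be a real with F_z(y) = τ·ℙ(Z = z) and q(0,τ) ≤ y ≤ q(1,τ). Then ℙ({q(0,τ) < Y ≤ y} ∩ {D* = 0} ∩ {Z = z}) = ℙ({y < Y ≤ q(1,τ)} ∩ {D* = 1} ∩ {Z = z}). (The balancing identity, equation (Diff_test_impl), in the proof of Theorem 2.) -/
open MeasureTheory Set Filter

lemma stmt9_add {Ω : Type*} [MeasurableSpace Ω] (P : Measure Ω) [IsFiniteMeasure P]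
    {s t : Set Ω} (ht : MeasurableSet t) (hd : Disjoint s t) :
    (P (s ∪ t)).toReal = (P s).toReal + (P t).toReal := by
  rw [measure_union hd ht, ENNReal.toReal_add (measure_ne_top _ _) (measure_ne_top _ _)]

theorem stmt9
    {Ω : Type*} [MeasurableSpace Ω] (P : Measure Ω) [IsProbabilityMeasure P]
    {S : Type*} [MeasurableSpace S] [Countable S] [MeasurableSingletonClass S]
    (τ : ℝ) (hτ : τ ∈ Ioo (0:ℝ) 1)
    (Y : Ω → ℝ) (Dstar : Ω → Bool) (Z : Ω → S) (U₀ U₁ : Ω → ℝ)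
    (hYm : Measurable Y) (hDstarm : Measurable Dstar) (hZm : Measurable Z)
    (hU₀m : Measurable U₀) (hU₁m : Measurable U₁)
    (hU₀01 : ∀ ω, U₀ ω ∈ Icc (0:ℝ) 1) (hU₁01 : ∀ ω, U₁ ω ∈ Icc (0:ℝ) 1)
    (U : Ω → ℝ) (hU : ∀ ω, U ω = bif Dstar ω then U₁ ω else U₀ ω)
    (q : Bool → ℝ → ℝ)
    (hq : ∀ d, StrictMonoOn (q d) (Icc (0:ℝ) 1))
    (hout : ∀ ω, Y ω = q (Dstar ω) (U ω))
    (hexo : ∀ (d : Bool) (z : S),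
      (P {ω | (bif d then U₁ ω else U₀ ω) ≤ τ ∧ Z ω = z}).toReal
        = τ * (P {ω | Z ω = z}).toReal)
    (hrank : ∀ (d : Bool) (z : S),
      (P {ω | U₀ ω ≤ τ ∧ Dstar ω = d ∧ Z ω = z}).toReal
        = (P {ω | U₁ ω ≤ τ ∧ Dstar ω = d ∧ Z ω = z}).toReal)
    (F : S → ℝ → ℝ)
    (hF : ∀ (z : S) (y : ℝ), F z y = (P {ω | Y ω ≤ y ∧ Z ω = z}).toReal)
    (z : S) (hz : 0 < (P {ω | Z ω = z}).toReal)
    (y : ℝ)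
    (hy : F z y = τ * (P {ω | Z ω = z}).toReal)
    (hy0 : q false τ ≤ y) (hy1 : y ≤ q true τ)
    :
    (P {ω | (q false τ < Y ω ∧ Y ω ≤ y) ∧ Dstar ω = false ∧ Z ω = z}).toReal
      = (P {ω | (y < Y ω ∧ Y ω ≤ q true τ) ∧ Dstar ω = true ∧ Z ω = z}).toReal := by
  have hτmem : τ ∈ Icc (0:ℝ) 1 := ⟨hτ.1.le, hτ.2.le⟩
  -- key equivalences
  have key0 : ∀ ω, Dstar ω = false → (U₀ ω ≤ τ ↔ Y ω ≤ q false τ) := by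
    intro ω hd
    have hYω : Y ω = q false (U₀ ω) := by rw [hout, hU, hd]; rfl
    rw [hYω]
    exact ((hq false).le_iff_le (hU₀01 ω) hτmem).symm
  have key1 : ∀ ω, Dstar ω = true → (U₁ ω ≤ τ ↔ Y ω ≤ q true τ) := by
    intro ω hd
    have hYω : Y ω = q true (U₁ ω) := by rw [hout, hU, hd]; rfl
    rw [hYω]
    exact ((hq true).le_iff_le (hU₁01 ω) hτmem).symm
  -- measurability
  have mY : ∀ (c : ℝ) (d : Bool), MeasurableSet {ω | Y ω ≤ c ∧ Dstar ω = d ∧ Z ω = z} :=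
    fun c d => (hYm measurableSet_Iic).inter
      ((hDstarm (measurableSet_singleton d)).inter (hZm (measurableSet_singleton z)))
  have mA0 : MeasurableSet {ω | (q false τ < Y ω ∧ Y ω ≤ y) ∧ Dstar ω = false ∧ Z ω = z} :=
    ((hYm measurableSet_Ioi).inter (hYm measurableSet_Iic)).inter
      ((hDstarm (measurableSet_singleton false)).inter (hZm (measurableSet_singleton z)))
  have mA1 : MeasurableSet {ω | (y < Y ω ∧ Y ω ≤ q true τ) ∧ Dstar ω = true ∧ Z ω = z} :=
    ((hYm measurableSet_Ioi).inter (hYm measurableSet_Iic)).inter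
      ((hDstarm (measurableSet_singleton true)).inter (hZm (measurableSet_singleton z)))
  have mU0 : ∀ (d : Bool), MeasurableSet {ω | U₀ ω ≤ τ ∧ Dstar ω = d ∧ Z ω = z} :=
    fun d => (hU₀m measurableSet_Iic).inter
      ((hDstarm (measurableSet_singleton d)).inter (hZm (measurableSet_singleton z)))
  -- decomposition E1
  have E1 : {ω | Y ω ≤ y ∧ Z ω = z}
      = {ω | Y ω ≤ y ∧ Dstar ω = false ∧ Z ω = z} ∪ {ω | Y ω ≤ y ∧ Dstar ω = true ∧ Z ω = z} := by
    ext ω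
    simp only [mem_setOf_eq, mem_union]
    cases h : Dstar ω <;> tauto
  have h1 : (P {ω | Y ω ≤ y ∧ Z ω = z}).toReal
      = (P {ω | Y ω ≤ y ∧ Dstar ω = false ∧ Z ω = z}).toReal
        + (P {ω | Y ω ≤ y ∧ Dstar ω = true ∧ Z ω = z}).toReal := by
    rw [E1]
    refine stmt9_add P (mY y true) ?_
    rw [Set.disjoint_left]
    rintro ω ⟨_, hf, _⟩ ⟨_, ht, _⟩
    simp [hf] at ht
  -- decomposition E2
  have E2 : {ω | Y ω ≤ y ∧ Dstar ω = false ∧ Z ω = z}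
      = {ω | U₀ ω ≤ τ ∧ Dstar ω = false ∧ Z ω = z}
        ∪ {ω | (q false τ < Y ω ∧ Y ω ≤ y) ∧ Dstar ω = false ∧ Z ω = z} := by
    ext ω
    simp only [mem_setOf_eq, mem_union]
    constructor
    · rintro ⟨hY, hd, hzz⟩
      by_cases h : U₀ ω ≤ τ
      · exact Or.inl ⟨h, hd, hzz⟩
      · refine Or.inr ⟨⟨?_, hY⟩, hd, hzz⟩
        have := (key0 ω hd).not
        push_neg at h
        by_contra hc
        push_neg at hc
        exact h.not_ge ((key0 ω hd).mpr hc)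
    · rintro (⟨h, hd, hzz⟩ | ⟨⟨_, h2⟩, hd, hzz⟩)
      · exact ⟨le_trans ((key0 ω hd).mp h) hy0, hd, hzz⟩
      · exact ⟨h2, hd, hzz⟩
  have h2 : (P {ω | Y ω ≤ y ∧ Dstar ω = false ∧ Z ω = z}).toReal
      = (P {ω | U₀ ω ≤ τ ∧ Dstar ω = false ∧ Z ω = z}).toReal
        + (P {ω | (q false τ < Y ω ∧ Y ω ≤ y) ∧ Dstar ω = false ∧ Z ω = z}).toReal := by
    rw [E2]
    refine stmt9_add P mA0 ?_
    rw [Set.disjoint_left]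
    rintro ω ⟨hu, hd, _⟩ ⟨⟨hlt, _⟩, _, _⟩
    exact absurd ((key0 ω hd).mp hu) (not_le.mpr hlt)
  -- decomposition E3
  have E3 : {ω | U₁ ω ≤ τ ∧ Dstar ω = true ∧ Z ω = z}
      = {ω | Y ω ≤ y ∧ Dstar ω = true ∧ Z ω = z}
        ∪ {ω | (y < Y ω ∧ Y ω ≤ q true τ) ∧ Dstar ω = true ∧ Z ω = z} := by
    ext ω
    simp only [mem_setOf_eq, mem_union]
    constructor
    · rintro ⟨hu, hd, hzz⟩
      have hYle : Y ω ≤ q true τ := (key1 ω hd).mp hu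
      by_cases h : Y ω ≤ y
      · exact Or.inl ⟨h, hd, hzz⟩
      · exact Or.inr ⟨⟨not_le.mp h, hYle⟩, hd, hzz⟩
    · rintro (⟨h, hd, hzz⟩ | ⟨⟨_, h2⟩, hd, hzz⟩)
      · exact ⟨(key1 ω hd).mpr (le_trans h hy1), hd, hzz⟩
      · exact ⟨(key1 ω hd).mpr h2, hd, hzz⟩
  have h3 : (P {ω | U₁ ω ≤ τ ∧ Dstar ω = true ∧ Z ω = z}).toReal
      = (P {ω | Y ω ≤ y ∧ Dstar ω = true ∧ Z ω = z}).toReal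
        + (P {ω | (y < Y ω ∧ Y ω ≤ q true τ) ∧ Dstar ω = true ∧ Z ω = z}).toReal := by
    rw [E3]
    refine stmt9_add P mA1 ?_
    rw [Set.disjoint_left]
    rintro ω ⟨hle, _, _⟩ ⟨⟨hlt, _⟩, _, _⟩
    exact absurd hle (not_le.mpr hlt)
  -- decomposition E4
  have E4 : {ω | U₀ ω ≤ τ ∧ Z ω = z}
      = {ω | U₀ ω ≤ τ ∧ Dstar ω = false ∧ Z ω = z}
        ∪ {ω | U₀ ω ≤ τ ∧ Dstar ω = true ∧ Z ω = z} := by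
    ext ω
    simp only [mem_setOf_eq, mem_union]
    cases h : Dstar ω <;> tauto
  have h4 : (P {ω | U₀ ω ≤ τ ∧ Z ω = z}).toReal
      = (P {ω | U₀ ω ≤ τ ∧ Dstar ω = false ∧ Z ω = z}).toReal
        + (P {ω | U₀ ω ≤ τ ∧ Dstar ω = true ∧ Z ω = z}).toReal := by
    rw [E4]
    refine stmt9_add P (mU0 true) ?_
    rw [Set.disjoint_left]
    rintro ω ⟨_, hf, _⟩ ⟨_, ht, _⟩
    simp [hf] at ht
  have hexo0 := hexo false z
  simp only [Bool.cond_false] at hexo0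
  have hrank1 := hrank true z
  have hFy := hF z y
  rw [hFy] at hy
  linarith
end

section
/- (Bounds on the misclassification probabilities in terms of the observed data, used in Theorem 3(a).) Assume Assumption 2. Then for every Borel set A ⊆ ℝ and every z ∈ S: ℙ({D = 0} ∩ {Y ∈ A} ∩ {Z = z}) ≥ p₁·ℙ({Y ∈ A} ∩ {Z = z}) and ℙ({D = 1} ∩ {Y ∈ A} ∩ {Z = z}) ≥ p₀·ℙ({Y ∈ A} ∩ {Z = z}). -/
open MeasureTheory Set Filter

lemma bool_split' {Ω : Type*} [MeasurableSpace Ω] (P : Measure Ω) [IsFiniteMeasure P]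
    (f : Ω → Bool) (hf : Measurable f) (p : Ω → Prop) (hp : MeasurableSet {ω | p ω}) :
    (P {ω | p ω}).toReal
      = (P {ω | f ω = true ∧ p ω}).toReal + (P {ω | f ω = false ∧ p ω}).toReal := by
  have h1 : {ω | f ω = true ∧ p ω} = f ⁻¹' {true} ∩ {ω | p ω} := rfl
  have h2 : {ω | f ω = false ∧ p ω} = f ⁻¹' {false} ∩ {ω | p ω} := rfl
  rw [h1, h2, ← ENNReal.toReal_add (measure_ne_top _ _) (measure_ne_top _ _),
    ← measure_union ?_ ((hf (measurableSet_singleton false)).inter hp)]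
  · have hu : f ⁻¹' {true} ∩ {ω | p ω} ∪ f ⁻¹' {false} ∩ {ω | p ω} = {ω | p ω} := by
      ext ω; cases h : f ω <;> simp [h]
    rw [hu]
  · refine Disjoint.mono inter_subset_left inter_subset_left ?_
    rw [Set.disjoint_left]
    intro ω h1 h2
    simp_all

theorem stmt12
    {Ω : Type*} [MeasurableSpace Ω] (P : Measure Ω) [IsProbabilityMeasure P]
    {S : Type*} [MeasurableSpace S] [Countable S] [MeasurableSingletonClass S]
    (Y : Ω → ℝ) (Dstar D : Ω → Bool) (Z : Ω → S)
    (hYm : Measurable Y) (hDstarm : Measurable Dstar) (hDm : Measurable D)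
    (hZm : Measurable Z)
    (p₀ p₁ : ℝ) (hp₀ : p₀ ∈ Icc (0:ℝ) 1) (hp₁ : p₁ ∈ Icc (0:ℝ) 1)
    (hA2 : ∀ (A : Set ℝ), MeasurableSet A → ∀ (z : S) (d : Bool),
      (P {ω | D ω = !d ∧ Dstar ω = d ∧ Y ω ∈ A ∧ Z ω = z}).toReal
        = (bif d then p₁ else p₀) * (P {ω | Dstar ω = d ∧ Y ω ∈ A ∧ Z ω = z}).toReal)
    (hp01 : p₀ + p₁ < 1)
    :
    ∀ (A : Set ℝ), MeasurableSet A → ∀ z : S,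
      p₁ * (P {ω | Y ω ∈ A ∧ Z ω = z}).toReal
        ≤ (P {ω | D ω = false ∧ Y ω ∈ A ∧ Z ω = z}).toReal
      ∧ p₀ * (P {ω | Y ω ∈ A ∧ Z ω = z}).toReal
        ≤ (P {ω | D ω = true ∧ Y ω ∈ A ∧ Z ω = z}).toReal := by
  intro A hA z
  have hBm : MeasurableSet {ω | Y ω ∈ A ∧ Z ω = z} := by
    have : {ω | Y ω ∈ A ∧ Z ω = z} = Y ⁻¹' A ∩ Z ⁻¹' {z} := rfl
    rw [this]; exact (hYm hA).inter (hZm (measurableSet_singleton z))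
  have hSm : ∀ d : Bool, MeasurableSet {ω | Dstar ω = d ∧ Y ω ∈ A ∧ Z ω = z} := by
    intro d
    have : {ω | Dstar ω = d ∧ Y ω ∈ A ∧ Z ω = z}
        = Dstar ⁻¹' {d} ∩ (Y ⁻¹' A ∩ Z ⁻¹' {z}) := rfl
    rw [this]
    exact (hDstarm (measurableSet_singleton d)).inter
      ((hYm hA).inter (hZm (measurableSet_singleton z)))
  have hDSm : ∀ e : Bool, MeasurableSet {ω | D ω = e ∧ Y ω ∈ A ∧ Z ω = z} := by
    intro e
    have : {ω | D ω = e ∧ Y ω ∈ A ∧ Z ω = z}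
        = D ⁻¹' {e} ∩ (Y ⁻¹' A ∩ Z ⁻¹' {z}) := rfl
    rw [this]
    exact (hDm (measurableSet_singleton e)).inter
      ((hYm hA).inter (hZm (measurableSet_singleton z)))
  -- Split the base set by Dstar
  have hB : (P {ω | Y ω ∈ A ∧ Z ω = z}).toReal
      = (P {ω | Dstar ω = true ∧ Y ω ∈ A ∧ Z ω = z}).toReal
        + (P {ω | Dstar ω = false ∧ Y ω ∈ A ∧ Z ω = z}).toReal :=
    bool_split' P Dstar hDstarm _ hBm
  -- Split each Dstar-set by D
  have hS : ∀ d : Bool, (P {ω | Dstar ω = d ∧ Y ω ∈ A ∧ Z ω = z}).toReal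
      = (P {ω | D ω = true ∧ Dstar ω = d ∧ Y ω ∈ A ∧ Z ω = z}).toReal
        + (P {ω | D ω = false ∧ Dstar ω = d ∧ Y ω ∈ A ∧ Z ω = z}).toReal :=
    fun d => bool_split' P D hDm _ (hSm d)
  -- Split each D-set by Dstar (with conjunction order fixed)
  have hcomm : ∀ e d : Bool, {ω | Dstar ω = d ∧ D ω = e ∧ Y ω ∈ A ∧ Z ω = z}
      = {ω | D ω = e ∧ Dstar ω = d ∧ Y ω ∈ A ∧ Z ω = z} := by
    intro e d; ext ω
    constructor <;> rintro ⟨h1, h2, h3⟩ <;> exact ⟨h2, h1, h3⟩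
  have hD : ∀ e : Bool, (P {ω | D ω = e ∧ Y ω ∈ A ∧ Z ω = z}).toReal
      = (P {ω | D ω = e ∧ Dstar ω = true ∧ Y ω ∈ A ∧ Z ω = z}).toReal
        + (P {ω | D ω = e ∧ Dstar ω = false ∧ Y ω ∈ A ∧ Z ω = z}).toReal := by
    intro e
    have := bool_split' P Dstar hDstarm (fun ω => D ω = e ∧ Y ω ∈ A ∧ Z ω = z) (hDSm e)
    rw [this, hcomm e true, hcomm e false]
  have h1 := hA2 A hA z true
  have h0 := hA2 A hA z false
  simp only [Bool.not_true, Bool.not_false, cond_true, cond_false] at h1 h0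
  have ht : ∀ d : Bool, 0 ≤ (P {ω | Dstar ω = d ∧ Y ω ∈ A ∧ Z ω = z}).toReal :=
    fun d => ENNReal.toReal_nonneg
  obtain ⟨hp₀0, hp₀1⟩ := hp₀
  obtain ⟨hp₁0, hp₁1⟩ := hp₁
  constructor
  · rw [hB, hD false]
    have hff : (P {ω | D ω = false ∧ Dstar ω = false ∧ Y ω ∈ A ∧ Z ω = z}).toReal
        = (P {ω | Dstar ω = false ∧ Y ω ∈ A ∧ Z ω = z}).toReal
          - p₀ * (P {ω | Dstar ω = false ∧ Y ω ∈ A ∧ Z ω = z}).toReal := by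
      have := hS false; linarith [h0, this]
    rw [h1] at *
    nlinarith [ht true, ht false]
  · rw [hB, hD true]
    have htt : (P {ω | D ω = true ∧ Dstar ω = true ∧ Y ω ∈ A ∧ Z ω = z}).toReal
        = (P {ω | Dstar ω = true ∧ Y ω ∈ A ∧ Z ω = z}).toReal
          - p₁ * (P {ω | Dstar ω = true ∧ Y ω ∈ A ∧ Z ω = z}).toReal := by
      have := hS true; linarith [h1, this]
    nlinarith [ht true, ht false, h0]
end

section
/- (Inversion of the misclassification matrix, used in the proof of Theorem 3.) Assume Assumption 2 (i). Then for every Borel set A ⊆ ℝ and every z ∈ S: (1 − p₀ − p₁)·ℙ({D* = 0} ∩ {Y ∈ A} ∩ {Z = z}) = ℙ({D = 0} ∩ {Y ∈ A} ∩ {Z = z}) − p₁·ℙ({Y ∈ A} ∩ {Z = z}), and (1 − p₀ − p₁)·ℙ({D* = 1} ∩ {Y ∈ A} ∩ {Z = z}) = ℙ({D = 1} ∩ {Y ∈ A} ∩ {Z = z}) − p₀·ℙ({Y ∈ A} ∩ {Z = z}). -/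
open MeasureTheory Set Filter

lemma stmt13_split {Ω : Type*} [MeasurableSpace Ω] (P : Measure Ω) [IsFiniteMeasure P]
    {g : Ω → Bool} (hg : Measurable g) {C : Set Ω} (hC : MeasurableSet C) :
    (P C).toReal = (P {ω | g ω = true ∧ ω ∈ C}).toReal + (P {ω | g ω = false ∧ ω ∈ C}).toReal := by
  have h1 : {ω | g ω = true ∧ ω ∈ C} = C ∩ g ⁻¹' {true} := by
    ext ω; simp [and_comm]
  have h2 : {ω | g ω = false ∧ ω ∈ C} = C \ g ⁻¹' {true} := by
    ext ω; cases h : g ω <;> simp [h]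
  rw [h1, h2, ← ENNReal.toReal_add (measure_ne_top _ _) (measure_ne_top _ _),
    measure_inter_add_diff C (hg (measurableSet_singleton true))]

theorem stmt13
    {Ω : Type*} [MeasurableSpace Ω] (P : Measure Ω) [IsProbabilityMeasure P]
    {S : Type*} [MeasurableSpace S] [Countable S] [MeasurableSingletonClass S]
    (Y : Ω → ℝ) (Dstar D : Ω → Bool) (Z : Ω → S)
    (hYm : Measurable Y) (hDstarm : Measurable Dstar) (hDm : Measurable D)
    (hZm : Measurable Z)
    (p₀ p₁ : ℝ) (hp₀ : p₀ ∈ Icc (0:ℝ) 1) (hp₁ : p₁ ∈ Icc (0:ℝ) 1)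
    (hA2 : ∀ (A : Set ℝ), MeasurableSet A → ∀ (z : S) (d : Bool),
      (P {ω | D ω = !d ∧ Dstar ω = d ∧ Y ω ∈ A ∧ Z ω = z}).toReal
        = (bif d then p₁ else p₀) * (P {ω | Dstar ω = d ∧ Y ω ∈ A ∧ Z ω = z}).toReal)
    :
    ∀ (A : Set ℝ), MeasurableSet A → ∀ z : S,
      (1 - p₀ - p₁) * (P {ω | Dstar ω = false ∧ Y ω ∈ A ∧ Z ω = z}).toReal
        = (P {ω | D ω = false ∧ Y ω ∈ A ∧ Z ω = z}).toReal
          - p₁ * (P {ω | Y ω ∈ A ∧ Z ω = z}).toReal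
      ∧ (1 - p₀ - p₁) * (P {ω | Dstar ω = true ∧ Y ω ∈ A ∧ Z ω = z}).toReal
        = (P {ω | D ω = true ∧ Y ω ∈ A ∧ Z ω = z}).toReal
          - p₀ * (P {ω | Y ω ∈ A ∧ Z ω = z}).toReal := by
  intro A hA z
  have hB : MeasurableSet {ω | Y ω ∈ A ∧ Z ω = z} := by
    rw [setOf_and]
    exact (hYm hA).inter (hZm (measurableSet_singleton z))
  have hBd : ∀ d : Bool, MeasurableSet {ω | Dstar ω = d ∧ Y ω ∈ A ∧ Z ω = z} := by
    intro d
    rw [setOf_and]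
    exact (hDstarm (measurableSet_singleton d)).inter hB
  -- split total by Dstar
  have hq := stmt13_split P hDstarm hB
  -- split {Dstar = d ∧ B} by D
  have hq0 := stmt13_split P hDm (hBd false)
  have hq1 := stmt13_split P hDm (hBd true)
  -- split {D = t ∧ B} by Dstar
  have hDt : ∀ t : Bool, MeasurableSet {ω | D ω = t ∧ Y ω ∈ A ∧ Z ω = z} := by
    intro t
    rw [setOf_and]
    exact (hDm (measurableSet_singleton t)).inter hB
  have hr0 := stmt13_split P hDstarm (hDt false)
  have hr1 := stmt13_split P hDstarm (hDt true)
  have h0 := hA2 A hA z false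
  have h1 := hA2 A hA z true
  simp only [Bool.not_false, Bool.not_true, cond_false, cond_true, mem_setOf_eq] at *
  -- rewrite mixed sets into canonical order
  have e1 : {ω | Dstar ω = true ∧ D ω = false ∧ Y ω ∈ A ∧ Z ω = z}
      = {ω | D ω = false ∧ Dstar ω = true ∧ Y ω ∈ A ∧ Z ω = z} := by ext ω; simp only [Set.mem_setOf_eq]; tauto
  have e2 : {ω | Dstar ω = false ∧ D ω = false ∧ Y ω ∈ A ∧ Z ω = z}
      = {ω | D ω = false ∧ Dstar ω = false ∧ Y ω ∈ A ∧ Z ω = z} := by ext ω; simp only [Set.mem_setOf_eq]; tauto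
  have e3 : {ω | Dstar ω = true ∧ D ω = true ∧ Y ω ∈ A ∧ Z ω = z}
      = {ω | D ω = true ∧ Dstar ω = true ∧ Y ω ∈ A ∧ Z ω = z} := by ext ω; simp only [Set.mem_setOf_eq]; tauto
  have e4 : {ω | Dstar ω = false ∧ D ω = true ∧ Y ω ∈ A ∧ Z ω = z}
      = {ω | D ω = true ∧ Dstar ω = false ∧ Y ω ∈ A ∧ Z ω = z} := by ext ω; simp only [Set.mem_setOf_eq]; tauto
  rw [e1, e2] at hr0
  rw [e3, e4] at hr1
  exact ⟨by linear_combination p₁*hq + hq0 - hr0 + h0 - h1,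
    by linear_combination p₀*hq + hq1 - hr1 + h1 - h0⟩
end
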